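/- arXiv:2001.03881 — 11 statements merged into one kernel-verified Lean document; each statement's English description precedes it below -/
import Mathlib

section
/- Every subspace of an algebra R over a field of characteristic zero that is invariant under all algebra automorphisms of R is stable under every locally nilpotent derivation of R. -/
/-!
For a locally nilpotent derivation `D`, the Leibniz rule makes `x ↦ ∑ₖ tᵏ Dᵏx / k!` a ring
homomorphism `R → R[t]`, so its value at `t = 1`, `exp D`, is an algebra endomorphism; it is
bijective because `exp D - 1` strictly lowers the nilpotency index `min {n | Dⁿx = 0}`.
Applying the automorphisms `exp (c • D)`, `c ∈ K`, to `v ∈ V` shows that the polynomial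
`∑ₖ cᵏ Dᵏv / k!` takes all its values in `V`; as `K` is infinite, each of its coefficients, in
particular `D v`, lies in `V`.
-/

open Finset Polynomial
open scoped Nat

namespace Submodule

variable {K M : Type*} [Field K] [Infinite K] [AddCommGroup M] [Module K M]

theorem mem_of_forall_sum_pow_smul_mem (V : Submodule K M) {u : ℕ → M} {n : ℕ}
    (h : ∀ c : K, ∑ k ∈ range n, c ^ k • u k ∈ V) {k : ℕ} (hk : k < n) : u k ∈ V := by
  by_contra huk
  obtain ⟨f, hfk, hVf⟩ := V.exists_le_ker_of_notMem huk
  set P : K[X] := ∑ j ∈ range n, monomial j (f (u j))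
  have hP : P = 0 := Polynomial.funext fun c => by
    have := hVf (h c)
    simp only [LinearMap.mem_ker, map_sum, map_smul, smul_eq_mul] at this
    simp [P, eval_finsetSum, mul_comm, this]
  apply hfk
  simpa [P, finsetSum_coeff, coeff_monomial, hk] using congr_arg (coeff · k) hP

end Submodule

namespace Module.End

def IsLocallyNilpotent {K M : Type*} [Semiring K] [AddCommMonoid M] [Module K M]
    (D : Module.End K M) : Prop :=
  ∀ x, ∃ n, (D ^ n) x = 0

section Semiring

variable {K R : Type*} [CommSemiring K] [Semiring R] [Algebra K R] {D : Module.End K R}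

theorem IsLocallyNilpotent.smul (hnil : D.IsLocallyNilpotent) (c : K) :
    (c • D).IsLocallyNilpotent := fun x =>
  (hnil x).imp fun n hn => by rw [_root_.smul_pow, LinearMap.smul_apply, hn, smul_zero]

theorem smul_apply_mul_of_leibniz (hder : ∀ x y, D (x * y) = D x * y + x * D y) (c : K) (x y : R) :
    (c • D) (x * y) = (c • D) x * y + x * (c • D) y := by
  simp only [LinearMap.smul_apply, hder, smul_add, smul_mul_assoc, mul_smul_comm]

theorem pow_apply_mul_of_leibniz (hder : ∀ x y, D (x * y) = D x * y + x * D y) (n : ℕ) (x y : R) :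
    (D ^ n) (x * y) = ∑ ij ∈ antidiagonal n, n.choose ij.1 • ((D ^ ij.1) x * (D ^ ij.2) y) := by
  induction n with
  | zero => simp
  | succ n ih =>
    rw [sum_antidiagonal_choose_succ_nsmul (fun i j => (D ^ i) x * (D ^ j) y) n]
    simp only [pow_succ', mul_apply, ih, map_sum, map_nsmul, hder, smul_add, sum_add_distrib]
    rw [add_comm]
    congr 1
    refine sum_congr rfl fun ij hij => ?_
    rw [n.choose_symm_of_eq_add (mem_antidiagonal.1 hij).symm]

end Semiring

theorem inv_factorial_mul_choose {K : Type*} [Field K] [CharZero K] (i j : ℕ) :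
    ((i + j)! : K)⁻¹ * (i + j).choose i = (i ! : K)⁻¹ * (j ! : K)⁻¹ := by
  rw [Nat.cast_add_choose, div_eq_mul_inv,
    inv_mul_cancel_left₀ (Nat.cast_ne_zero.2 (i + j).factorial_ne_zero), mul_inv]

theorem apply_one_eq_zero_of_leibniz {K R : Type*} [CommSemiring K] [Ring R] [Algebra K R]
    {D : Module.End K R} (hder : ∀ x y, D (x * y) = D x * y + x * D y) : D 1 = 0 := by
  simpa using hder 1 1

namespace IsLocallyNilpotent

variable {K R : Type*} [Field K] [Ring R] [Algebra K R] {D : Module.End K R}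
  (hnil : D.IsLocallyNilpotent)

noncomputable def expPoly (x : R) : R[X] :=
  ∑ k ∈ range (hnil x).choose, monomial k ((k ! : K)⁻¹ • (D ^ k) x)

@[simp]
theorem coeff_expPoly (x : R) (k : ℕ) : (hnil.expPoly x).coeff k = (k ! : K)⁻¹ • (D ^ k) x := by
  simp only [expPoly, finsetSum_coeff, coeff_monomial, sum_ite_eq', mem_range]
  split_ifs with hk
  · rfl
  · rw [pow_map_zero_of_le (not_lt.1 hk) (hnil x).choose_spec, smul_zero]

theorem eval_one_expPoly {x : R} {n : ℕ} (hn : (D ^ n) x = 0) :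
    (hnil.expPoly x).eval 1 = ∑ k ∈ range n, (k ! : K)⁻¹ • (D ^ k) x := by
  have hsupp : (hnil.expPoly x).support ⊆ range n := fun k hk => by
    by_contra hkn
    refine Polynomial.mem_support_iff.1 hk ?_
    rw [coeff_expPoly, pow_map_zero_of_le (not_lt.1 (mem_range.not.1 hkn)) hn, smul_zero]
  rw [eval_eq_sum, Polynomial.sum_def, sum_subset hsupp fun k _ hk => by
    rw [Polynomial.notMem_support_iff.1 hk, zero_mul]]
  simp

variable [CharZero K] (hder : ∀ x y, D (x * y) = D x * y + x * D y)

noncomputable def expPolyRingHom : R →+* R[X] where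
  toFun := hnil.expPoly
  map_one' := by
    ext k
    rcases k with _ | k
    · simp
    · simp [coeff_one, pow_succ, apply_one_eq_zero_of_leibniz hder]
  map_mul' x y := by
    ext k
    simp only [coeff_expPoly, coeff_mul, pow_apply_mul_of_leibniz hder, smul_sum]
    refine sum_congr rfl fun ij hij => ?_
    obtain rfl := mem_antidiagonal.1 hij
    rw [smul_mul_smul_comm, ← Nat.cast_smul_eq_nsmul K, smul_smul, inv_factorial_mul_choose]
  map_zero' := by ext; simp
  map_add' x y := by ext; simp

noncomputable def exp : R →ₐ[K] R where
  toRingHom := (eval₂RingHom' (RingHom.id R) 1 Commute.one_right).comp (hnil.expPolyRingHom hder)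
  commutes' c := by
    have h : (D ^ 1) (algebraMap K R c) = 0 := by
      rw [pow_one, Algebra.algebraMap_eq_smul_one, map_smul, apply_one_eq_zero_of_leibniz hder,
        smul_zero]
    exact (hnil.eval_one_expPoly h).trans (by simp)

theorem exp_apply_eq_sum {x : R} {n : ℕ} (hn : (D ^ n) x = 0) :
    hnil.exp hder x = ∑ k ∈ range n, (k ! : K)⁻¹ • (D ^ k) x :=
  hnil.eval_one_expPoly hn

theorem pow_apply_exp_of_pow_succ_apply_eq_zero {x : R} {n : ℕ} (hn : (D ^ (n + 1)) x = 0) :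
    (D ^ n) (hnil.exp hder x) = (D ^ n) x := by
  rw [hnil.exp_apply_eq_sum hder hn, map_sum, sum_range_succ', sum_eq_zero fun k _ => ?_, zero_add]
  · simp
  · rw [map_smul, ← mul_apply, ← pow_add, pow_map_zero_of_le (by omega) hn, smul_zero]

theorem exp_injective : Function.Injective (hnil.exp hder) := by
  refine (injective_iff_map_eq_zero (hnil.exp hder)).2 fun x hx => ?_
  obtain ⟨n, hn⟩ := hnil x
  induction n generalizing x with
  | zero => simpa using hn
  | succ n ih =>
    refine ih x hx ?_
    rw [← hnil.pow_apply_exp_of_pow_succ_apply_eq_zero hder hn, hx, map_zero]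

theorem exp_surjective : Function.Surjective (hnil.exp hder) := by
  intro x
  obtain ⟨n, hn⟩ := hnil x
  induction n generalizing x with
  | zero => exact ⟨0, by simpa using hn.symm⟩
  | succ n ih =>
    obtain ⟨z, hz⟩ := ih (hnil.exp hder x - x) <| by
      rw [map_sub, hnil.pow_apply_exp_of_pow_succ_apply_eq_zero hder hn, sub_self]
    exact ⟨x - z, by rw [map_sub, hz, sub_sub_cancel]⟩

noncomputable def expEquiv : R ≃ₐ[K] R :=
  AlgEquiv.ofBijective (hnil.exp hder) ⟨hnil.exp_injective hder, hnil.exp_surjective hder⟩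

theorem exp_smul_apply_eq_sum (c : K) {x : R} {n : ℕ} (hn : (D ^ n) x = 0) :
    (hnil.smul c).exp (smul_apply_mul_of_leibniz hder c) x =
      ∑ k ∈ range n, c ^ k • ((k ! : K)⁻¹ • (D ^ k) x) := by
  have hcn : ((c • D) ^ n) x = 0 := by rw [_root_.smul_pow, LinearMap.smul_apply, hn, smul_zero]
  rw [exp_apply_eq_sum _ _ hcn]
  refine sum_congr rfl fun k _ => ?_
  rw [_root_.smul_pow, LinearMap.smul_apply, smul_comm]

end IsLocallyNilpotent

end Module.End

/-- Every subspace of an algebra `R` over a field of characteristic zero that is invariant under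
all algebra automorphisms of `R` is stable under every locally nilpotent derivation of `R`. -/
theorem stmt1 {K R : Type*} [Field K] [CharZero K] [Ring R] [Algebra K R]
    (V : Submodule K R)
    (hinv : ∀ σ : R ≃ₐ[K] R, ∀ v ∈ V, σ v ∈ V)
    (d : R → R)
    (hadd : ∀ x y, d (x + y) = d x + d y)
    (hsmul : ∀ (c : K) (x : R), d (c • x) = c • d x)
    (hleib : ∀ x y, d (x * y) = d x * y + x * d y)
    (hln : ∀ r : R, ∃ n, d^[n] r = 0) :
    ∀ v ∈ V, d v ∈ V := by
  intro v hv
  let D : Module.End K R := ⟨⟨d, hadd⟩, hsmul⟩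
  have hnil : D.IsLocallyNilpotent := fun x => (hln x).imp fun n hn => by rwa [Module.End.pow_apply]
  obtain ⟨n, hn⟩ := hnil v
  have horbit (c : K) : ∑ k ∈ range (n + 2), c ^ k • ((k ! : K)⁻¹ • (D ^ k) v) ∈ V := by
    rw [← hnil.exp_smul_apply_eq_sum hleib c (Module.End.pow_map_zero_of_le (by omega) hn)]
    exact hinv ((hnil.smul c).expEquiv (Module.End.smul_apply_mul_of_leibniz hleib c)) v hv
  simpa [D] using V.mem_of_forall_sum_pow_smul_mem horbit (k := 1) (by omega)
end

section
/- The Jacobson radical J(R) of an algebra R over a field of characteristic zero is stable under every locally nilpotent derivation of R. -/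
/-!
For `c ∈ K`, `exp (c D) = ∑ cⁿ Dⁿ / n!` is a well-defined ring endomorphism of `R`: it is
`v ↦ exp (X D) v ∈ R[X]`, which is multiplicative by the Leibniz rule, followed by evaluation at
the central element `c`. It is surjective because `exp (c D) - 1` strictly lowers the order of
nilpotency of `D`, so it preserves the Jacobson radical `J`. Thus `∑ cⁿ Dⁿ v / n! ∈ J` for every
`c ∈ K`; as `K` is infinite, every coefficient of this polynomial in `c`, in particular `D v`,
lies in `J`.
-/

open Finset Polynomial
open scoped Nat

section Interpolation

variable {K V : Type*} [Field K] [Infinite K] [AddCommGroup V] [Module K V]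

theorem eq_zero_of_forall_sum_pow_smul_eq_zero {w : ℕ → V} {N : ℕ}
    (h : ∀ c : K, ∑ i ∈ range N, c ^ i • w i = 0) {n : ℕ} (hn : n < N) : w n = 0 := by
  refine (Module.forall_dual_apply_eq_zero_iff K (w n)).1 fun l => ?_
  have hp : ∑ i ∈ range N, monomial i (l (w i)) = 0 := Polynomial.funext fun c => by
    simpa [eval_finsetSum, mul_comm] using congrArg l (h c)
  simpa [finsetSum_coeff, coeff_monomial, hn] using congrArg (coeff · n) hp

theorem Submodule.mem_of_forall_sum_pow_smul_mem_s2 (M : Submodule K V) {w : ℕ → V} {N : ℕ}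
    (h : ∀ c : K, ∑ i ∈ range N, c ^ i • w i ∈ M) {n : ℕ} (hn : n < N) : w n ∈ M := by
  rw [← Submodule.Quotient.mk_eq_zero M]
  refine eq_zero_of_forall_sum_pow_smul_eq_zero (K := K) (w := fun i => M.mkQ (w i))
    (fun c => ?_) hn
  have hc := (Submodule.Quotient.mk_eq_zero M).2 (h c)
  rwa [← M.mkQ_apply, map_sum] at hc

end Interpolation

theorem Ideal.jacobson_bot_le_comap_of_surjective {R S : Type*} [Ring R] [Ring S] {f : R →+* S}
    (hf : Function.Surjective f) : (⊥ : Ideal R).jacobson ≤ (⊥ : Ideal S).jacobson.comap f := by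
  rw [Ideal.comap_jacobson_of_surjective hf]
  exact Ideal.jacobson_mono bot_le

theorem AddMonoidHom.surjective_of_sub_self_mem {V : Type*} [AddCommGroup V] (f : V →+ V)
    (F : ℕ → AddSubgroup V) (hF₀ : F 0 = ⊥) (hF : ∀ v, ∃ n, v ∈ F n)
    (hf : ∀ n, ∀ v ∈ F (n + 1), f v - v ∈ F n) : Function.Surjective f := by
  suffices ∀ n, F n ≤ f.range from fun v => (hF v).elim fun n hv => this n hv
  intro n
  induction n with
  | zero => simp [hF₀]
  | succ n ih =>
    intro v hv
    simpa using sub_mem (AddMonoidHom.mem_range.2 ⟨v, rfl⟩) (ih (hf n v hv))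

namespace LinearMap

variable {K R : Type*} [Field K] [Ring R] [Algebra K R] (D : R →ₗ[K] R)

theorem pow_apply_mul_eq_sum_choose (hleib : ∀ x y, D (x * y) = D x * y + x * D y) (n : ℕ)
    (x y : R) :
    (D ^ n) (x * y) = ∑ ij ∈ antidiagonal n, n.choose ij.1 • ((D ^ ij.1) x * (D ^ ij.2) y) := by
  induction n with
  | zero => simp
  | succ n ih =>
    rw [sum_antidiagonal_choose_succ_nsmul (fun i j => (D ^ i) x * (D ^ j) y) n]
    simp only [pow_succ', Module.End.mul_apply, ih, map_sum, map_nsmul, hleib, smul_add,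
      sum_add_distrib]
    rw [add_comm, add_right_inj]
    refine sum_congr rfl fun ⟨i, j⟩ hij => ?_
    rw [Nat.choose_symm_of_eq_add (HasAntidiagonal.mem_antidiagonal.1 hij).symm]

theorem map_one_eq_zero_of_leibniz (hleib : ∀ x y, D (x * y) = D x * y + x * D y) : D 1 = 0 := by
  simpa using hleib 1 1

theorem coeff_sum_range_monomial_factorial_inv_smul {N : ℕ} {v : R} (hN : (D ^ N) v = 0)
    (n : ℕ) :
    (∑ i ∈ Finset.range N, monomial i ((i ! : K)⁻¹ • (D ^ i) v)).coeff n = (n ! : K)⁻¹ • (D ^ n) v := by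
  simp only [finsetSum_coeff, coeff_monomial, sum_ite_eq', Finset.mem_range]
  split_ifs with hn
  · rfl
  · rw [Module.End.pow_map_zero_of_le (not_lt.1 hn) hN, smul_zero]

variable (hnil : ∀ v : R, ∃ n, (D ^ n) v = 0)

/-- The polynomial `exp (X • D) v`. -/
noncomputable def expPoly (v : R) : R[X] :=
  ∑ n ∈ Finset.range (hnil v).choose, monomial n ((n ! : K)⁻¹ • (D ^ n) v)

theorem coeff_expPoly (v : R) (n : ℕ) : (D.expPoly hnil v).coeff n = (n ! : K)⁻¹ • (D ^ n) v :=
  D.coeff_sum_range_monomial_factorial_inv_smul (hnil v).choose_spec n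

theorem expPoly_eq_sum {N : ℕ} {v : R} (hN : (D ^ N) v = 0) :
    D.expPoly hnil v = ∑ n ∈ Finset.range N, monomial n ((n ! : K)⁻¹ • (D ^ n) v) := by
  ext n
  rw [coeff_expPoly, coeff_sum_range_monomial_factorial_inv_smul D hN]

variable [CharZero K]

theorem factorial_inv_smul_pow_apply_mul (hleib : ∀ x y, D (x * y) = D x * y + x * D y) (n : ℕ)
    (x y : R) :
    (n ! : K)⁻¹ • (D ^ n) (x * y) = ∑ ij ∈ antidiagonal n,
      ((ij.1 ! : K)⁻¹ • (D ^ ij.1) x) * ((ij.2 ! : K)⁻¹ • (D ^ ij.2) y) := by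
  rw [D.pow_apply_mul_eq_sum_choose hleib, smul_sum]
  refine sum_congr rfl fun ⟨i, j⟩ hij => ?_
  obtain rfl := HasAntidiagonal.mem_antidiagonal.1 hij
  rw [smul_mul_smul, ← Nat.cast_smul_eq_nsmul K, smul_smul, Nat.cast_add_choose]
  congr 1
  have : ((i + j)! : K) ≠ 0 := Nat.cast_ne_zero.2 (Nat.factorial_ne_zero _)
  field_simp

variable (hleib : ∀ x y, D (x * y) = D x * y + x * D y)

noncomputable def expPolyHom : R →+* R[X] where
  toFun := D.expPoly hnil
  map_one' := by
    ext (_ | n)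
    · simp [coeff_expPoly]
    · simp [coeff_expPoly, coeff_one, pow_succ, D.map_one_eq_zero_of_leibniz hleib]
  map_mul' x y := by
    ext n
    simp only [coeff_expPoly, coeff_mul, D.factorial_inv_smul_pow_apply_mul hleib]
  map_zero' := by
    ext n
    simp [coeff_expPoly]
  map_add' x y := by
    ext n
    simp [coeff_expPoly]

noncomputable def exp (c : K) : R →+* R :=
  (eval₂RingHom' (RingHom.id R) (algebraMap K R c) fun a => (Algebra.commutes c a).symm).comp
    (D.expPolyHom hnil hleib)

theorem exp_apply_eq_sum (c : K) {N : ℕ} {v : R} (hN : (D ^ N) v = 0) :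
    D.exp hnil hleib c v = ∑ n ∈ Finset.range N, c ^ n • (n ! : K)⁻¹ • (D ^ n) v := by
  simp only [exp, expPolyHom, RingHom.comp_apply, RingHom.coe_mk, MonoidHom.coe_mk,
    OneHom.coe_mk, D.expPoly_eq_sum hnil hN, eval₂RingHom', eval₂_finsetSum, eval₂_monomial]
  refine sum_congr rfl fun n _ => ?_
  rw [RingHom.id_apply, ← map_pow, ← Algebra.commutes, ← Algebra.smul_def]

theorem pow_apply_exp_sub_self (c : K) {n : ℕ} {v : R} (hv : (D ^ (n + 1)) v = 0) :
    (D ^ n) (D.exp hnil hleib c v - v) = 0 := by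
  rw [D.exp_apply_eq_sum hnil hleib c hv, sum_range_succ']
  simp only [pow_zero, Nat.factorial_zero, Nat.cast_one, inv_one, one_smul, Module.End.one_apply,
    add_sub_cancel_right, map_sum, map_smul]
  refine sum_eq_zero fun i _ => ?_
  rw [← Module.End.mul_apply, ← pow_add, Module.End.pow_map_zero_of_le (by omega) hv, smul_zero,
    smul_zero]

theorem exp_surjective (c : K) : Function.Surjective (D.exp hnil hleib c) :=
  (D.exp hnil hleib c).toAddMonoidHom.surjective_of_sub_self_mem
    (fun n => (LinearMap.ker (D ^ n)).toAddSubgroup) (by simp [Module.End.one_eq_id]) hnil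
    fun _ _ hv => D.pow_apply_exp_sub_self hnil hleib c hv

end LinearMap

/-- The Jacobson radical of an algebra `R` over a field of characteristic zero is stable
under every locally nilpotent derivation of `R`. -/
theorem stmt2 {K R : Type*} [Field K] [CharZero K] [Ring R] [Algebra K R]
    (d : R → R)
    (hadd : ∀ x y, d (x + y) = d x + d y)
    (hsmul : ∀ (c : K) (x : R), d (c • x) = c • d x)
    (hleib : ∀ x y, d (x * y) = d x * y + x * d y)
    (hln : ∀ r : R, ∃ n, d^[n] r = 0) :
    ∀ v ∈ (⊥ : Ideal R).jacobson, d v ∈ (⊥ : Ideal R).jacobson := by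
  intro v hv
  let D : R →ₗ[K] R := { toFun := d, map_add' := hadd, map_smul' := hsmul }
  have hnil (r : R) : ∃ n, (D ^ n) r = 0 := by
    simp only [Module.End.pow_apply]
    exact hln r
  obtain ⟨N, hN⟩ := hnil v
  have hexp (c : K) : ∑ n ∈ range (N + 2), c ^ n • (n ! : K)⁻¹ • (D ^ n) v ∈
      (⊥ : Ideal R).jacobson.restrictScalars K := by
    rw [Submodule.restrictScalars_mem,
      ← D.exp_apply_eq_sum hnil hleib c (Module.End.pow_map_zero_of_le (by omega) hN)]
    exact Ideal.jacobson_bot_le_comap_of_surjective (D.exp_surjective hnil hleib c) hv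
  simpa [D] using Submodule.mem_of_forall_sum_pow_smul_mem_s2 _ hexp (n := 1) (by omega)
end

section
/- Let d be a locally nilpotent derivation of an algebra R over a field of characteristic zero such that the kernel R^d of d is a commutative subring. If a ∈ J(R) ∩ R^d ∩ d(R), then a is nilpotent. -/
/-- In any ring, an element of the Jacobson radical differs from a unit by `1`. -/
lemma isUnit_one_sub_of_mem_jacobson_bot' {R : Type*} [Ring R] {z : R}
    (h : z ∈ (⊥ : Ideal R).jacobson) : IsUnit (1 - z) := by
  have key : ∀ w : R, w ∈ (⊥ : Ideal R).jacobson → ∃ c, c * (1 - w) = 1 := by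
    intro w hw
    obtain ⟨s, hs⟩ := Ideal.exists_mul_sub_mem_of_sub_one_mem_jacobson (1 - w)
      (by simpa using ((⊥ : Ideal R).jacobson.neg_mem hw))
    exact ⟨s, by rwa [Ideal.mem_bot, sub_eq_zero] at hs⟩
  obtain ⟨c, hc⟩ := key z h
  have hcz : -(c * z) ∈ (⊥ : Ideal R).jacobson :=
    (⊥ : Ideal R).jacobson.neg_mem (Ideal.mul_mem_left _ c h)
  obtain ⟨c', hc'⟩ := key _ hcz
  have hceq : 1 - -(c * z) = c := by
    have h1 : c - c * z = 1 := by rw [← hc]; noncomm_ring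
    rw [sub_neg_eq_add, ← h1]; noncomm_ring
  rw [hceq] at hc'
  have hc'eq : c' = 1 - z := by
    calc c' = c' * (c * (1 - z)) := by rw [hc, mul_one]
    _ = (c' * c) * (1 - z) := by rw [mul_assoc]
    _ = 1 - z := by rw [hc', one_mul]
  exact ⟨⟨1 - z, c, by rw [← hc'eq]; exact hc', hc⟩, rfl⟩

/-- If `d` is a locally nilpotent derivation of an algebra `R` over a field of characteristic
zero whose kernel `R^d` is commutative, then every `a ∈ J(R) ∩ R^d ∩ d(R)` is nilpotent. -/
theorem stmt3 {K R : Type*} [Field K] [CharZero K] [Ring R] [Algebra K R]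
    (d : R → R)
    (hadd : ∀ x y, d (x + y) = d x + d y)
    (hsmul : ∀ (c : K) (x : R), d (c • x) = c • d x)
    (hleib : ∀ x y, d (x * y) = d x * y + x * d y)
    (hln : ∀ r : R, ∃ n, d^[n] r = 0)
    (hcomm : ∀ x y : R, d x = 0 → d y = 0 → x * y = y * x)
    (a : R) (haJ : a ∈ (⊥ : Ideal R).jacobson) (haK : d a = 0) (haI : ∃ x, d x = a) :
    ∃ n : ℕ, 0 < n ∧ a ^ n = 0 := by
  obtain ⟨x, hx⟩ := haI
  -- basic facts about d
  have hd0 : d 0 = 0 := by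
    have h := hadd 0 0
    rw [add_zero] at h
    exact (left_eq_add.mp h)
  have hd1 : d 1 = 0 := by
    have h := hleib 1 1
    simp only [mul_one, one_mul] at h
    exact (left_eq_add.mp h)
  have hdneg : ∀ y : R, d (-y) = - d y := by
    intro y
    have h := hadd y (-y)
    rw [add_neg_cancel, hd0] at h
    exact (neg_eq_of_add_eq_zero_right h.symm).symm
  have hdsub : ∀ y z : R, d (y - z) = d y - d z := by
    intro y z
    rw [sub_eq_add_neg, hadd, hdneg, ← sub_eq_add_neg]
  -- commutation rule: a^(m+1) * x = x * a^(m+1) + c * a^m with c a constant of d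
  have hpow : ∀ m : ℕ, ∃ c : R, d c = 0 ∧ a ^ (m + 1) * x = x * a ^ (m + 1) + c * a ^ m := by
    intro m
    induction m with
    | zero =>
      refine ⟨a * x - x * a, ?_, by noncomm_ring⟩
      rw [hdsub, hleib, hleib, hx, haK]
      noncomm_ring
    | succ n ih =>
      obtain ⟨c, hdc, hc⟩ := ih
      refine ⟨c + (a * x - x * a), ?_, ?_⟩
      · rw [hadd, hdsub, hleib, hleib, hx, haK, hdc]
        noncomm_ring
      · have hca : a * c = c * a := hcomm a c haK hdc
        have hc2 : a * (c * a ^ n) = c * a ^ (n + 1) := by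
          rw [← mul_assoc, hca, mul_assoc, ← pow_succ']
        calc a ^ (n + 1 + 1) * x
            = a * (a ^ (n + 1) * x) := by rw [← mul_assoc, ← pow_succ']
          _ = a * (x * a ^ (n + 1)) + a * (c * a ^ n) := by rw [hc, mul_add]
          _ = a * (x * a ^ (n + 1)) + c * a ^ (n + 1) := by rw [hc2]
          _ = x * (a * a ^ (n + 1)) + (c + (a * x - x * a)) * a ^ (n + 1) := by
              generalize a ^ (n + 1) = P
              noncomm_ring
          _ = x * a ^ (n + 1 + 1) + (c + (a * x - x * a)) * a ^ (n + 1) := by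
              rw [← pow_succ']
  -- 1 - x * a is a unit
  have hu : IsUnit (1 - x * a) :=
    isUnit_one_sub_of_mem_jacobson_bot' (Ideal.mul_mem_left _ x haJ)
  obtain ⟨U, hU⟩ := hu
  set u : R := ((U⁻¹ : Rˣ) : R) with hudef
  have hvu : (1 - x * a) * u = 1 := by rw [← hU, hudef]; exact U.mul_inv
  have huv : u * (1 - x * a) = 1 := by rw [← hU, hudef]; exact U.inv_mul
  have hdv : d (1 - x * a) = -(a * a) := by
    rw [hdsub, hd1, hleib, hx, haK]
    noncomm_ring
  have hda2 : d (a * a) = 0 := by rw [hleib, haK]; noncomm_ring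
  -- the key differential recursion
  have hrel : ∀ n : ℕ, (1 - x * a) * d^[n + 1] u
      = ((n : K) + 1) • (a * a * d^[n] u) := by
    intro n
    induction n with
    | zero =>
      have h0 : d ((1 - x * a) * u) = 0 := by rw [hvu, hd1]
      have h1 := hleib (1 - x * a) u
      rw [h0, hdv, neg_mul] at h1
      have h2 : (1 - x * a) * d u = a * a * u := (neg_add_eq_zero.mp h1.symm).symm
      simpa using h2
    | succ n ih =>
      have h := congrArg d ih
      rw [hleib (1 - x * a), hdv, hsmul, hleib (a * a), hda2, zero_mul, zero_add] at h
      rw [← Function.iterate_succ_apply' d (n + 1) u,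
        ← Function.iterate_succ_apply' d n u] at h
      -- h : -(a*a) * d^[n+1] u + (1 - x*a) * d^[n+2] u = ((n:K)+1) • (a*a* d^[n+1] u)
      have hc : (((n + 1 : ℕ) : K) + 1) = ((n : K) + 1) + 1 := by push_cast; ring
      rw [hc, add_smul, one_smul, ← h]
      noncomm_ring
  -- pick N ≥ 1 with d^[N] u = 0
  obtain ⟨n₀, hn₀⟩ := hln u
  set N : ℕ := n₀ + 1 with hNdef
  have hN : d^[N] u = 0 := by
    rw [hNdef, Function.iterate_succ_apply', hn₀, hd0]
  -- descending induction
  have key : ∀ k : ℕ, k ≤ N → a ^ (2 * k) * d^[N - k] u = 0 := by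
    intro k
    induction k with
    | zero => intro _; simpa using hN
    | succ k ih =>
      intro hk1
      have hkN : k ≤ N := Nat.le_of_succ_le hk1
      have ihk := ih hkN
      have hidx : N - k = (N - (k + 1)) + 1 := by omega
      have hrel' := hrel (N - (k + 1))
      rw [← hidx] at hrel'
      -- multiply hrel' on the left by a^(2k); the left side dies
      have hz : a ^ (2 * k) * ((1 - x * a) * d^[N - k] u) = 0 := by
        rcases Nat.eq_zero_or_pos k with hk0 | hkpos
        · subst hk0
          have h0 : d^[N - 0] u = 0 := by simpa using hN
          rw [h0]
          simp
        · obtain ⟨j, rfl⟩ := Nat.exists_eq_add_of_le hkpos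
          -- k = 1 + j, 2k = (2j+1)+1
          obtain ⟨c, hdc, hcx⟩ := hpow (2 * j + 1)
          have hexp : 2 * (1 + j) = 2 * j + 1 + 1 := by ring
          rw [hexp] at ihk ⊢
          set w : R := d^[N - (1 + j)] u with hwdef
          have hcomm1 : a ^ (2 * j + 1 + 1) * a = a * a ^ (2 * j + 1 + 1) :=
            ((Commute.refl a).pow_left _).eq
          calc a ^ (2 * j + 1 + 1) * ((1 - x * a) * w)
              = a ^ (2 * j + 1 + 1) * w
                - (a ^ (2 * j + 1 + 1) * x) * (a * w) := by noncomm_ring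
            _ = a ^ (2 * j + 1 + 1) * w
                - (x * a ^ (2 * j + 1 + 1) + c * a ^ (2 * j + 1)) * (a * w) := by rw [hcx]
            _ = a ^ (2 * j + 1 + 1) * w - x * ((a ^ (2 * j + 1 + 1) * a) * w)
                - c * ((a ^ (2 * j + 1) * a) * w) := by noncomm_ring
            _ = a ^ (2 * j + 1 + 1) * w - x * (a * (a ^ (2 * j + 1 + 1) * w))
                - c * (a ^ (2 * j + 1 + 1) * w) := by
                  rw [hcomm1, ← pow_succ, mul_assoc a (a ^ (2 * j + 1 + 1)) w]
            _ = 0 := by rw [ihk]; noncomm_ring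
      have hz2 : ((((N - (k + 1) : ℕ) : K) + 1)) •
          (a ^ (2 * k) * (a * a * d^[N - (k + 1)] u)) = 0 := by
        rw [← mul_smul_comm, ← hrel', hz]
      have hne : (((N - (k + 1) : ℕ) : K) + 1) ≠ 0 := Nat.cast_add_one_ne_zero _
      have hz3 : a ^ (2 * k) * (a * a * d^[N - (k + 1)] u) = 0 := by
        have := congrArg (fun r => (((N - (k + 1) : ℕ) : K) + 1)⁻¹ • r) hz2
        simpa [inv_smul_smul₀ hne] using this
      have hexp2 : a ^ (2 * (k + 1)) = a ^ (2 * k) * a * a := by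
        have h2e : 2 * (k + 1) = 2 * k + 1 + 1 := by omega
        rw [h2e, pow_succ, pow_succ]
      have hfinal : a ^ (2 * (k + 1)) * d^[N - (k + 1)] u
          = a ^ (2 * k) * (a * a * d^[N - (k + 1)] u) := by
        rw [hexp2, mul_assoc, mul_assoc, mul_assoc a a]
      rw [hfinal]
      exact hz3
  -- conclude
  have hfin : a ^ (2 * N) * u = 0 := by
    have h := key N le_rfl
    simpa using h
  refine ⟨2 * N, by omega, ?_⟩
  calc a ^ (2 * N) = a ^ (2 * N) * (u * (1 - x * a)) := by rw [huv, mul_one]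
    _ = (a ^ (2 * N) * u) * (1 - x * a) := by rw [mul_assoc]
    _ = 0 := by rw [hfin, zero_mul]
end

section
/- Let d be a surjective locally nilpotent derivation of an algebra R over a field of characteristic zero with R^d commutative. Then J(R) ∩ R^d is contained in the prime (Baer lower) radical of R^d. -/
/-- If `d` is a surjective locally nilpotent derivation of an algebra `R` over a field of
characteristic zero with commutative kernel `R^d`, then `J(R) ∩ R^d` is contained in the
prime radical of the commutative ring `R^d` (that is, consists of nilpotent elements). -/
theorem stmt4 {K R : Type*} [Field K] [CharZero K] [Ring R] [Algebra K R]
    (d : R → R)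
    (hadd : ∀ x y, d (x + y) = d x + d y)
    (hsmul : ∀ (c : K) (x : R), d (c • x) = c • d x)
    (hleib : ∀ x y, d (x * y) = d x * y + x * d y)
    (hln : ∀ r : R, ∃ n, d^[n] r = 0)
    (hsurj : Function.Surjective d)
    (hcomm : ∀ x y : R, d x = 0 → d y = 0 → x * y = y * x) :
    ∀ a : R, a ∈ (⊥ : Ideal R).jacobson → d a = 0 → ∃ n : ℕ, 0 < n ∧ a ^ n = 0 := by
  intro a hja hda
  obtain ⟨t, ht⟩ := hsurj 1
  -- basic facts about d
  have h0 : d 0 = 0 := by simpa using hsmul 0 0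
  have hneg : ∀ x, d (-x) = -d x := fun x => by simpa using hsmul (-1) x
  have hsub : ∀ x y, d (x - y) = d x - d y := by
    intro x y; rw [sub_eq_add_neg, hadd, hneg, sub_eq_add_neg]
  have h1 : d 1 = 0 := by
    have h := hleib 1 1
    simp only [mul_one, one_mul] at h
    exact left_eq_add.mp h
  have hnsmul : ∀ (k : ℕ) (x : R), d (k • x) = k • d x := by
    intro k
    induction k with
    | zero => intro x; simpa using h0
    | succ k ih => intro x; rw [succ_nsmul, hadd, ih, succ_nsmul]
  have hconst : ∀ (s x : R), d s = 0 → d (s * x) = s * d x := by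
    intro s x hs; rw [hleib, hs, zero_mul, zero_add]
  have htpow : ∀ k : ℕ, d (t ^ (k + 1)) = (k + 1) • t ^ k := by
    intro k
    induction k with
    | zero => simpa using ht
    | succ k ih =>
      rw [pow_succ, hleib, ih, ht, mul_one, smul_mul_assoc, ← pow_succ]
      exact (succ_nsmul _ _).symm
  have hstpow : ∀ (k : ℕ) (s : R), d s = 0 → d (s * t ^ (k + 1)) = (k + 1) • (s * t ^ k) := by
    intro k s hs; rw [hconst _ _ hs, htpow, mul_smul_comm]
  -- iterate facts
  have hiter0 : ∀ k : ℕ, d^[k] 0 = 0 := fun k => Function.iterate_fixed h0 k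
  have hiter_nsmul : ∀ (k m : ℕ) (x : R), d^[k] (m • x) = m • d^[k] x := by
    intro k
    induction k with
    | zero => intros; rfl
    | succ k ih =>
      intro m x
      simp only [Function.iterate_succ_apply]
      rw [hnsmul, ih]
  have hiter_sub : ∀ (k : ℕ) (x y : R), d^[k] (x - y) = d^[k] x - d^[k] y := by
    intro k
    induction k with
    | zero => intros; rfl
    | succ k ih =>
      intro x y
      simp only [Function.iterate_succ_apply]
      rw [hsub, ih]
  have hdsum : ∀ (F : Finset ℕ) (f : ℕ → R), d (∑ i ∈ F, f i) = ∑ i ∈ F, d (f i) := by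
    intro F f
    exact map_sum (AddMonoidHom.mk' d hadd) f F
  have hitersum : ∀ (k : ℕ) (F : Finset ℕ) (f : ℕ → R),
      d^[k] (∑ i ∈ F, f i) = ∑ i ∈ F, d^[k] (f i) := by
    intro k
    induction k with
    | zero => intros; rfl
    | succ k ih =>
      intro F f
      rw [Function.iterate_succ_apply, hdsum, ih F fun i => d (f i)]
      exact Finset.sum_congr rfl fun i _ => (Function.iterate_succ_apply d k (f i)).symm
  have LA : ∀ (i : ℕ) (s : R), d s = 0 → d^[i + 1] (s * t ^ i) = 0 := by
    intro i
    induction i with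
    | zero => intro s hs; simpa [hs] using rfl
    | succ i ih =>
      intro s hs
      rw [Function.iterate_succ_apply, hstpow i s hs, hiter_nsmul, ih s hs, smul_zero]
  have LB : ∀ (i : ℕ) (s : R), d s = 0 → d^[i] (s * t ^ i) = Nat.factorial i • s := by
    intro i
    induction i with
    | zero => intro s hs; simp
    | succ i ih =>
      intro s hs
      rw [Function.iterate_succ_apply, hstpow i s hs, hiter_nsmul, ih s hs, smul_smul,
        ← Nat.factorial_succ]
  have hcancel : ∀ (m : ℕ) (x : R), m ≠ 0 → m • x = 0 → x = 0 := by
    intro m x hm h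
    have h2 : (m : K) • x = 0 := by rw [Nat.cast_smul_eq_nsmul]; exact h
    have hm' : (m : K) ≠ 0 := Nat.cast_ne_zero.mpr hm
    calc x = (m : K)⁻¹ • ((m : K) • x) := (inv_smul_smul₀ hm' x).symm
      _ = 0 := by rw [h2, smul_zero]
  -- uniqueness of coefficients
  have LC : ∀ (m : ℕ) (s : ℕ → R), (∀ i, d (s i) = 0) →
      (∑ i ∈ Finset.range m, s i * t ^ i) = 0 → ∀ i, i < m → s i = 0 := by
    intro m
    induction m with
    | zero => intro s _ _ i hi; exact absurd hi (Nat.not_lt_zero i)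
    | succ m ih =>
      intro s hs hsum i hi
      have htop : s m = 0 := by
        have h1 : d^[m] (∑ i ∈ Finset.range (m + 1), s i * t ^ i) = 0 := by
          rw [hsum]; exact hiter0 m
        rw [hitersum, Finset.sum_range_succ] at h1
        have h2 : ∀ j ∈ Finset.range m, d^[m] (s j * t ^ j) = 0 := by
          intro j hj
          rw [Finset.mem_range] at hj
          have hm : m = (m - (j + 1)) + (j + 1) := by omega
          rw [hm, Function.iterate_add_apply, LA j (s j) (hs j), hiter0]
        rw [Finset.sum_eq_zero h2, zero_add, LB m (s m) (hs m)] at h1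
        exact hcancel _ _ (Nat.factorial_ne_zero m) h1
      rcases Nat.lt_succ_iff_lt_or_eq.mp hi with h | h
      · apply ih s hs _ i h
        rw [Finset.sum_range_succ, htop, zero_mul, add_zero] at hsum
        exact hsum
      · rw [h]; exact htop
  -- existence of coefficient expansion
  have LD : ∀ (n : ℕ) (u : R), d^[n + 1] u = 0 → ∃ b : ℕ → R,
      (∀ i, d (b i) = 0) ∧ u = ∑ i ∈ Finset.range (n + 1), b i * t ^ i := by
    intro n
    induction n with
    | zero =>
      intro u hu
      exact ⟨fun _ => u, fun i => by simpa using hu, by simp⟩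
    | succ n ih =>
      intro u hu
      set s : R := ((Nat.factorial (n + 1) : ℕ) : K)⁻¹ • d^[n + 1] u with hs_def
      have hds : d s = 0 := by
        rw [hs_def, hsmul]
        have hz : d (d^[n + 1] u) = 0 := by
          have h' := hu
          rw [Function.iterate_succ_apply'] at h'
          exact h'
        rw [hz, smul_zero]
      have hkey : Nat.factorial (n + 1) • s = d^[n + 1] u := by
        rw [hs_def, ← Nat.cast_smul_eq_nsmul K, smul_smul, mul_inv_cancel₀, one_smul]
        exact Nat.cast_ne_zero.mpr (Nat.factorial_ne_zero _)
      have hu' : d^[n + 1] (u - s * t ^ (n + 1)) = 0 := by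
        rw [hiter_sub, LB (n + 1) s hds, hkey, sub_self]
      obtain ⟨b', hb', hrep⟩ := ih (u - s * t ^ (n + 1)) hu'
      refine ⟨fun i => if i = n + 1 then s else b' i, ?_, ?_⟩
      · intro i
        by_cases h : i = n + 1 <;> simp [h, hds, hb' i]
      · rw [Finset.sum_range_succ]
        simp only [if_pos rfl]
        have hcongr : ∑ i ∈ Finset.range (n + 1), (if i = n + 1 then s else b' i) * t ^ i
            = ∑ i ∈ Finset.range (n + 1), b' i * t ^ i := by
          refine Finset.sum_congr rfl fun i hi => ?_
          rw [Finset.mem_range] at hi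
          rw [if_neg (by omega)]
        rw [hcongr, ← hrep]; simp
  -- produce the two-sided inverse of 1 - t*a
  have hmem := Ideal.mem_jacobson_iff.mp hja
  obtain ⟨v, hv⟩ := hmem (-t)
  rw [Ideal.mem_bot] at hv
  have hv1 : v * (1 - t * a) = 1 := by
    have h' : v * -t * a + v = 1 := sub_eq_zero.mp hv
    calc v * (1 - t * a) = v * -t * a + v := by noncomm_ring
      _ = 1 := h'
  obtain ⟨w, hw⟩ := hmem (v * t)
  rw [Ideal.mem_bot] at hw
  have hveq : v = 1 + v * (t * a) := by
    have h2 : v - v * (t * a) = 1 := by rw [← hv1]; noncomm_ring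
    exact eq_add_of_sub_eq h2
  have hwv : w * v = 1 := by
    have h1 : w * (v * t) * a + w = 1 := sub_eq_zero.mp hw
    calc w * v = w * (1 + v * (t * a)) := by rw [← hveq]
      _ = w * (v * t) * a + w := by noncomm_ring
      _ = 1 := h1
  have hu1 : (1 - t * a) * v = 1 := by
    have hw2 : w = 1 - t * a := by
      calc w = w * (v * (1 - t * a)) := by rw [hv1, mul_one]
        _ = w * v * (1 - t * a) := by rw [mul_assoc]
        _ = 1 - t * a := by rw [hwv, one_mul]
    rw [← hw2]; exact hwv
  -- expand v as a polynomial in t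
  obtain ⟨m, hm⟩ := hln v
  have hdeg : d^[m + 1] v = 0 := by rw [Function.iterate_succ_apply', hm, h0]
  obtain ⟨b, hb, hrep⟩ := LD m v hdeg
  set c : ℕ → R := fun i => a * b i with hc
  have hdc : ∀ i, d (c i) = 0 := by
    intro i
    rw [hc]
    show d (a * b i) = 0
    rw [hleib, hda, hb i, zero_mul, mul_zero, add_zero]
  set dl : R → R := fun x => t * x - x * t with hdl
  have hddl : ∀ x, d x = 0 → d (dl x) = 0 := by
    intro x hx
    show d (t * x - x * t) = 0
    rw [hsub, hleib, hleib, ht, hx]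
    simp
  -- the key identity v = 1 + t * (a * v)
  have hid : v = 1 + t * (a * v) := by
    have h2 : v - t * (a * v) = 1 := by rw [← hu1]; noncomm_ring
    exact eq_add_of_sub_eq h2
  have hav : a * v = ∑ i ∈ Finset.range (m + 1), c i * t ^ i := by
    rw [hrep, Finset.mul_sum]
    exact Finset.sum_congr rfl fun i _ => (mul_assoc a (b i) (t ^ i)).symm
  have htav : t * (a * v) = ∑ i ∈ Finset.range (m + 1), (c i * t ^ (i + 1) + dl (c i) * t ^ i) := by
    rw [hav, Finset.mul_sum]
    refine Finset.sum_congr rfl fun i _ => ?_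
    have hco : t * c i = c i * t + dl (c i) := by
      show t * c i = c i * t + (t * c i - c i * t)
      noncomm_ring
    calc t * (c i * t ^ i) = t * c i * t ^ i := (mul_assoc t (c i) (t ^ i)).symm
      _ = (c i * t + dl (c i)) * t ^ i := by rw [hco]
      _ = c i * (t * t ^ i) + dl (c i) * t ^ i := by
          rw [add_mul, mul_assoc (c i) t (t ^ i)]
      _ = c i * t ^ (i + 1) + dl (c i) * t ^ i := by rw [← pow_succ']
  -- coefficient relations
  set E : ℕ → R := fun i => (if i ≤ m then b i else 0) - (if i = 0 then 1 else 0)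
      - (if i = 0 then 0 else c (i - 1)) - (if i ≤ m then dl (c i) else 0) with hE
  have hdE : ∀ i, d (E i) = 0 := by
    intro i
    show d ((if i ≤ m then b i else 0) - (if i = 0 then 1 else 0)
      - (if i = 0 then 0 else c (i - 1)) - (if i ≤ m then dl (c i) else 0)) = 0
    have p1 : d (if i ≤ m then b i else 0) = 0 := by split <;> simp [hb i, h0]
    have p2 : d (if i = 0 then (1 : R) else 0) = 0 := by split <;> simp [h1, h0]
    have p3 : d (if i = 0 then (0 : R) else c (i - 1)) = 0 := by
      split <;> simp [h0, hdc]
    have p4 : d (if i ≤ m then dl (c i) else 0) = 0 := by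
      split <;> simp [h0, hddl _ (hdc i)]
    rw [hsub, hsub, hsub, p1, p2, p3, p4]
    simp
  have hEsum : ∑ i ∈ Finset.range (m + 2), E i * t ^ i = 0 := by
    have expand : ∀ i, E i * t ^ i = (if i ≤ m then b i else 0) * t ^ i
        - (if i = 0 then (1 : R) else 0) * t ^ i
        - (if i = 0 then (0 : R) else c (i - 1)) * t ^ i
        - (if i ≤ m then dl (c i) else 0) * t ^ i := by
      intro i
      show ((if i ≤ m then b i else 0) - (if i = 0 then 1 else 0)
        - (if i = 0 then 0 else c (i - 1)) - (if i ≤ m then dl (c i) else 0)) * t ^ i = _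
      noncomm_ring
    rw [Finset.sum_congr rfl fun i _ => expand i]
    rw [Finset.sum_sub_distrib, Finset.sum_sub_distrib, Finset.sum_sub_distrib]
    have e1 : ∑ i ∈ Finset.range (m + 2), (if i ≤ m then b i else 0) * t ^ i = v := by
      rw [Finset.sum_range_succ, if_neg (by omega : ¬ (m + 1 ≤ m)), zero_mul, add_zero]
      have : ∑ i ∈ Finset.range (m + 1), (if i ≤ m then b i else 0) * t ^ i
          = ∑ i ∈ Finset.range (m + 1), b i * t ^ i :=
        Finset.sum_congr rfl fun i hi => by
          rw [if_pos (Nat.lt_succ_iff.mp (Finset.mem_range.mp hi))]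
      rw [this]
      exact hrep.symm
    have e2 : ∑ i ∈ Finset.range (m + 2), (if i = 0 then (1 : R) else 0) * t ^ i = 1 := by
      rw [Finset.sum_eq_single 0 (fun i _ hi => by rw [if_neg hi, zero_mul])
        (fun h => absurd (Finset.mem_range.mpr (by omega)) h)]
      simp
    have e3 : ∑ i ∈ Finset.range (m + 2), (if i = 0 then (0 : R) else c (i - 1)) * t ^ i
        = ∑ i ∈ Finset.range (m + 1), c i * t ^ (i + 1) := by
      rw [Finset.sum_range_succ']
      simp
    have e4 : ∑ i ∈ Finset.range (m + 2), (if i ≤ m then dl (c i) else 0) * t ^ i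
        = ∑ i ∈ Finset.range (m + 1), dl (c i) * t ^ i := by
      rw [Finset.sum_range_succ, if_neg (by omega : ¬ (m + 1 ≤ m)), zero_mul, add_zero]
      exact Finset.sum_congr rfl fun i hi => by
        rw [if_pos (Nat.lt_succ_iff.mp (Finset.mem_range.mp hi))]
    rw [e1, e2, e3, e4]
    have e5 : ∑ i ∈ Finset.range (m + 1), c i * t ^ (i + 1)
        + ∑ i ∈ Finset.range (m + 1), dl (c i) * t ^ i = t * (a * v) := by
      rw [htav, Finset.sum_add_distrib]
    have e6 : v - 1 - (∑ i ∈ Finset.range (m + 1), c i * t ^ (i + 1)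
        + ∑ i ∈ Finset.range (m + 1), dl (c i) * t ^ i) = 0 := by
      rw [e5]
      nth_rewrite 1 [hid]
      abel
    calc v - 1 - ∑ i ∈ Finset.range (m + 1), c i * t ^ (i + 1)
          - ∑ i ∈ Finset.range (m + 1), dl (c i) * t ^ i
        = v - 1 - (∑ i ∈ Finset.range (m + 1), c i * t ^ (i + 1)
          + ∑ i ∈ Finset.range (m + 1), dl (c i) * t ^ i) := by noncomm_ring
      _ = 0 := e6
  have hE0 : ∀ i, i < m + 2 → E i = 0 := LC (m + 2) E hdE hEsum
  -- the three coefficient relations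
  have rel_top : c m = 0 := by
    have h := hE0 (m + 1) (by omega)
    show c m = 0
    have : E (m + 1) = -c m := by
      show (if m + 1 ≤ m then b (m + 1) else 0) - (if m + 1 = 0 then 1 else 0)
        - (if m + 1 = 0 then 0 else c (m + 1 - 1)) - (if m + 1 ≤ m then dl (c (m + 1)) else 0)
        = -c m
      rw [if_neg (by omega : ¬ (m + 1 ≤ m)), if_neg (Nat.succ_ne_zero m),
        if_neg (Nat.succ_ne_zero m), if_neg (by omega : ¬ (m + 1 ≤ m)), Nat.succ_sub_one]
      abel
    rw [this] at h
    exact neg_eq_zero.mp h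
  have rel_mid : ∀ i, 1 ≤ i → i ≤ m → b i = dl (c i) + c (i - 1) := by
    intro i h1i him
    have h := hE0 i (by omega)
    have hEi : E i = b i - c (i - 1) - dl (c i) := by
      show (if i ≤ m then b i else 0) - (if i = 0 then 1 else 0)
        - (if i = 0 then 0 else c (i - 1)) - (if i ≤ m then dl (c i) else 0) = _
      rw [if_pos him, if_neg (by omega : ¬ i = 0), if_neg (by omega : ¬ i = 0), if_pos him]
      abel
    rw [hEi] at h
    have h2 : b i - c (i - 1) = dl (c i) := sub_eq_zero.mp h
    exact eq_add_of_sub_eq h2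
  have rel_0 : b 0 = dl (c 0) + 1 := by
    have h := hE0 0 (by omega)
    have hE0' : E 0 = b 0 - 1 - dl (c 0) := by
      show (if 0 ≤ m then b 0 else 0) - (if 0 = 0 then 1 else 0)
        - (if 0 = 0 then 0 else c (0 - 1)) - (if 0 ≤ m then dl (c 0) else 0) = _
      rw [if_pos (Nat.zero_le m), if_pos rfl, if_pos rfl, if_pos (Nat.zero_le m)]
      abel
    rw [hE0'] at h
    have h2 : b 0 - 1 = dl (c 0) := sub_eq_zero.mp h
    have h3 := eq_add_of_sub_eq h2
    exact h3
  -- commutativity tools in ker d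
  have hdla : d (dl a) = 0 := hddl a hda
  have hcomm_da : dl a * a = a * dl a := hcomm (dl a) a hdla hda
  have hdlpow : ∀ k : ℕ, dl (a ^ (k + 1)) = (k + 1) • (a ^ k * dl a) := by
    intro k
    induction k with
    | zero => simp
    | succ k ih =>
      have expand : dl (a ^ (k + 2)) = dl (a ^ (k + 1)) * a + a ^ (k + 1) * dl a := by
        show t * a ^ (k + 2) - a ^ (k + 2) * t
          = (t * a ^ (k + 1) - a ^ (k + 1) * t) * a + a ^ (k + 1) * (t * a - a * t)
        rw [pow_succ (a := a) (n := k + 1)]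
        noncomm_ring
      rw [expand, ih, smul_mul_assoc]
      have hstep : a ^ k * dl a * a = a ^ (k + 1) * dl a := by
        rw [mul_assoc, hcomm_da, ← mul_assoc, ← pow_succ]
      rw [hstep]
      exact (succ_nsmul _ _).symm
  -- key lemma: a^k * x = 0 and x in ker d implies a^(k+1) * dl x = 0
  have Ldelta : ∀ (k : ℕ) (x : R), d x = 0 → a ^ k * x = 0 → a ^ (k + 1) * dl x = 0 := by
    intro k x hx h
    cases k with
    | zero =>
      rw [pow_zero, one_mul] at h
      rw [h]
      show a ^ 1 * (t * 0 - 0 * t) = 0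
      simp
    | succ k =>
      have h0' : dl (a ^ (k + 1) * x) = 0 := by
        show t * (a ^ (k + 1) * x) - (a ^ (k + 1) * x) * t = 0
        rw [h, mul_zero, zero_mul, sub_zero]
      have hexp : dl (a ^ (k + 1) * x) = dl (a ^ (k + 1)) * x + a ^ (k + 1) * dl x := by
        show t * (a ^ (k + 1) * x) - (a ^ (k + 1) * x) * t
          = (t * a ^ (k + 1) - a ^ (k + 1) * t) * x + a ^ (k + 1) * (t * x - x * t)
        noncomm_ring
      have heq : dl (a ^ (k + 1)) * x + a ^ (k + 1) * dl x = 0 := by rw [← hexp]; exact h0'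
      have heq2 : a * (dl (a ^ (k + 1)) * x) + a * (a ^ (k + 1) * dl x) = 0 := by
        have := congrArg (fun z => a * z) heq
        simpa [mul_add] using this
      have hz : a * (dl (a ^ (k + 1)) * x) = 0 := by
        rw [hdlpow k, smul_mul_assoc, mul_smul_comm]
        have : a * (a ^ k * dl a * x) = 0 := by
          have hcomm_pow : dl a * a ^ (k + 1) = a ^ (k + 1) * dl a := by
            have : Commute (dl a) a := hcomm_da
            exact (this.pow_right (k + 1)).eq
          calc a * (a ^ k * dl a * x) = a * a ^ k * dl a * x := by
                rw [← mul_assoc, ← mul_assoc]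
            _ = a ^ (k + 1) * dl a * x := by rw [← pow_succ']
            _ = dl a * a ^ (k + 1) * x := by rw [← hcomm_pow]
            _ = dl a * (a ^ (k + 1) * x) := by rw [mul_assoc]
            _ = 0 := by rw [h, mul_zero]
        rw [this, smul_zero]
      have h2 : a * (a ^ (k + 1) * dl x) = a ^ (k + 2) * dl x := by
        rw [← mul_assoc, ← pow_succ']
      rw [hz, zero_add, h2] at heq2
      exact heq2
  -- the downward induction
  have hQ : ∀ j, j ≤ m → a ^ (j + 1) * c (m - j) = 0 := by
    intro j
    induction j with
    | zero =>
      intro _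
      rw [Nat.sub_zero, rel_top, mul_zero]
    | succ j ih =>
      intro hj
      have hij := ih (by omega)
      have hrel := rel_mid (m - j) (by omega) (by omega)
      have h1 : a ^ (j + 2) * b (m - j) = 0 := by
        have hsplit : a ^ (j + 2) * b (m - j) = a ^ (j + 1) * (a * b (m - j)) := by
          rw [← mul_assoc, ← pow_succ]
        rw [hsplit]
        exact hij
      have h2 : a ^ (j + 2) * dl (c (m - j)) = 0 := Ldelta (j + 1) (c (m - j)) (hdc _) hij
      have h3 : a ^ (j + 2) * c (m - j - 1) = 0 := by
        have hmul := congrArg (fun z => a ^ (j + 2) * z) hrel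
        simp only [mul_add] at hmul
        rw [h1, h2, zero_add] at hmul
        exact hmul.symm
      have hidx : m - (j + 1) = m - j - 1 := by omega
      rw [hidx]
      exact h3
  -- conclusion
  have hc0 : a ^ (m + 1) * c 0 = 0 := by
    have := hQ m le_rfl
    rwa [Nat.sub_self] at this
  have hd0 : a ^ (m + 2) * dl (c 0) = 0 := Ldelta (m + 1) (c 0) (hdc 0) hc0
  have hb0 : a ^ (m + 2) * b 0 = 0 := by
    have hsplit : a ^ (m + 2) * b 0 = a ^ (m + 1) * (a * b 0) := by
      rw [← mul_assoc, ← pow_succ]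
    rw [hsplit]
    exact hc0
  have hfin : a ^ (m + 2) = 0 := by
    have hmul := congrArg (fun z => a ^ (m + 2) * z) rel_0
    simp only [mul_add, mul_one] at hmul
    rw [hb0, hd0, zero_add] at hmul
    exact hmul.symm
  exact ⟨m + 2, by omega, hfin⟩
end

section
/- The derivation d of the infinite-dimensional Grassmann (exterior) algebra E over ℚ on generators e_1, e_2, e_3, …, determined by d(e_1) = 0 and d(e_{i+1}) = e_i for all i ≥ 1, is surjective. -/
/-!
A derivation `d` with `d e₀ = 0` and `d eᵢ₊₁ = eᵢ` is locally nilpotent on the algebra `S`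
generated by the `eᵢ`, since `d^(i+1)` kills `eᵢ` and, by the Leibniz rule, `d^(m+n)` kills `x y`
when `d^m` kills `x` and `d^n` kills `y`. Generators are hit by `d`, and so is every product
`eᵢ z` with `z ∈ S`: if `d^n z = 0`, then
`d (eᵢ₊₁ z - eᵢ₊₂ d z + ⋯ ± eᵢ₊ₙ d^(n-1) z) = eᵢ z`, the sum telescoping. Every element of `S` is
a linear combination of such products and generators.
-/

open NonUnitalAlgebra

namespace Module.End

variable {R A : Type*} [CommRing R] [NonUnitalRing A] [Module R A] {d : Module.End R A}
  {e : ℕ → A}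

theorem pow_apply_mul_eq_zero (hd : ∀ x y, d (x * y) = d x * y + x * d y) :
    ∀ {m n : ℕ} {x y : A}, (d ^ m) x = 0 → (d ^ n) y = 0 → (d ^ (m + n)) (x * y) = 0 := by
  intro m
  induction m with
  | zero =>
    intro n x y hx _
    rw [pow_zero, one_apply] at hx
    rw [hx, zero_mul, map_zero]
  | succ m ihm =>
    intro n
    induction n with
    | zero =>
      intro x y _ hy
      rw [pow_zero, one_apply] at hy
      rw [hy, mul_zero, map_zero]
    | succ n ihn =>
      intro x y hx hy
      rw [pow_succ, mul_apply] at hx hy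
      have hdx : (d ^ (m + (n + 1))) (d x * y) = 0 := ihm hx (by rwa [pow_succ, mul_apply])
      have hdy : (d ^ (m + 1 + n)) (x * d y) = 0 := ihn (by rwa [pow_succ, mul_apply]) hy
      rw [show m + 1 + (n + 1) = m + (n + 1) + 1 by omega, pow_succ, mul_apply, hd, map_add,
        hdx, show m + (n + 1) = m + 1 + n by omega, hdy, add_zero]

theorem pow_succ_apply_eq_zero (h0 : d (e 0) = 0) (hsucc : ∀ i, d (e (i + 1)) = e i) (i : ℕ) :
    (d ^ (i + 1)) (e i) = 0 := by
  induction i with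
  | zero => rwa [zero_add, pow_one]
  | succ i ih => rwa [pow_succ, mul_apply, hsucc]

theorem exists_apply_eq_mul_of_pow_apply_eq_zero (hd : ∀ x y, d (x * y) = d x * y + x * d y)
    (hsucc : ∀ i, d (e (i + 1)) = e i) {S : NonUnitalSubalgebra R A} (he : ∀ i, e i ∈ S)
    (hS : Set.MapsTo d S S) (n : ℕ) :
    ∀ (i : ℕ) {z : A}, z ∈ S → (d ^ n) z = 0 → ∃ w ∈ S, d w = e i * z := by
  induction n with
  | zero =>
    intro i z _ hz
    rw [pow_zero, one_apply] at hz
    exact ⟨0, zero_mem S, by rw [map_zero, hz, mul_zero]⟩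
  | succ n ih =>
    intro i z hzS hz
    rw [pow_succ, mul_apply] at hz
    obtain ⟨w, hwS, hw⟩ := ih (i + 1) (hS hzS) hz
    refine ⟨e (i + 1) * z - w, sub_mem (mul_mem (he _) hzS) hwS, ?_⟩
    rw [map_sub, hd, hsucc, hw, add_sub_cancel_right]

variable [IsScalarTower R A A] [SMulCommClass R A A]

theorem exists_pow_apply_eq_zero_of_mem_adjoin (hd : ∀ x y, d (x * y) = d x * y + x * d y)
    {s : Set A} (hs : ∀ a ∈ s, ∃ n, (d ^ n) a = 0) {x : A} (hx : x ∈ adjoin R s) :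
    ∃ n, (d ^ n) x = 0 := by
  induction hx using adjoin_induction with
  | mem a ha => exact hs a ha
  | zero => exact ⟨0, map_zero _⟩
  | add x y _ _ hx hy =>
    obtain ⟨m, hm⟩ := hx
    obtain ⟨n, hn⟩ := hy
    refine ⟨m + n, ?_⟩
    rw [map_add, pow_map_zero_of_le (Nat.le_add_right m n) hm,
      pow_map_zero_of_le (Nat.le_add_left n m) hn, add_zero]
  | mul x y _ _ hx hy =>
    obtain ⟨m, hm⟩ := hx
    obtain ⟨n, hn⟩ := hy
    exact ⟨m + n, pow_apply_mul_eq_zero hd hm hn⟩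
  | smul r x _ hx =>
    obtain ⟨n, hn⟩ := hx
    exact ⟨n, by rw [map_smul, hn, smul_zero]⟩

theorem mapsTo_adjoin (hd : ∀ x y, d (x * y) = d x * y + x * d y) {s : Set A}
    (hs : Set.MapsTo d s (adjoin R s)) : Set.MapsTo d (adjoin R s) (adjoin R s) := by
  intro x hx
  induction hx using adjoin_induction with
  | mem a ha => exact hs ha
  | zero => rw [map_zero]; exact zero_mem _
  | add x y _ _ hx hy => rw [map_add]; exact add_mem hx hy
  | mul x y hx' hy' hx hy => rw [hd]; exact add_mem (mul_mem hx hy') (mul_mem hx' hy)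
  | smul r x _ hx => rw [map_smul]; exact SMulMemClass.smul_mem r hx

theorem exists_apply_eq_mul (hd : ∀ x y, d (x * y) = d x * y + x * d y) (h0 : d (e 0) = 0)
    (hsucc : ∀ i, d (e (i + 1)) = e i) {x : A} (hx : x ∈ adjoin R (Set.range e)) :
    ∀ z ∈ adjoin R (Set.range e), ∃ w ∈ adjoin R (Set.range e), d w = x * z := by
  have he : ∀ i, e i ∈ adjoin R (Set.range e) := fun i => subset_adjoin R (Set.mem_range_self i)
  have hS : Set.MapsTo d (adjoin R (Set.range e)) (adjoin R (Set.range e)) :=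
    mapsTo_adjoin hd <| Set.forall_mem_range.2 fun
      | 0 => by rw [h0]; exact zero_mem _
      | i + 1 => by rw [hsucc]; exact he i
  have hnil : ∀ z ∈ adjoin R (Set.range e), ∃ n, (d ^ n) z = 0 := fun _ =>
    exists_pow_apply_eq_zero_of_mem_adjoin hd
      (Set.forall_mem_range.2 fun i => ⟨i + 1, pow_succ_apply_eq_zero h0 hsucc i⟩)
  induction hx using adjoin_induction with
  | mem a ha =>
    obtain ⟨i, rfl⟩ := ha
    intro z hz
    obtain ⟨n, hn⟩ := hnil z hz
    exact exists_apply_eq_mul_of_pow_apply_eq_zero hd hsucc he hS n i hz hn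
  | zero => exact fun _ _ => ⟨0, zero_mem _, by rw [map_zero, zero_mul]⟩
  | add x y _ _ hx hy =>
    intro z hz
    obtain ⟨v, hvS, hv⟩ := hx z hz
    obtain ⟨w, hwS, hw⟩ := hy z hz
    exact ⟨v + w, add_mem hvS hwS, by rw [map_add, hv, hw, add_mul]⟩
  | mul x y _ hy hx _ =>
    intro z hz
    obtain ⟨w, hwS, hw⟩ := hx (y * z) (mul_mem hy hz)
    exact ⟨w, hwS, by rw [hw, mul_assoc]⟩
  | smul r x _ hx =>
    intro z hz
    obtain ⟨w, hwS, hw⟩ := hx z hz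
    exact ⟨r • w, SMulMemClass.smul_mem r hwS, by rw [map_smul, hw, smul_mul_assoc]⟩

theorem surjOn_adjoin_range (hd : ∀ x y, d (x * y) = d x * y + x * d y) (h0 : d (e 0) = 0)
    (hsucc : ∀ i, d (e (i + 1)) = e i) :
    Set.SurjOn d (adjoin R (Set.range e)) (adjoin R (Set.range e)) := by
  intro x hx
  induction hx using adjoin_induction with
  | mem a ha =>
    obtain ⟨i, rfl⟩ := ha
    exact ⟨e (i + 1), subset_adjoin R (Set.mem_range_self _), hsucc i⟩
  | zero => exact ⟨0, zero_mem _, map_zero d⟩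
  | add x y _ _ hx hy =>
    obtain ⟨v, hvS, hv⟩ := hx
    obtain ⟨w, hwS, hw⟩ := hy
    exact ⟨v + w, add_mem hvS hwS, by rw [map_add, hv, hw]⟩
  | mul x y hx hy _ _ => exact exists_apply_eq_mul hd h0 hsucc hx y hy
  | smul r x _ hx =>
    obtain ⟨w, hwS, hw⟩ := hx
    exact ⟨r • w, SMulMemClass.smul_mem r hwS, by rw [map_smul, hw]⟩

end Module.End

theorem stmt5_general
    (e : ℕ → ExteriorAlgebra ℚ (ℕ → ℚ))
    (d : ExteriorAlgebra ℚ (ℕ → ℚ) → ExteriorAlgebra ℚ (ℕ → ℚ))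
    (hadd : ∀ x y, d (x + y) = d x + d y)
    (hsmul : ∀ (q : ℚ) x, d (q • x) = q • d x)
    (hleib : ∀ x y, d (x * y) = d x * y + x * d y)
    (h0 : d (e 0) = 0)
    (hsucc : ∀ i, d (e (i + 1)) = e i) :
    ∀ x ∈ NonUnitalAlgebra.adjoin ℚ (Set.range e),
      ∃ y ∈ NonUnitalAlgebra.adjoin ℚ (Set.range e), d y = x :=
  let D : Module.End ℚ (ExteriorAlgebra ℚ (ℕ → ℚ)) :=
    { toFun := d, map_add' := hadd, map_smul' := hsmul }
  Module.End.surjOn_adjoin_range (d := D) hleib h0 hsucc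

/-- The derivation of the infinite-dimensional Grassmann (exterior) algebra over `ℚ` on
generators `e 0, e 1, e 2, …`, determined by `d (e 0) = 0` and `d (e (i+1)) = e i`, maps the
non-unital subalgebra generated by the generators (the "non-unital part" of the Grassmann
algebra) onto itself. -/
theorem stmt5
    (e : ℕ → ExteriorAlgebra ℚ (ℕ → ℚ))
    (he : ∀ i, e i = ExteriorAlgebra.ι ℚ (Pi.single i 1))
    (d : ExteriorAlgebra ℚ (ℕ → ℚ) → ExteriorAlgebra ℚ (ℕ → ℚ))
    (hadd : ∀ x y, d (x + y) = d x + d y)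
    (hsmul : ∀ (q : ℚ) x, d (q • x) = q • d x)
    (hleib : ∀ x y, d (x * y) = d x * y + x * d y)
    (h0 : d (e 0) = 0)
    (hsucc : ∀ i, d (e (i + 1)) = e i) :
    ∀ x ∈ NonUnitalAlgebra.adjoin ℚ (Set.range e),
      ∃ y ∈ NonUnitalAlgebra.adjoin ℚ (Set.range e), d y = x :=
  stmt5_general e d hadd hsmul hleib h0 hsucc
end

section
/- Let G_0 be a finite set of automorphisms of a K-algebra R forming part of a locally finite family (i.e., for every finitely generated K-submodule V, the smallest G_0-stable submodule containing V is finitely generated), and let D_0 be a finite set of skew derivations. Then for every finitely generated K-submodule V of R and every k ≥ 0, the sum Σ_{n ≥ k} Δ_{n,k}(V) is contained in a finitely generated G_0-stable K-submodule of R, where Δ_{n,k} is the set of compositions of n maps from G_0 ∪ D_0 with exactly k factors from D_0. -/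
/-!
Let `W₀` be a finitely generated `G₀`-stable submodule containing `V`, and let `W_{k+1}` be a
finitely generated `G₀`-stable submodule containing `Σ_{δ ∈ D₀} δ(W_k)`; both exist by local
finiteness, since `D₀` is finite. A word with `k` factors from `D₀` moves `V` up this tower one
step for each derivation and keeps it in place for each automorphism, so it maps `V` into `W_k`.
-/

theorem List.countP_ofFn {α : Type*} (p : α → Bool) {n : ℕ} (w : Fin n → α) :
    (List.ofFn w).countP p = Nat.card {i // p (w i) = true} := by
  rw [Nat.card_eq_fintype_card, Fintype.card_subtype]
  induction n with
  | zero => simp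
  | succ n ih =>
    rw [List.ofFn_succ, List.countP_cons, ih, Fin.univ_succ, Finset.filter_cons]
    split_ifs <;> simp_all [Finset.filter_map, Finset.card_map]

section Words

variable {K M ι : Type*} [CommSemiring K] [AddCommMonoid M] [Module K M]
  (g d : ι → Module.End K M)

def letter (p : ι × Bool) : Module.End K M :=
  if p.2 then d p.1 else g p.1

variable {g d}

theorem exists_fg_tower [Finite ι]
    (hlf : ∀ V : Submodule K M, V.FG → ∃ W : Submodule K M, W.FG ∧ V ≤ W ∧
      ∀ i, W.map (g i) = W)
    {V : Submodule K M} (hV : V.FG) :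
    ∃ W : ℕ → Submodule K M, V ≤ W 0 ∧ (∀ k, (W k).FG) ∧ (∀ k i, (W k).map (g i) = W k) ∧
      ∀ k i, (W k).map (d i) ≤ W (k + 1) := by
  choose! cl hcl_fg hle_cl hcl_stable using hlf
  let W : ℕ → Submodule K M := fun k => Nat.rec (cl V) (fun _ U => cl (⨆ i, U.map (d i))) k
  have hstep_fg : ∀ k, (W k).FG → (⨆ i, (W k).map (d i)).FG := fun k h =>
    Submodule.fg_iSup _ fun i => h.map _
  have hfg : ∀ k, (W k).FG := by
    intro k
    induction k with
    | zero => exact hcl_fg V hV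
    | succ k ih => exact hcl_fg _ (hstep_fg k ih)
  refine ⟨W, hle_cl V hV, hfg, ?_, ?_⟩
  · rintro (_ | k)
    · exact hcl_stable V hV
    · exact hcl_stable _ (hstep_fg k (hfg k))
  · intro k i
    exact le_trans (le_iSup (fun i => (W k).map (d i)) i) (hle_cl _ (hstep_fg k (hfg k)))

theorem list_prod_letter_apply_mem {W : ℕ → Submodule K M}
    (hg : ∀ k i, (W k).map (g i) ≤ W k) (hd : ∀ k i, (W k).map (d i) ≤ W (k + 1))
    (l : List (ι × Bool)) {j : ℕ} {v : M} (hv : v ∈ W j) :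
    (l.map (letter g d)).prod v ∈ W (j + l.countP (·.2)) := by
  induction l with
  | nil => simpa using hv
  | cons p l ih =>
    rw [List.map_cons, List.prod_cons, Module.End.mul_apply, List.countP_cons]
    cases hp : p.2
    · simpa [letter, hp] using hg _ p.1 (Submodule.mem_map_of_mem ih)
    · simpa [letter, hp, add_assoc] using hd _ p.1 (Submodule.mem_map_of_mem ih)

end Words

theorem stmt8_general {K R ι : Type*} [CommRing K] [Ring R] [Algebra K R] [Finite ι]
    (σ : ι → R ≃ₐ[K] R) (δ : ι → R →ₗ[K] R)
    (hlf : ∀ V : Submodule K R, V.FG → ∃ W : Submodule K R, W.FG ∧ V ≤ W ∧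
      ∀ i, W.map (σ i).toLinearMap = W) :
    ∀ (k : ℕ) (V : Submodule K R), V.FG →
      ∃ W : Submodule K R, W.FG ∧ (∀ i, W.map (σ i).toLinearMap = W) ∧
        ∀ (n : ℕ) (w : Fin n → ι × Bool), Nat.card {i // (w i).2 = true} = k →
          ∀ v ∈ V,
            (List.ofFn fun i => (if (w i).2 then δ (w i).1
              else (σ (w i).1).toLinearMap : Module.End K R)).prod v ∈ W := by
  intro k V hV
  obtain ⟨W, hVW, hfg, hstable, hδ⟩ := exists_fg_tower (d := δ) hlf hV
  refine ⟨W k, hfg k, hstable k, fun n w hk v hv => ?_⟩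
  have hmem := list_prod_letter_apply_mem (fun k i => (hstable k i).le) hδ (List.ofFn w) (hVW hv)
  rwa [List.countP_ofFn, hk, zero_add, List.map_ofFn] at hmem

/-- Let `G₀ = {σ i}` be a finite family of automorphisms of a `K`-algebra `R` which is locally
finite (every finitely generated `K`-submodule is contained in a finitely generated `G₀`-stable
one) and `D₀ = {δ i}` a finite family of corresponding skew derivations.  Then for every finitely
generated `K`-submodule `V` of `R` and every `k`, the sum `Σ_{n ≥ k} Δ_{n,k}(V)` — where
`Δ_{n,k}` consists of compositions of `n` maps from `G₀ ∪ D₀` with exactly `k` factors from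
`D₀` — is contained in a finitely generated `G₀`-stable `K`-submodule of `R`. -/
theorem stmt8 {K R ι : Type*} [CommRing K] [Ring R] [Algebra K R] [Finite ι]
    (σ : ι → R ≃ₐ[K] R) (δ : ι → R →ₗ[K] R)
    (hskew : ∀ i (x y : R), δ i (x * y) = δ i x * y + σ i x * δ i y)
    (hlf : ∀ V : Submodule K R, V.FG → ∃ W : Submodule K R, W.FG ∧ V ≤ W ∧
      ∀ i, W.map (σ i).toLinearMap = W) :
    ∀ (k : ℕ) (V : Submodule K R), V.FG →
      ∃ W : Submodule K R, W.FG ∧ (∀ i, W.map (σ i).toLinearMap = W) ∧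
        ∀ (n : ℕ) (w : Fin n → ι × Bool), Nat.card {i // (w i).2 = true} = k →
          ∀ v ∈ V,
            (List.ofFn fun i => (if (w i).2 then δ (w i).1
              else (σ (w i).1).toLinearMap : Module.End K R)).prod v ∈ W :=
  stmt8_general σ δ hlf
end

section
/- If R is a ring such that R^n is contained in the Wedderburn radical W(R) (the sum of all nilpotent ideals of R) for some n ≥ 1, then R is locally nilpotent: every finitely generated subring of R is nilpotent. -/
/-- The product `g 0 * g 1 * ⋯ * g n` of `n + 1` elements of a possibly non-unital ring. -/
def finProd {R : Type*} [Mul R] {n : ℕ} (g : Fin (n + 1) → R) : R :=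
  (List.ofFn fun i : Fin n => g i.succ).foldl (· * ·) (g 0)

/-!
The nilpotent ideals form a directed family: if `I ^ (a + 1) = 0`, expanding a product of `a + 1`
elements of `I + J` shows that it lies in `J`, so `I + J` is nilpotent whenever `J` is. Hence the
finitely many products of `n + 1` elements of `s`, which lie in `W(R)`, all lie in one nilpotent
ideal `J`, say with `J ^ (M + 1) = 0`. Elements of the subring generated by `s` are integer
combinations of products of elements of `s`, so their products of length `n + 1` lie in `J` too,
and cutting a product of `(n + 1) (M + 1)` of them into `M + 1` blocks of length `n + 1` gives `0`.
-/

open Pointwise Set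

/-- `powSucc S k = S ^ (k + 1)`, which makes sense without a unit. -/
def powSucc {R : Type*} [Mul R] (S : Set R) : ℕ → Set R
  | 0 => S
  | k + 1 => powSucc S k * S

section Mul

variable {R : Type*} [Mul R]

lemma finProd_snoc {k : ℕ} (g : Fin (k + 1) → R) (x : R) :
    finProd (Fin.snoc g x : Fin (k + 2) → R) = finProd g * x := by
  rw [finProd, List.ofFn_succ', List.concat_eq_append, List.foldl_append]
  simp only [Fin.succ_castSucc, Fin.snoc_castSucc, Fin.succ_last, Fin.snoc_last]
  rfl

lemma mem_powSucc_iff {S : Set R} {k : ℕ} {x : R} :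
    x ∈ powSucc S k ↔ ∃ g : Fin (k + 1) → R, (∀ i, g i ∈ S) ∧ finProd g = x := by
  induction k generalizing x with
  | zero =>
    refine ⟨fun hx => ⟨fun _ => x, fun _ => hx, rfl⟩, ?_⟩
    rintro ⟨g, hg, rfl⟩
    exact hg 0
  | succ k ih =>
    constructor
    · rintro ⟨y, hy, z, hz, rfl⟩
      obtain ⟨g, hg, rfl⟩ := ih.1 hy
      refine ⟨Fin.snoc g z, Fin.lastCases ?_ fun i => ?_, finProd_snoc g z⟩
      · simpa using hz
      · simpa using hg i
    · rintro ⟨g, hg, rfl⟩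
      rw [← Fin.snoc_init_self g, finProd_snoc]
      exact mul_mem_mul (ih.2 ⟨_, fun i => hg _, rfl⟩) (hg _)

lemma forall_finProd_mem_iff {S T : Set R} {k : ℕ} :
    (∀ g : Fin (k + 1) → R, (∀ i, g i ∈ S) → finProd g ∈ T) ↔ powSucc S k ⊆ T := by
  simp only [subset_def, mem_powSucc_iff]
  grind

lemma forall_finProd_eq_zero_iff [Zero R] {S : Set R} {k : ℕ} :
    (∀ g : Fin (k + 1) → R, (∀ i, g i ∈ S) → finProd g = 0) ↔ powSucc S k ⊆ {0} := by
  simp only [← forall_finProd_mem_iff, mem_singleton_iff]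

end Mul

section Semigroup

variable {R : Type*} [Semigroup R]

lemma powSucc_add (S : Set R) (a b : ℕ) :
    powSucc S (a + b + 1) = powSucc S a * powSucc S b := by
  induction b with
  | zero => rfl
  | succ b ih => rw [← add_assoc, powSucc, ih, powSucc, mul_assoc]

lemma powSucc_mono {S T : Set R} (h : S ⊆ T) : ∀ k, powSucc S k ⊆ powSucc T k
  | 0 => h
  | k + 1 => mul_subset_mul (powSucc_mono h k) h

lemma powSucc_subset_powSucc_powSucc (S : Set R) (a : ℕ) :
    ∀ b, powSucc S (a + (a + 1) * b) ⊆ powSucc (powSucc S a) b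
  | 0 => subset_rfl
  | b + 1 => by
    rw [show a + (a + 1) * (b + 1) = a + (a + 1) * b + a + 1 by ring, powSucc_add]
    exact mul_subset_mul (powSucc_subset_powSucc_powSucc S a b) subset_rfl

lemma Set.Finite.powSucc {S : Set R} (hS : S.Finite) : ∀ k, (powSucc S k).Finite
  | 0 => hS
  | k + 1 => (hS.powSucc k).mul hS

lemma subsemigroupClosure_subset_iUnion_powSucc (S : Set R) :
    (Subsemigroup.closure S : Set R) ⊆ ⋃ k, powSucc S k := by
  intro x hx
  induction hx using Subsemigroup.closure_induction with
  | mem x hx => exact mem_iUnion_of_mem 0 hx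
  | mul x y _ _ hx hy =>
    obtain ⟨a, hx⟩ := mem_iUnion.1 hx
    obtain ⟨b, hy⟩ := mem_iUnion.1 hy
    exact mem_iUnion_of_mem (a + b + 1) (powSucc_add S a b ▸ mul_mem_mul hx hy)

lemma powSucc_iUnion_powSucc_subset (S : Set R) :
    ∀ m, powSucc (⋃ k, powSucc S k) m ⊆ ⋃ k, powSucc S (m + k)
  | 0 => by simp [powSucc]
  | m + 1 => by
    refine (mul_subset_mul (powSucc_iUnion_powSucc_subset S m) subset_rfl).trans ?_
    simp only [iUnion_mul, mul_iUnion, iUnion_subset_iff, ← powSucc_add]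
    intro a b
    exact subset_iUnion_of_subset (a + b) (congrArg (powSucc S) (by ring)).subset

end Semigroup

section NonUnitalNonAssocRing

variable {R : Type*} [NonUnitalNonAssocRing R]

lemma addSubgroupClosure_mul_subset (A B : Set R) :
    (AddSubgroup.closure A : Set R) * AddSubgroup.closure B ⊆ AddSubgroup.closure (A * B) := by
  refine mul_subset_iff.2 fun a ha b hb => ?_
  induction ha using AddSubgroup.closure_induction with
  | mem a ha =>
    induction hb using AddSubgroup.closure_induction with
    | mem b hb => exact AddSubgroup.subset_closure (mul_mem_mul ha hb)
    | zero => rw [mul_zero]; exact zero_mem _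
    | add b c _ _ hb hc => simpa [mul_add] using add_mem hb hc
    | neg b _ hb => simpa using neg_mem hb
  | zero => rw [zero_mul]; exact zero_mem _
  | add a c _ _ ha hc => simpa [add_mul] using add_mem ha hc
  | neg a _ ha => simpa using neg_mem ha

lemma powSucc_addSubgroupClosure_subset (S : Set R) :
    ∀ k, powSucc (AddSubgroup.closure S : Set R) k ⊆ AddSubgroup.closure (powSucc S k)
  | 0 => subset_rfl
  | k + 1 =>
    (mul_subset_mul (powSucc_addSubgroupClosure_subset S k) subset_rfl).trans
      (addSubgroupClosure_mul_subset _ _)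

lemma powSucc_union_subset (S : Set R) (J : TwoSidedIdeal R) :
    ∀ k, powSucc (S ∪ J) k ⊆ powSucc S k ∪ J
  | 0 => subset_rfl
  | k + 1 => by
    rintro _ ⟨x, hx, y, hy, rfl⟩
    rcases powSucc_union_subset S J k hx with hx | hx
    · rcases hy with hy | hy
      · exact .inl (mul_mem_mul hx hy)
      · exact .inr (J.mul_mem_left _ _ hy)
    · exact .inr (J.mul_mem_right _ _ hx)

lemma TwoSidedIdeal.coe_sSup_subset_of_directedOn {𝒩 : Set (TwoSidedIdeal R)}
    (hne : 𝒩.Nonempty) (hdir : DirectedOn (· ≤ ·) 𝒩) :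
    ((sSup 𝒩 : TwoSidedIdeal R) : Set R) ⊆ ⋃ I ∈ 𝒩, (I : Set R) := by
  obtain ⟨I₀, hI₀⟩ := hne
  let U : TwoSidedIdeal R := .mk' (⋃ I ∈ 𝒩, (I : Set R)) (mem_biUnion hI₀ I₀.zero_mem)
    (by
      simp only [mem_iUnion]
      rintro x y ⟨I, hI, hx⟩ ⟨J, hJ, hy⟩
      obtain ⟨K, hK, hIK, hJK⟩ := hdir I hI J hJ
      exact ⟨K, hK, K.add_mem (hIK hx) (hJK hy)⟩)
    (by simp only [mem_iUnion]; exact fun ⟨I, hI, hx⟩ => ⟨I, hI, I.neg_mem hx⟩)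
    (by simp only [mem_iUnion]; exact fun ⟨I, hI, hy⟩ => ⟨I, hI, I.mul_mem_left _ _ hy⟩)
    (by simp only [mem_iUnion]; exact fun ⟨I, hI, hx⟩ => ⟨I, hI, I.mul_mem_right _ _ hx⟩)
  have hU : sSup 𝒩 ≤ U :=
    sSup_le fun I hI x hx => (TwoSidedIdeal.mem_mk' ..).2 (mem_biUnion hI hx)
  exact fun x hx => (TwoSidedIdeal.mem_mk' ..).1 (hU hx)

lemma TwoSidedIdeal.exists_mem_subset_of_finite_of_directedOn {𝒩 : Set (TwoSidedIdeal R)}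
    (hne : 𝒩.Nonempty) (hdir : DirectedOn (· ≤ ·) 𝒩) {F : Set R} (hF : F.Finite)
    (hF𝒩 : F ⊆ (sSup 𝒩 : TwoSidedIdeal R)) : ∃ I ∈ 𝒩, F ⊆ I := by
  rw [← hF.coe_toFinset] at hF𝒩 ⊢
  exact DirectedOn.exists_mem_subset_of_finset_subset_biUnion hne hdir
    (hF𝒩.trans (coe_sSup_subset_of_directedOn hne hdir))

end NonUnitalNonAssocRing

section NonUnitalRing

variable {R : Type*} [NonUnitalRing R]

lemma powSucc_addSubgroupClosure_subset_zero {S : Set R} {J : TwoSidedIdeal R} {a b : ℕ}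
    (hSJ : powSucc S a ⊆ J) (hJ : powSucc (J : Set R) b ⊆ {0}) :
    powSucc (AddSubgroup.closure S : Set R) (a + (a + 1) * b) ⊆ {0} := by
  have hblock : powSucc (AddSubgroup.closure S : Set R) a ⊆ J :=
    (powSucc_addSubgroupClosure_subset S a).trans fun x hx =>
      AddSubgroup.closure_induction (fun _ h => hSJ h) J.zero_mem (fun _ _ _ _ => J.add_mem)
        (fun _ _ => J.neg_mem) hx
  exact (powSucc_subset_powSucc_powSucc _ a b).trans ((powSucc_mono hblock b).trans hJ)

lemma powSucc_subsemigroupClosure_subset {S : Set R} {J : TwoSidedIdeal R} {n : ℕ}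
    (hSJ : powSucc S n ⊆ J) : powSucc (Subsemigroup.closure S : Set R) n ⊆ J := by
  refine (powSucc_mono (subsemigroupClosure_subset_iUnion_powSucc S) n).trans
    ((powSucc_iUnion_powSucc_subset S n).trans (iUnion_subset fun k => ?_))
  cases k with
  | zero => exact hSJ
  | succ k => exact (powSucc_add S n k).trans_subset (J.subset_mul_set hSJ _)

variable (R) in
def nilpotentIdeals : Set (TwoSidedIdeal R) :=
  {I | ∃ m, powSucc (I : Set R) m ⊆ {0}}

lemma bot_mem_nilpotentIdeals : ⊥ ∈ nilpotentIdeals R :=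
  ⟨0, by simp [powSucc]⟩

lemma sup_mem_nilpotentIdeals {I J : TwoSidedIdeal R} (hI : I ∈ nilpotentIdeals R)
    (hJ : J ∈ nilpotentIdeals R) : I ⊔ J ∈ nilpotentIdeals R := by
  obtain ⟨a, hI⟩ := hI
  obtain ⟨b, hJ⟩ := hJ
  have hIJ : powSucc ((I : Set R) ∪ J) a ⊆ J :=
    (powSucc_union_subset I J a).trans (union_subset (hI.trans (by simp)) subset_rfl)
  refine ⟨a + (a + 1) * b,
    (powSucc_mono ?_ _).trans (powSucc_addSubgroupClosure_subset_zero hIJ hJ)⟩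
  intro x hx
  obtain ⟨y, hy, z, hz, rfl⟩ := TwoSidedIdeal.mem_sup.1 hx
  exact add_mem (AddSubgroup.subset_closure (Or.inl hy)) (AddSubgroup.subset_closure (Or.inr hz))

lemma directedOn_nilpotentIdeals : DirectedOn (· ≤ ·) (nilpotentIdeals R) :=
  fun I hI J hJ => ⟨I ⊔ J, sup_mem_nilpotentIdeals hI hJ, le_sup_left, le_sup_right⟩

end NonUnitalRing

/-- If `R` is a (possibly non-unital) ring such that `R ^ (n+1)` is contained in the Wedderburn
radical of `R` (the sum of all nilpotent two-sided ideals), then `R` is locally nilpotent: every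
finitely generated subring of `R` is nilpotent. -/
theorem stmt12 {R : Type*} [NonUnitalRing R] (n : ℕ)
    (hW : ∀ g : Fin (n + 1) → R, finProd g ∈
      sSup {I : TwoSidedIdeal R | ∃ m : ℕ,
        ∀ g' : Fin (m + 1) → R, (∀ i, g' i ∈ I) → finProd g' = 0}) :
    ∀ s : Finset R, ∃ m : ℕ, ∀ g : Fin (m + 1) → R,
      (∀ i, g i ∈ NonUnitalSubring.closure (s : Set R)) → finProd g = 0 := by
  intro s
  have hN : {I : TwoSidedIdeal R | ∃ m : ℕ,
      ∀ g' : Fin (m + 1) → R, (∀ i, g' i ∈ I) → finProd g' = 0} = nilpotentIdeals R :=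
    ext fun I => exists_congr fun m => forall_finProd_eq_zero_iff
  rw [hN] at hW
  have hsW : powSucc (s : Set R) n ⊆ (sSup (nilpotentIdeals R) : TwoSidedIdeal R) :=
    (powSucc_mono (subset_univ _) n).trans (forall_finProd_mem_iff.1 fun g _ => hW g)
  obtain ⟨J, ⟨M, hJ⟩, hsJ⟩ := TwoSidedIdeal.exists_mem_subset_of_finite_of_directedOn
    ⟨⊥, bot_mem_nilpotentIdeals⟩ directedOn_nilpotentIdeals (s.finite_toSet.powSucc n) hsW
  refine ⟨n + (n + 1) * M, forall_finProd_eq_zero_iff.2 ?_⟩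
  exact (powSucc_mono (fun x hx => NonUnitalSubring.mem_closure_iff.1 hx) _).trans
    (powSucc_addSubgroupClosure_subset_zero (powSucc_subsemigroupClosure_subset hsJ) hJ)
end

section
/- Let R be a locally nilpotent ring, σ an automorphism of R of finite order and δ a σ-derivation of R. If R satisfies R^n ⊆ W(R) for some n > 1, then the skew polynomial ring R[x; σ, δ] (without constant unit term, i.e., its ideal generated by R and x-monomials with R-coefficients) is locally nilpotent. -/
namespace Skew13
attribute [local instance] Classical.propDecidable
variable {T : Type*} [NonUnitalRing T]

def lprod : List T → T
  | [] => 0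
  | a :: t => t.foldl (· * ·) a

@[simp] lemma lprod_nil : lprod ([] : List T) = 0 := rfl
@[simp] lemma lprod_singleton (a : T) : lprod [a] = a := rfl

lemma foldl_mul_assoc (t : List T) (b c : T) :
    t.foldl (· * ·) (b * c) = b * t.foldl (· * ·) c := by
  induction t generalizing c with
  | nil => rfl
  | cons a t ih => simpa [mul_assoc] using ih (c * a)

lemma lprod_cons (a : T) {l : List T} (h : l ≠ []) : lprod (a :: l) = a * lprod l := by
  obtain ⟨b, t, rfl⟩ := List.exists_cons_of_ne_nil h
  simpa [lprod] using foldl_mul_assoc t a b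

lemma lprod_append {l₁ l₂ : List T} (h₁ : l₁ ≠ []) (h₂ : l₂ ≠ []) :
    lprod (l₁ ++ l₂) = lprod l₁ * lprod l₂ := by
  induction l₁ with
  | nil => simp at h₁
  | cons a t ih =>
    rcases eq_or_ne t [] with rfl | ht
    · simpa using lprod_cons a h₂
    · rw [List.cons_append, lprod_cons a (by simp [ht]), ih ht,
        lprod_cons a ht, mul_assoc]

/-- number of entries of a list satisfying `P` (classical) -/
noncomputable def cnt {α : Type*} (P : α → Prop) : List α → ℕ
  | [] => 0
  | a :: l => cnt P l + (if P a then 1 else 0)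

@[simp] lemma cnt_nil {α : Type*} (P : α → Prop) : cnt P ([] : List α) = 0 := rfl
lemma cnt_cons {α : Type*} (P : α → Prop) (a : α) (l : List α) :
    cnt P (a :: l) = cnt P l + (if P a then 1 else 0) := rfl

lemma cnt_append {α : Type*} (P : α → Prop) (l₁ l₂ : List α) :
    cnt P (l₁ ++ l₂) = cnt P l₁ + cnt P l₂ := by
  induction l₁ with
  | nil => simp
  | cons a t ih => rw [List.cons_append, cnt_cons, cnt_cons, ih]; omega

lemma cnt_pos {α : Type*} (P : α → Prop) {l : List α} {a : α} (ha : a ∈ l) (hPa : P a) :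
    1 ≤ cnt P l := by
  induction l with
  | nil => simp at ha
  | cons b t ih =>
    rw [cnt_cons]
    rcases List.mem_cons.mp ha with rfl | ha
    · simp [hPa]
    · have := ih ha; omega

lemma finProd_eq_lprod {n : ℕ} (g : Fin (n + 1) → T) : finProd g = lprod (List.ofFn g) := by
  rw [List.ofFn_succ]; rfl

lemma lprod_ofFn_getD {p : ℕ} (hp : 0 < p) (l : List T) (h : l.length = p) :
    l = List.ofFn (fun i : Fin p => l.getD i 0) := by
  apply List.ext_getElem (by simp [h])
  intro i h1 h2
  simp only [List.getElem_ofFn]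
  rw [List.getD_eq_getElem l 0 (by omega)]

open AddSubgroup in
lemma mulL_closure {X : Set T} {Z : AddSubgroup T} {a b : T}
    (hb : b ∈ AddSubgroup.closure X) (h : ∀ u ∈ X, a * u ∈ Z) : a * b ∈ Z := by
  induction hb using closure_induction with
  | mem u hu => exact h u hu
  | zero => simpa using Z.zero_mem
  | add u v hu hv h1 h2 => rw [mul_add]; exact Z.add_mem h1 h2
  | neg u hu h1 => rw [mul_neg]; exact Z.neg_mem h1

open AddSubgroup in
lemma mulR_closure {X : Set T} {Z : AddSubgroup T} {a b : T}
    (hb : b ∈ AddSubgroup.closure X) (h : ∀ u ∈ X, u * a ∈ Z) : b * a ∈ Z := by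
  induction hb using closure_induction with
  | mem u hu => exact h u hu
  | zero => simpa using Z.zero_mem
  | add u v hu hv h1 h2 => rw [add_mul]; exact Z.add_mem h1 h2
  | neg u hu h1 => rw [neg_mul]; exact Z.neg_mem h1

lemma bilin_closure {X Y : Set T} {Z : AddSubgroup T} {a b : T}
    (ha : a ∈ AddSubgroup.closure X) (hb : b ∈ AddSubgroup.closure Y)
    (h : ∀ x ∈ X, ∀ y ∈ Y, x * y ∈ Z) : a * b ∈ Z :=
  mulR_closure ha (fun u hu => mulL_closure hb (fun v hv => h u hu v hv))

/-- multilinear expansion of `lprod` over additive closures -/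
lemma lprod_mem_closure {X : Set T} :
    ∀ (l : List T), l ≠ [] → (∀ y ∈ l, y ∈ AddSubgroup.closure X) →
      lprod l ∈ AddSubgroup.closure
        {z : T | ∃ l' : List T, l'.length = l.length ∧ (∀ y ∈ l', y ∈ X) ∧ z = lprod l'} := by
  intro l
  induction l with
  | nil => simp
  | cons a t ih =>
    intro _ hmem
    rcases eq_or_ne t [] with rfl | ht
    · refine AddSubgroup.closure_mono ?_ (by simpa using hmem a (by simp))
      intro z hz
      exact ⟨[z], by simp, by simpa using hz, rfl⟩
    · have htmem := ih ht (fun y hy => hmem y (by simp [hy]))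
      rw [lprod_cons a ht]
      exact bilin_closure (hmem a (by simp)) htmem (by
        rintro u hu z ⟨l', hlen, hl'X, rfl⟩
        have hl'ne : l' ≠ [] := by
          rintro rfl; simp at hlen; exact ht (List.length_eq_zero_iff.mp hlen.symm)
        refine AddSubgroup.subset_closure ⟨u :: l', by simp [hlen], ?_, ?_⟩
        · intro y hy
          rcases List.mem_cons.mp hy with rfl | hy
          · exact hu
          · exact hl'X _ hy
        · rw [lprod_cons u hl'ne])

/-- If a list has at least `k ≥ 1` entries in the ideal `I`, its product equals the product
of a list of exactly `k` elements of `I`. -/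
lemma extract (I : TwoSidedIdeal T) :
    ∀ (l : List T) (k : ℕ), 1 ≤ k → k ≤ cnt (fun x => x ∈ I) l →
      ∃ l' : List T, (∀ x ∈ l', x ∈ I) ∧ l'.length = k ∧ lprod l = lprod l' := by
  intro l
  induction l with
  | nil => intro k h1 h2; simp at h2; omega
  | cons a t ih =>
    intro k h1 h2
    rw [cnt_cons] at h2
    by_cases ha : a ∈ I
    · rcases eq_or_lt_of_le h1 with rfl | hk2
      · -- k = 1 : the whole product is in I
        have htI : ∀ b : T, ∀ u : List T, b ∈ I → u.foldl (· * ·) b ∈ I := by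
          intro b u
          induction u generalizing b with
          | nil => exact fun h => h
          | cons c u ihu => intro hb; exact ihu _ (I.mul_mem_right _ _ hb)
        exact ⟨[lprod (a :: t)], fun y hy => by rw [List.mem_singleton.mp hy]; exact htI a t ha, rfl, rfl⟩
      · have h2' : k - 1 ≤ cnt (fun x => x ∈ I) t := by
          simp [ha] at h2; omega
        obtain ⟨l', hl'I, hl'len, hl'⟩ := ih (k - 1) (by omega) h2'
        have htne : t ≠ [] := by
          rintro rfl; simp at h2'; omega
        have hl'ne : l' ≠ [] := by
          rintro rfl; simp at hl'len; omega
        refine ⟨a :: l', ?_, by simp [hl'len]; omega, ?_⟩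
        · intro y hy; rcases hy with _ | hy
          · exact ha
          · exact hl'I _ (by assumption)
        · rw [lprod_cons a htne, lprod_cons a hl'ne, hl']
    · have h2' : k ≤ cnt (fun x => x ∈ I) t := by simp [ha] at h2; omega
      obtain ⟨l', hl'I, hl'len, hl'⟩ := ih k h1 h2'
      have htne : t ≠ [] := by rintro rfl; simp at h2'; omega
      obtain ⟨b, u, rfl⟩ : ∃ b u, l' = b :: u := by
        rcases l' with _ | ⟨b, u⟩
        · exfalso; simp at hl'len; omega
        · exact ⟨_, _, rfl⟩
      refine ⟨(a * b) :: u, ?_, by simpa using hl'len, ?_⟩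
      · intro y hy; rcases hy with _ | hy
        · exact I.mul_mem_left _ _ (hl'I b (by simp))
        · exact hl'I _ (by simp [*]; right; assumption)
      · rw [lprod_cons a htne, hl']
        rcases eq_or_ne u [] with rfl | hu
        · rfl
        · rw [lprod_cons b hu, lprod_cons (a * b) hu, mul_assoc]


/-- the set of nilpotent two-sided ideals -/
def NilSet (T : Type*) [NonUnitalRing T] : Set (TwoSidedIdeal T) :=
  {I | ∃ m : ℕ, ∀ g' : Fin (m + 1) → T, (∀ i, g' i ∈ I) → finProd g' = 0}

lemma nil_list {I : TwoSidedIdeal T} {m : ℕ}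
    (hI : ∀ g' : Fin (m + 1) → T, (∀ i, g' i ∈ I) → finProd g' = 0)
    (l : List T) (hlen : l.length = m + 1) (hl : ∀ y ∈ l, y ∈ I) : lprod l = 0 := by
  have := hI (fun i : Fin (m + 1) => l.getD i 0) (fun i => by
    show l.getD i 0 ∈ I
    rw [List.getD_eq_getElem l 0 (by omega)]
    exact hl _ (List.getElem_mem _))
  rw [finProd_eq_lprod, ← lprod_ofFn_getD (by omega) l hlen] at this
  exact this

/-- a list with at least `m+1` entries in a nilpotent ideal has zero product -/
lemma nil_count {I : TwoSidedIdeal T} {m : ℕ}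
    (hI : ∀ g' : Fin (m + 1) → T, (∀ i, g' i ∈ I) → finProd g' = 0)
    (l : List T) (hc : m + 1 ≤ cnt (fun x => x ∈ I) l) : lprod l = 0 := by
  obtain ⟨l', hl'I, hlen, hl'⟩ := extract I l (m + 1) (by omega) hc
  rw [hl']
  exact nil_list hI l' hlen hl'I

lemma length_le_countP_add {I J : TwoSidedIdeal T} :
    ∀ l : List T, (∀ y ∈ l, y ∈ I ∨ y ∈ J) →
      l.length ≤ cnt (fun x => x ∈ I) l + cnt (fun x => x ∈ J) l := by
  intro l
  induction l with
  | nil => simp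
  | cons a t ih =>
    intro h
    have := ih (fun y hy => h y (by simp [hy]))
    rw [cnt_cons, cnt_cons]
    rcases h a (by simp) with ha | ha <;> simp [ha] <;> omega

lemma bot_mem_nilSet : (⊥ : TwoSidedIdeal T) ∈ NilSet T := by
  refine ⟨0, fun g hg => ?_⟩
  have h0 : g 0 = 0 := (TwoSidedIdeal.mem_bot T).mp (hg 0)
  rw [finProd_eq_lprod, List.ofFn_succ, h0]
  show List.foldl (· * ·) 0 _ = 0
  generalize (List.ofFn fun i : Fin 0 => g i.succ) = u
  induction u with
  | nil => rfl
  | cons c u ihu => simpa using ihu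

lemma sup_mem_nilSet {I J : TwoSidedIdeal T} (hI : I ∈ NilSet T) (hJ : J ∈ NilSet T) :
    I ⊔ J ∈ NilSet T := by
  obtain ⟨mI, hI⟩ := hI
  obtain ⟨mJ, hJ⟩ := hJ
  refine ⟨mI + mJ + 1, fun g hg => ?_⟩
  rw [finProd_eq_lprod]
  set l := List.ofFn g with hl
  have hlen : l.length = mI + mJ + 2 := by simp [hl]
  have hmem : ∀ y ∈ l, y ∈ AddSubgroup.closure ((I : Set T) ∪ (J : Set T)) := by
    intro y hy
    obtain ⟨i, rfl⟩ := List.mem_ofFn.mp hy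
    obtain ⟨a, ha, b, hb, hab⟩ := TwoSidedIdeal.mem_sup.mp (hg i)
    rw [← hab]
    exact add_mem (AddSubgroup.subset_closure (Or.inl ha))
      (AddSubgroup.subset_closure (Or.inr hb))
  have h2 := lprod_mem_closure l (by rw [← List.length_pos_iff_ne_nil]; omega) hmem
  have hz : {z : T | ∃ l' : List T, l'.length = l.length ∧
      (∀ y ∈ l', y ∈ (I : Set T) ∪ (J : Set T)) ∧ z = lprod l'} ⊆ {(0 : T)} := by
    rintro z ⟨l', hlen', hl'mem, rfl⟩
    have hcount := length_le_countP_add (I := I) (J := J) l' (fun y hy => hl'mem y hy)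
    rw [hlen', hlen] at hcount
    simp only [Set.mem_singleton_iff]
    rcases le_or_gt (mI + 1) (cnt (fun x => x ∈ I) l') with hc | hc
    · exact nil_count hI l' hc
    · exact nil_count hJ l' (by omega)
  have := AddSubgroup.closure_mono hz h2
  simpa [AddSubgroup.closure_singleton_zero] using this

lemma exists_nil_of_mem_sSup {x : T} (hx : x ∈ sSup (NilSet T)) :
    ∃ I ∈ NilSet T, x ∈ I := by
  set U : Set T := {y : T | ∃ I ∈ NilSet T, y ∈ I} with hU
  have hz : (0 : T) ∈ U := ⟨⊥, bot_mem_nilSet, zero_mem _⟩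
  have hadd : ∀ {a b : T}, a ∈ U → b ∈ U → a + b ∈ U := by
    rintro a b ⟨I, hI, ha⟩ ⟨J, hJ, hb⟩
    exact ⟨I ⊔ J, sup_mem_nilSet hI hJ,
      add_mem (TwoSidedIdeal.mem_sup_left ha) (TwoSidedIdeal.mem_sup_right hb)⟩
  have hneg : ∀ {a : T}, a ∈ U → -a ∈ U := by
    rintro a ⟨I, hI, ha⟩; exact ⟨I, hI, neg_mem ha⟩
  have hml : ∀ {a b : T}, b ∈ U → a * b ∈ U := by
    rintro a b ⟨I, hI, hb⟩; exact ⟨I, hI, I.mul_mem_left _ _ hb⟩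
  have hmr : ∀ {a b : T}, a ∈ U → a * b ∈ U := by
    rintro a b ⟨I, hI, ha⟩; exact ⟨I, hI, I.mul_mem_right _ _ ha⟩
  have hle : sSup (NilSet T) ≤ TwoSidedIdeal.mk' U hz hadd hneg hml hmr := by
    apply sSup_le
    intro I hI y hy
    rw [TwoSidedIdeal.mem_mk']
    exact ⟨I, hI, hy⟩
  have := hle hx
  rwa [TwoSidedIdeal.mem_mk'] at this

lemma exists_nil_of_finset (X : Finset T) (hX : ∀ y ∈ X, y ∈ sSup (NilSet T)) :
    ∃ I ∈ NilSet T, ∀ y ∈ X, y ∈ I := by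
  classical
  induction X using Finset.induction with
  | empty => exact ⟨⊥, bot_mem_nilSet, by simp⟩
  | insert a X' hnotmem ih =>
    obtain ⟨I, hI, hIX⟩ := ih (fun y hy => hX y (by simp [hy]))
    obtain ⟨J, hJ, hJa⟩ := exists_nil_of_mem_sSup (hX a (by simp))
    refine ⟨I ⊔ J, sup_mem_nilSet hI hJ, ?_⟩
    intro y hy
    rcases Finset.mem_insert.mp hy with rfl | hy
    · exact TwoSidedIdeal.mem_sup_right hJa
    · exact TwoSidedIdeal.mem_sup_left (hIX y hy)

section Efam
variable {R : Type*} [NonUnitalRing R]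

/-- `Efam σ δ m₀ F j` : all elements obtained from `F` by applying words in `σ, δ`
with at most `j` occurrences of `δ` (σ-powers reduced below `m₀`). -/
def Efam (σ : R ≃+* R) (δ : R → R) (m₀ : ℕ) (F : Set R) : ℕ → Set R
  | 0 => ⋃ i < m₀, (σ ^ i : R ≃+* R) '' F
  | (j + 1) => Efam σ δ m₀ F j ∪
      ⋃ i < m₀, (fun r => (σ ^ i : R ≃+* R) (δ r)) '' Efam σ δ m₀ F j

variable {σ : R ≃+* R} {δ : R → R} {m₀ : ℕ} {F : Set R}

lemma Efam_finite (hF : F.Finite) : ∀ j, (Efam σ δ m₀ F j).Finite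
  | 0 => Set.Finite.biUnion (Set.finite_Iio m₀) fun i _ => hF.image _
  | (j + 1) => (Efam_finite hF j).union <|
      Set.Finite.biUnion (Set.finite_Iio m₀) fun i _ => (Efam_finite hF j).image _

lemma pow_reduce (hm₀ : 0 < m₀) (hσ : σ ^ m₀ = 1) (i : ℕ) : σ ^ i = σ ^ (i % m₀) := by
  conv_lhs => rw [← Nat.div_add_mod i m₀, pow_add, pow_mul, hσ, one_pow, one_mul]

lemma F_subset_Efam (hm₀ : 0 < m₀) : F ⊆ Efam σ δ m₀ F 0 := by
  intro r hr
  simp only [Efam, Set.mem_iUnion]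
  exact ⟨0, hm₀, ⟨r, hr, by simp⟩⟩

lemma Efam_mono_succ (j : ℕ) : Efam σ δ m₀ F j ⊆ Efam σ δ m₀ F (j + 1) :=
  Set.subset_union_left

lemma Efam_mono {j j' : ℕ} (h : j ≤ j') : Efam σ δ m₀ F j ⊆ Efam σ δ m₀ F j' := by
  induction j' with
  | zero => have : j = 0 := by omega
            subst this; exact subset_rfl
  | succ k ih =>
    rcases Nat.lt_or_ge j (k+1) with hk | hk
    · exact (ih (by omega)).trans (Efam_mono_succ k)
    · have : j = k + 1 := by omega
      subst this; exact subset_rfl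

lemma sigma_mem_Efam (hm₀ : 0 < m₀) (hσ : σ ^ m₀ = 1) {j : ℕ} {r : R}
    (hr : r ∈ Efam σ δ m₀ F j) : σ r ∈ Efam σ δ m₀ F j := by
  induction j with
  | zero =>
    simp only [Efam, Set.mem_iUnion, Set.mem_image] at hr ⊢
    obtain ⟨i, hi, a, ha, rfl⟩ := hr
    refine ⟨(i + 1) % m₀, Nat.mod_lt _ hm₀, a, ha, ?_⟩
    have h1 : σ ^ ((i+1) % m₀) = σ ^ (i + 1) := (pow_reduce hm₀ hσ (i+1)).symm
    rw [h1, pow_succ']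
    rfl
  | succ k ih =>
    simp only [Efam, Set.mem_union, Set.mem_iUnion, Set.mem_image] at hr ⊢
    rcases hr with hr | ⟨i, hi, a, ha, rfl⟩
    · exact Or.inl (ih hr)
    · refine Or.inr ⟨(i + 1) % m₀, Nat.mod_lt _ hm₀, a, ha, ?_⟩
      have h1 : σ ^ ((i+1) % m₀) = σ ^ (i + 1) := (pow_reduce hm₀ hσ (i+1)).symm
      rw [h1, pow_succ']
      rfl

lemma delta_mem_Efam (hm₀ : 0 < m₀) {j : ℕ} {r : R}
    (hr : r ∈ Efam σ δ m₀ F j) : δ r ∈ Efam σ δ m₀ F (j + 1) := by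
  simp only [Efam, Set.mem_union, Set.mem_iUnion, Set.mem_image]
  exact Or.inr ⟨0, hm₀, r, hr, by simp⟩

end Efam

section Skewside
variable {R S : Type*} [NonUnitalRing R] [Ring S]
variable {σ : R ≃+* R} {δ : R → R} {m₀ : ℕ} {F : Set R}
variable {f : R →ₙ+* S} {x : S}

/-- monomials arising from pushing `x ^ e` through `f r` -/
def XSet (f : R →ₙ+* S) (x : S) (σ : R ≃+* R) (δ : R → R) (m₀ : ℕ) (F : Set R)
    (e j : ℕ) : Set S :=
  {u : S | ∃ i k : ℕ, ∃ r' : R, i + k = e ∧ r' ∈ Efam σ δ m₀ F (j + k) ∧ u = f r' * x ^ i}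

lemma pow_mul_f (hm₀ : 0 < m₀) (hσ : σ ^ m₀ = 1)
    (hrel : ∀ r, x * f r = f (σ r) * x + f (δ r)) :
    ∀ (e : ℕ) {j : ℕ} {r : R}, r ∈ Efam σ δ m₀ F j →
      x ^ e * f r ∈ AddSubgroup.closure (XSet f x σ δ m₀ F e j) := by
  intro e
  induction e with
  | zero =>
    intro j r hr
    rw [pow_zero, one_mul]
    exact AddSubgroup.subset_closure ⟨0, 0, r, rfl, by simpa using hr, by simp⟩
  | succ e ih =>
    intro j r hr
    have key : x ^ (e + 1) * f r = (x ^ e * f (σ r)) * x + x ^ e * f (δ r) := by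
      rw [pow_succ, mul_assoc, hrel r, mul_add, ← mul_assoc]
    rw [key]
    refine AddSubgroup.add_mem _ ?_ ?_
    · refine mulR_closure (ih (sigma_mem_Efam hm₀ hσ hr)) ?_
      rintro u ⟨i, k, r', hik, hr', rfl⟩
      exact AddSubgroup.subset_closure
        ⟨i + 1, k, r', by omega, hr', by rw [mul_assoc, ← pow_succ]⟩
    · refine AddSubgroup.closure_mono ?_ (ih (delta_mem_Efam hm₀ hr))
      rintro u ⟨i, k, r', hik, hr', rfl⟩
      exact ⟨i, k + 1, r', by omega, by rwa [show j + (k+1) = j + 1 + k by omega], rfl⟩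

/-- admissible sums-of-monomials of "length `L`, budget `B`" -/
def Mon (f : R →ₙ+* S) (x : S) (σ : R ≃+* R) (δ : R → R) (m₀ : ℕ) (F : Set R)
    (L B : ℕ) : Set S :=
  {u : S | ∃ (cs : List R) (js : List ℕ) (e : ℕ), cs.length = L ∧
    List.Forall₂ (fun c jj => c ∈ Efam σ δ m₀ F jj) cs js ∧
    js.sum + e ≤ B ∧ u = f (lprod cs) * x ^ e}

lemma mon_mul_mon (hm₀ : 0 < m₀) (hσ : σ ^ m₀ = 1)
    (hrel : ∀ r, x * f r = f (σ r) * x + f (δ r)) {L B d : ℕ}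
    {u v : S} (hu : u ∈ Mon f x σ δ m₀ F L B)
    (hv : ∃ r ∈ F, ∃ e' ≤ d, v = f r * x ^ e') :
    u * v ∈ AddSubgroup.closure (Mon f x σ δ m₀ F (L + 1) (B + d)) := by
  obtain ⟨cs, js, e, hlen, hfa, hbud, rfl⟩ := hu
  obtain ⟨r, hr, e', he', rfl⟩ := hv
  rcases eq_or_ne cs [] with rfl | hcs_ne
  · simp only [lprod_nil, map_zero, zero_mul]
    exact AddSubgroup.zero_mem _
  have key : (f (lprod cs) * x ^ e) * (f r * x ^ e') =
      f (lprod cs) * ((x ^ e * f r) * x ^ e') := by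
    rw [mul_assoc, ← mul_assoc (x ^ e)]
  rw [key]
  refine mulL_closure (Z := AddSubgroup.closure (Mon f x σ δ m₀ F (L + 1) (B + d)))
    (X := {w : S | ∃ i k : ℕ, ∃ r' : R, i + k = e ∧ r' ∈ Efam σ δ m₀ F k ∧
      w = f r' * x ^ (i + e')}) ?_ ?_
  · refine mulR_closure (pow_mul_f hm₀ hσ hrel e (F_subset_Efam hm₀ hr)) ?_
    rintro w ⟨i, k, r', hik, hr', rfl⟩
    refine AddSubgroup.subset_closure ⟨i, k, r', hik, by simpa using hr', ?_⟩
    rw [mul_assoc, ← pow_add]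
  · rintro w ⟨i, k, r', hik, hr', rfl⟩
    refine AddSubgroup.subset_closure
      ⟨cs ++ [r'], js ++ [k], i + e', by simp [hlen], ?_, ?_, ?_⟩
    · exact List.rel_append hfa (List.Forall₂.cons hr' List.Forall₂.nil)
    · simp only [List.sum_append, List.sum_cons, List.sum_nil]
      omega
    · rw [lprod_append hcs_ne (by simp), lprod_singleton, map_mul, mul_assoc]

lemma prod_mem_closure_Mon (hm₀ : 0 < m₀) (hσ : σ ^ m₀ = 1)
    (hrel : ∀ r, x * f r = f (σ r) * x + f (δ r)) {d : ℕ} {A : Set S}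
    (hA : ∀ y ∈ A, y ∈ AddSubgroup.closure {v : S | ∃ r ∈ F, ∃ e' ≤ d, v = f r * x ^ e'}) :
    ∀ ys : List S, ys ≠ [] → (∀ y ∈ ys, y ∈ A) →
      lprod ys ∈ AddSubgroup.closure (Mon f x σ δ m₀ F ys.length (ys.length * d)) := by
  intro ys
  induction ys using List.reverseRecOn with
  | nil => simp
  | append_singleton ys y ih =>
    intro _ hmem
    have hy := hA y (hmem y (by simp))
    have hmono : {v : S | ∃ r ∈ F, ∃ e' ≤ d, v = f r * x ^ e'} ⊆ Mon f x σ δ m₀ F 1 d := by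
      rintro v ⟨r, hr, e', he', rfl⟩
      exact ⟨[r], [0], e', rfl,
        List.Forall₂.cons (F_subset_Efam hm₀ hr) List.Forall₂.nil, by simpa using he', by simp⟩
    rcases eq_or_ne ys [] with rfl | hne
    · simpa using AddSubgroup.closure_mono hmono hy
    · have hys := ih hne (fun z hz => hmem z (by simp [hz]))
      rw [lprod_append hne (by simp), lprod_singleton]
      have hstep : ∀ u ∈ Mon f x σ δ m₀ F ys.length (ys.length * d), ∀ v ∈
          {v : S | ∃ r ∈ F, ∃ e' ≤ d, v = f r * x ^ e'},
          u * v ∈ AddSubgroup.closure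
            (Mon f x σ δ m₀ F ((ys ++ [y]).length) (((ys ++ [y]).length) * d)) := by
        intro u hu v hv
        have := mon_mul_mon hm₀ hσ hrel hu hv
        simpa [Nat.succ_mul] using this
      exact bilin_closure hys hy hstep

end Skewside

section Count
variable {T : Type*} [NonUnitalRing T]

lemma countP_mul_le_sum (t₀ : ℕ) : ∀ js : List ℕ,
    cnt (fun j => t₀ < j) js * (t₀ + 1) ≤ js.sum := by
  intro js
  induction js with
  | nil => simp
  | cons j t ih =>
    rw [cnt_cons, List.sum_cons]
    by_cases hj : t₀ < j
    · rw [if_pos hj, Nat.add_mul, one_mul]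
      omega
    · rw [if_neg hj, Nat.add_zero]
      omega

lemma forall₂_mem_left {α β : Type*} {r : α → β → Prop} :
    ∀ {cs : List α} {js : List β}, List.Forall₂ r cs js → ∀ c ∈ cs, ∃ j ∈ js, r c j := by
  intro cs js h
  induction h with
  | nil => simp
  | cons hr _ ih =>
    intro c hc
    rcases List.mem_cons.mp hc with rfl | hc
    · exact ⟨_, by simp, hr⟩
    · obtain ⟨j, hj, hcj⟩ := ih c hc
      exact ⟨j, by simp [hj], hcj⟩

end Count

section ZZ
variable {R : Type*} [NonUnitalRing R]
variable {σ : R ≃+* R} {δ : R → R} {m₀ : ℕ} {F : Set R}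

lemma regroup {I : TwoSidedIdeal R} {p t₀ : ℕ} (hp : 0 < p)
    (hblock : ∀ gs : List R, gs.length = p → (∀ c ∈ gs, c ∈ Efam σ δ m₀ F t₀) → lprod gs ∈ I) :
    ∀ (q : ℕ) (cs : List R) (js : List ℕ),
      List.Forall₂ (fun c jj => c ∈ Efam σ δ m₀ F jj) cs js → q * p ≤ cs.length →
      ∃ l' : List R, l' ≠ [] ∧ lprod cs = lprod l' ∧
        q ≤ cnt (fun z => z ∈ I) l' + cnt (fun j => t₀ < j) js := by
  intro q
  induction q with
  | zero =>
    intro cs js hfa _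
    rcases eq_or_ne cs [] with rfl | hne
    · exact ⟨[0], by simp, by simp, by simp⟩
    · exact ⟨cs, hne, rfl, by omega⟩
  | succ q ih =>
    intro cs js hfa hlen
    have hlenjs : js.length = cs.length := (hfa.length_eq).symm
    set B := cs.take p with hB
    set rest := cs.drop p with hrest
    set jB := js.take p with hjB
    set jrest := js.drop p with hjrest
    have hlen' : p ≤ cs.length := le_trans (by nlinarith) hlen
    have hBlen : B.length = p := by
      rw [hB, List.length_take]
      omega
    have hBne : B ≠ [] := by
      rw [← List.length_pos_iff_ne_nil, hBlen]; omega
    have hfaB : List.Forall₂ (fun c jj => c ∈ Efam σ δ m₀ F jj) B jB :=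
      List.forall₂_take p hfa
    have hfarest : List.Forall₂ (fun c jj => c ∈ Efam σ δ m₀ F jj) rest jrest :=
      List.forall₂_drop p hfa
    have hcs : cs = B ++ rest := (List.take_append_drop p cs).symm
    have hjs : js = jB ++ jrest := (List.take_append_drop p js).symm
    have hcount : cnt (fun j => t₀ < j) js =
        cnt (fun j => t₀ < j) jB + cnt (fun j => t₀ < j) jrest := by
      rw [hjs, cnt_append]
    obtain ⟨l'r, hl'ne, hl'eq, hl'count⟩ := ih rest jrest hfarest (by
      rw [hrest, List.length_drop]
      have h1 : (q+1)*p = q*p + p := by ring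
      omega)
    by_cases hgood : ∀ j ∈ jB, ¬ (t₀ < j)
    · -- first block entirely good : its product lies in I
      have hBI : lprod B ∈ I := by
        refine hblock B hBlen ?_
        intro c hc
        obtain ⟨j, hj, hcj⟩ := forall₂_mem_left hfaB c hc
        exact Efam_mono (by have := hgood j hj; omega) hcj
      rcases eq_or_ne rest [] with hr0 | hrne
      · -- then cs = B, and q = 0
        have hq : q = 0 := by
          have : cs.length = p := by
            rw [hcs, hr0]; simpa using hBlen
          nlinarith
        refine ⟨[lprod B], by simp, by rw [hcs, hr0, List.append_nil, lprod_singleton], ?_⟩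
        have : (0 : ℕ) < cnt (fun z => z ∈ I) [lprod B] := by
          simp [cnt_cons, hBI]
        omega
      · refine ⟨lprod B :: l'r, by simp, ?_, ?_⟩
        · rw [hcs, lprod_append hBne hrne, hl'eq, lprod_cons _ hl'ne]
        · rw [cnt_cons, if_pos hBI]
          rw [hcount] at *
          omega
    · -- some bad exponent in the first block
      push_neg at hgood
      have hbadB : 1 ≤ cnt (fun j => t₀ < j) jB := by
        obtain ⟨j, hj, hjt⟩ := hgood
        exact cnt_pos _ hj hjt
      rcases eq_or_ne rest [] with hr0 | hrne
      · have hq : q = 0 := by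
          have : cs.length = p := by
            rw [hcs, hr0]; simpa using hBlen
          nlinarith
        refine ⟨cs, by rw [hcs]; simp [hBne], rfl, by omega⟩
      · refine ⟨B ++ l'r, by simp [hBne], ?_, ?_⟩
        · rw [hcs, lprod_append hBne hrne, hl'eq, lprod_append hBne hl'ne]
        · rw [cnt_append]
          omega

end ZZ

section Join
variable {T : Type*} [NonUnitalRing T]

lemma flatten_ne_nil {yss : List (List T)} (h : yss ≠ []) (hparts : ∀ ys ∈ yss, ys ≠ []) :
    yss.flatten ≠ [] := by
  obtain ⟨ys, t, rfl⟩ := List.exists_cons_of_ne_nil h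
  have h1 := hparts ys (by simp)
  simp only [List.flatten_cons, ne_eq, List.append_eq_nil_iff]
  tauto

lemma lprod_flatten : ∀ {yss : List (List T)}, yss ≠ [] → (∀ ys ∈ yss, ys ≠ []) →
    lprod (yss.map lprod) = lprod yss.flatten := by
  intro yss
  induction yss with
  | nil => simp
  | cons ys t ih =>
    intro _ hparts
    have hysne : ys ≠ [] := hparts ys (by simp)
    rcases eq_or_ne t [] with rfl | htne
    · simp
    · have htfne : t.flatten ≠ [] := flatten_ne_nil htne (fun z hz => hparts z (by simp [hz]))
      rw [List.map_cons, List.flatten_cons,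
        lprod_cons _ (by simp [htne]), ih htne (fun z hz => hparts z (by simp [hz])),
        lprod_append hysne htfne]

lemma length_le_flatten_length : ∀ (yss : List (List T)), (∀ ys ∈ yss, ys ≠ []) →
    yss.length ≤ yss.flatten.length := by
  intro yss
  induction yss with
  | nil => simp
  | cons ys t ih =>
    intro hparts
    have h1 : 0 < ys.length := List.length_pos_of_ne_nil (hparts ys (by simp))
    have h2 := ih (fun z hz => hparts z (by simp [hz]))
    simp only [List.length_cons, List.flatten_cons, List.length_append]
    omega

end Join

end Skew13

open Skew13

/-- Let `R` be a (possibly non-unital) `K`-algebra with `R ^ n ⊆ W(R)` for some `n > 1`, where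
`W(R)` is the Wedderburn radical (the sum of all nilpotent two-sided ideals) of `R`, let `σ` be
a `K`-algebra automorphism of `R` of finite order and `δ` a `σ`-derivation.  Then, in (any copy
of) the skew polynomial ring `R[x; σ, δ]`, the ideal `R[x; σ, δ]^*` of finite sums
`r₀ + r₁ x + ⋯ + r_m x^m` with `rᵢ ∈ R` is locally nilpotent: every finite subset of it
generates a nilpotent subring. -/
theorem stmt13 {K R S : Type*} [CommRing K] [NonUnitalRing R]
    [Module K R] [IsScalarTower K R R] [SMulCommClass K R R] [Ring S]
    (σ : R ≃+* R) (hσK : ∀ (c : K) (r : R), σ (c • r) = c • σ r)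
    (hord : ∃ m : ℕ, 0 < m ∧ σ ^ m = 1)
    (δ : R → R)
    (hδadd : ∀ a b, δ (a + b) = δ a + δ b)
    (hδK : ∀ (c : K) (r : R), δ (c • r) = c • δ r)
    (hδmul : ∀ a b, δ (a * b) = δ a * b + σ a * δ b)
    (n : ℕ)
    (hW : ∀ g : Fin (n + 2) → R, finProd g ∈
      sSup {I : TwoSidedIdeal R | ∃ m : ℕ,
        ∀ g' : Fin (m + 1) → R, (∀ i, g' i ∈ I) → finProd g' = 0})
    (f : R →ₙ+* S) (x : S)
    (hrel : ∀ r, x * f r = f (σ r) * x + f (δ r)) :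
    ∀ s : Finset S,
      (↑s : Set S) ⊆ {y : S | ∃ a : ℕ →₀ R, y = a.sum fun m r => f r * x ^ m} →
      ∃ m : ℕ, ∀ g : Fin (m + 1) → S,
        (∀ i, g i ∈ NonUnitalSubring.closure (s : Set S)) → finProd g = 0 := by
  classical
  intro s hs
  obtain ⟨m₀, hm₀, hσm⟩ := hord
  -- choose representations of the elements of `s`
  have hrep : ∀ y : S, y ∈ s → ∃ a : ℕ →₀ R, y = a.sum fun m r => f r * x ^ m :=
    fun y hy => hs hy
  choose rep hrepeq using hrep
  -- the finite set of coefficients and the degree bound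
  set F : Set R := ⋃ y : {y // y ∈ s}, ↑((rep y.1 y.2).support.image (rep y.1 y.2)) with hF
  have hFfin : F.Finite :=
    Set.finite_iUnion fun y => (((rep y.1 y.2).support.image (rep y.1 y.2))).finite_toSet
  set d : ℕ := s.attach.sup (fun y => (rep y.1 y.2).support.sup id) with hd
  -- every element of `s` is a `ℤ`-combination of admissible monomials
  have hA : ∀ y ∈ (s : Set S), y ∈ AddSubgroup.closure
      {v : S | ∃ r ∈ F, ∃ e' ≤ d, v = f r * x ^ e'} := by
    intro y hy
    rw [hrepeq y hy, Finsupp.sum]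
    refine AddSubgroup.sum_mem _ ?_
    intro m hm
    refine AddSubgroup.subset_closure ⟨rep y hy m, ?_, m, ?_, rfl⟩
    · rw [hF]
      exact Set.mem_iUnion.mpr ⟨⟨y, hy⟩, by
        simpa using Finset.mem_image.mpr ⟨m, hm, rfl⟩⟩
    · calc m = id m := rfl
        _ ≤ (rep y hy).support.sup id := Finset.le_sup hm
        _ ≤ d := by
            rw [hd]
            exact Finset.le_sup (f := fun y : {y // y ∈ s} => (rep y.1 y.2).support.sup id)
              (Finset.mem_attach s ⟨y, hy⟩)
  -- the threshold and the finite set of products of `n+2` low-weight elements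
  set t₀ : ℕ := 2 * (n + 2) * (d + 1) - 1 with ht₀
  have ht₀1 : t₀ + 1 = 2 * (n + 2) * (d + 1) := by
    rw [ht₀]
    have h' : 0 < 2 * (n + 2) * (d + 1) := by positivity
    omega
  set G : Set R := Efam σ δ m₀ F t₀ with hG
  have hGfin : G.Finite := Efam_finite hFfin t₀
  set P : Set R := (fun g : Fin (n + 2) → R => lprod (List.ofFn g)) ''
    (Set.pi Set.univ (fun _ : Fin (n + 2) => G)) with hP
  have hPfin : P.Finite := Set.Finite.image _ (Set.Finite.pi fun _ => hGfin)
  have hPsSup : ∀ z ∈ P, z ∈ sSup (NilSet R) := by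
    rintro z ⟨g, hg, rfl⟩
    have := hW g
    rw [finProd_eq_lprod] at this
    exact this
  -- a common nilpotent ideal containing all these products
  obtain ⟨I, hInil, hPI⟩ : ∃ I ∈ NilSet R, ∀ z ∈ P, z ∈ I := by
    obtain ⟨I, h1, h2⟩ := exists_nil_of_finset hPfin.toFinset
      (fun z hz => hPsSup z (hPfin.mem_toFinset.mp hz))
    exact ⟨I, h1, fun z hz => h2 z (hPfin.mem_toFinset.mpr hz)⟩
  obtain ⟨N, hN⟩ := hInil
  have hblock : ∀ gs : List R, gs.length = n + 2 →
      (∀ c ∈ gs, c ∈ Efam σ δ m₀ F t₀) → lprod gs ∈ I := by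
    intro gs hlen hmem
    have h1 := lprod_ofFn_getD (p := n + 2) (by omega) gs hlen
    refine hPI _ ⟨fun i : Fin (n + 2) => gs.getD i 0, ?_, (congrArg lprod h1).symm⟩
    intro i _
    show gs.getD i 0 ∈ G
    rw [List.getD_eq_getElem gs 0 (by omega)]
    exact hmem _ (List.getElem_mem _)
  set L₀ : ℕ := 2 * (n + 2) * (N + 1) with hL₀
  -- vanishing of long admissible coefficient products
  have hvanish : ∀ (cs : List R) (js : List ℕ),
      List.Forall₂ (fun c jj => c ∈ Efam σ δ m₀ F jj) cs js →
      js.sum ≤ cs.length * d → L₀ ≤ cs.length → lprod cs = 0 := by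
    intro cs js hfa hsum hlen
    set L := cs.length with hL
    set q : ℕ := L / (n + 2) with hq
    obtain ⟨l', hl'ne, hl'eq, hl'count⟩ := regroup (I := I) (by omega) hblock q cs js hfa
      (by rw [hq]; exact Nat.div_mul_le_self L (n + 2))
    set bad := cnt (fun j => t₀ < j) js with hbad
    have h1 : bad * (t₀ + 1) ≤ js.sum := countP_mul_le_sum t₀ js
    have h2 : bad * (2 * (n + 2)) * (d + 1) ≤ L * (d + 1) := by
      rw [ht₀1] at h1
      calc bad * (2 * (n + 2)) * (d + 1) = bad * (2 * (n + 2) * (d + 1)) := by ring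
        _ ≤ js.sum := h1
        _ ≤ L * d := hsum
        _ ≤ L * (d + 1) := Nat.mul_le_mul_left L (by omega)
    have h3 : bad * (2 * (n + 2)) ≤ L := Nat.le_of_mul_le_mul_right h2 (by omega)
    have hbadle : bad ≤ L / (2 * (n + 2)) := (Nat.le_div_iff_mul_le (by omega)).mpr h3
    have hNle : N + 1 ≤ L / (2 * (n + 2)) :=
      (Nat.le_div_iff_mul_le (by omega)).mpr (by rw [hL₀] at hlen; nlinarith)
    have hqge : 2 * (L / (2 * (n + 2))) ≤ q := by
      rw [hq]
      refine (Nat.le_div_iff_mul_le (by omega)).mpr ?_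
      calc 2 * (L / (2 * (n + 2))) * (n + 2) = (L / (2 * (n + 2))) * (2 * (n + 2)) := by ring
        _ ≤ L := Nat.div_mul_le_self L _
    have hcnt : N + 1 ≤ cnt (fun z => z ∈ I) l' := by omega
    rw [hl'eq]
    exact nil_count hN l' hcnt
  -- vanishing of long products of elements of `s`
  have hsprod : ∀ ys : List S, ys ≠ [] → (∀ y ∈ ys, y ∈ (s : Set S)) →
      L₀ ≤ ys.length → lprod ys = 0 := by
    intro ys hne hmem hlen
    have h1 := prod_mem_closure_Mon hm₀ hσm hrel hA ys hne hmem
    have h2 : Mon f x σ δ m₀ F ys.length (ys.length * d) ⊆ {(0 : S)} := by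
      rintro u ⟨cs, js, e, hcslen, hfa, hbud, rfl⟩
      have h3 : lprod cs = 0 := hvanish cs js hfa (by rw [hcslen]; omega) (by omega)
      simp [h3]
    have := AddSubgroup.closure_mono h2 h1
    simpa [AddSubgroup.closure_singleton_zero] using this
  -- the additive subgroup generated by nonempty products of elements of `s`
  set Gen : Set S := {z | ∃ l : List S, l ≠ [] ∧ (∀ y ∈ l, y ∈ (s : Set S)) ∧ z = lprod l}
    with hGen
  set A : AddSubgroup S := AddSubgroup.closure Gen with hA'
  have hmul : ∀ {a b : S}, a ∈ A → b ∈ A → a * b ∈ A := by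
    intro a b ha hb
    refine bilin_closure ha hb ?_
    rintro u ⟨l₁, h₁ne, h₁mem, rfl⟩ v ⟨l₂, h₂ne, h₂mem, rfl⟩
    refine AddSubgroup.subset_closure ⟨l₁ ++ l₂, by simp [h₁ne], ?_, ?_⟩
    · intro y hy
      rcases List.mem_append.mp hy with hy | hy
      · exact h₁mem y hy
      · exact h₂mem y hy
    · rw [lprod_append h₁ne h₂ne]
  set NR : NonUnitalSubring S :=
    { carrier := A
      zero_mem' := A.zero_mem
      add_mem' := fun ha hb => A.add_mem ha hb
      neg_mem' := fun ha => A.neg_mem ha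
      mul_mem' := fun ha hb => hmul ha hb } with hNR
  have hcl : NonUnitalSubring.closure (s : Set S) ≤ NR := by
    rw [NonUnitalSubring.closure_le]
    intro y hy
    exact AddSubgroup.subset_closure ⟨[y], by simp, by simpa using hy, rfl⟩
  -- conclusion
  refine ⟨L₀ - 1, fun g hg => ?_⟩
  have hL₀pos : 1 ≤ L₀ := by
    have h' : 0 < L₀ := by positivity
    omega
  have hlen : (L₀ - 1) + 1 = L₀ := by omega
  set l : List S := List.ofFn g with hl
  have hlmem : ∀ z ∈ l, z ∈ A := by
    intro z hz
    obtain ⟨i, rfl⟩ := List.mem_ofFn.mp hz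
    exact hcl (hg i)
  have h1 := lprod_mem_closure (X := Gen) l (by
      rw [hl, ← List.length_pos_iff_ne_nil, List.length_ofFn]; omega) hlmem
  have h2 : {z : S | ∃ l' : List S, l'.length = l.length ∧ (∀ y ∈ l', y ∈ Gen) ∧
      z = lprod l'} ⊆ {(0 : S)} := by
    rintro z ⟨l', hlen', hl'mem, rfl⟩
    obtain ⟨yss, rfl, hyss⟩ : ∃ yss : List (List S), l' = yss.map lprod ∧
        ∀ ys ∈ yss, ys ≠ [] ∧ ∀ y ∈ ys, y ∈ (s : Set S) := by
      clear hlen'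
      induction l' with
      | nil => exact ⟨[], rfl, by simp⟩
      | cons a t ih =>
        obtain ⟨yss, rfl, hyss⟩ := ih (fun y hy => hl'mem y (by simp [hy]))
        obtain ⟨la, hlane, hlamem, rfl⟩ := hl'mem a (by simp)
        refine ⟨la :: yss, by simp, ?_⟩
        intro ys hys
        rcases List.mem_cons.mp hys with rfl | hys
        · exact ⟨hlane, hlamem⟩
        · exact hyss ys hys
    have hyssne : yss ≠ [] := by
      rintro rfl
      rw [hl] at hlen'
      simp only [List.map_nil, List.length_nil, List.length_ofFn] at hlen'
      omega
    have hparts : ∀ ys ∈ yss, ys ≠ [] := fun ys hys => (hyss ys hys).1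
    rw [lprod_flatten hyssne hparts]
    refine hsprod yss.flatten (flatten_ne_nil hyssne hparts) ?_ ?_
    · intro y hy
      obtain ⟨ys, hys, hy⟩ := List.mem_flatten.mp hy
      exact (hyss ys hys).2 y hy
    · calc L₀ = l.length := by rw [hl, List.length_ofFn]; omega
        _ = (yss.map lprod).length := hlen'.symm
        _ = yss.length := by simp
        _ ≤ yss.flatten.length := length_le_flatten_length yss hparts
  have h3 := AddSubgroup.closure_mono h2 h1
  have h4 : lprod l = 0 := by
    simpa [AddSubgroup.closure_singleton_zero] using h3
  rw [finProd_eq_lprod, ← hl, h4]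
end

section
/- Let d be a derivation of a ring R with kernel R^d, and let t ∈ ker d^2. Then for every r ∈ R^d, the commutator δ_t(r) = tr − rt lies in R^d, and δ_t is a derivation of the subring R^d. -/
/-!
Since `d` is a derivation, `d [t, r] = [d t, r] + [t, d r]`. For `r ∈ R^d` the second term
vanishes, and the first vanishes because `d t ∈ R^d` (as `d² t = 0`) and `R^d` is commutative.
The Leibniz rule for `δ_t` is the identity `[t, r s] = [t, r] s + r [t, s]`, valid in any ring.
-/

section Commutator

variable {R : Type*} [Ring R] {d : R → R}

theorem map_commutator_of_leibniz (hadd : ∀ x y, d (x + y) = d x + d y)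
    (hleib : ∀ x y, d (x * y) = d x * y + x * d y) (t r : R) :
    d (t * r - r * t) = (d t * r - r * d t) + (t * d r - d r * t) := by
  have hsub : d (t * r - r * t) = d (t * r) - d (r * t) := map_sub (AddMonoidHom.mk' d hadd) _ _
  rw [hsub, hleib, hleib]
  abel

end Commutator

/-- Let `d` be a derivation of a ring `R` with commutative kernel `R^d`, and let `t ∈ ker d²`.
Then for every `r ∈ R^d` the commutator `δ_t r = t * r - r * t` lies in `R^d`, and `δ_t`
satisfies the Leibniz rule on `R^d`, i.e. `δ_t` is a derivation of the subring `R^d`. -/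
theorem stmt16 {R : Type*} [Ring R] (d : R → R)
    (hadd : ∀ x y, d (x + y) = d x + d y)
    (hleib : ∀ x y, d (x * y) = d x * y + x * d y)
    (hcomm : ∀ x y : R, d x = 0 → d y = 0 → x * y = y * x)
    (t : R) (ht : d (d t) = 0) :
    (∀ r, d r = 0 → d (t * r - r * t) = 0) ∧
    (∀ r s : R, d r = 0 → d s = 0 →
      t * (r * s) - (r * s) * t = (t * r - r * t) * s + r * (t * s - s * t)) := by
  refine ⟨fun r hr => ?_, fun r s _ _ => by noncomm_ring⟩
  rw [map_commutator_of_leibniz hadd hleib, hcomm (d t) r ht hr, hr]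
  simp
end

section
/- Let R be an algebra over a field of characteristic zero with a surjective locally nilpotent derivation d such that R is generated as an algebra by R_1 = ker d^2 and R^d = ker d is commutative. If a, b ∈ J(R) satisfy d(a)b ∈ I and a d(b) ∈ I for an ideal I with d(I) ⊆ I and such that J(R) ∩ R^d ⊆ I, and d is surjective onto R, then ab ∈ I + (J(R) ∩ R^d)·R; consequently J(R)^2 is contained in the ideal of R generated by the prime radical of R^d. -/
/-!
For a locally nilpotent derivation `D` in characteristic zero, `exp (t D)` is a ring automorphism
for every scalar `t`, so it preserves the Jacobson radical `J`; as `exp (t D) x` is polynomial in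
`t` with coefficients `Dᵏ x / k!`, a Vandermonde argument gives `D J ⊆ J`.

An element `s` with `D s = 1` lets one integrate: `∑ₖ (-1)ᵏ sᵏ⁺¹ Dᵏ u / (k+1)!` is a primitive of
`u` lying in every left ideal that contains all `Dᵏ u`. So if `x ∈ J` and `D x ∈ I` for a
`D`-stable ideal `I ⊇ J ∩ ker D`, then `x` differs from an element of `I ∩ J` by a constant in `J`,
whence `x ∈ I`. Applied to `x = a b`, by induction on the nilpotency orders of `a` and `b`, this
gives `J² ⊆ I`.

If the constants commute, every constant `c ∈ J` is nilpotent: for `u (1 - s c) = 1`, the Leibniz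
rule gives `Dᵏ⁺¹ u (1 - s c) = (k + 1) Dᵏ u c`, and descending from `Dᴺ u = 0` yields `u cᴺ = 0`,
hence `cᴺ = 0`.
-/

open Finset Polynomial
open scoped Nat

section

variable {K R : Type*} [CommRing K] [Ring R] [Algebra K R]

structure IsDerivation (D : R →ₗ[K] R) : Prop where
  map_mul : ∀ x y, D (x * y) = D x * y + x * D y

structure IsLocallyNilpotentDerivation (D : R →ₗ[K] R) : Prop extends IsDerivation D where
  exists_pow_apply_eq_zero : ∀ x, ∃ n, (D ^ n) x = 0

namespace IsDerivation

variable {D : R →ₗ[K] R} (hD : IsDerivation D)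
include hD

theorem map_one_eq_zero : D 1 = 0 := by
  simpa using hD.map_mul 1 1

theorem pow_apply_mul (n : ℕ) (x y : R) :
    (D ^ n) (x * y) = ∑ ij ∈ antidiagonal n, n.choose ij.1 • ((D ^ ij.1) x * (D ^ ij.2) y) := by
  induction n with
  | zero => simp
  | succ n ih =>
    rw [sum_antidiagonal_choose_succ_nsmul (fun i j => (D ^ i) x * (D ^ j) y) n]
    simp only [pow_succ', Module.End.mul_apply, ih, map_sum, map_nsmul, hD.map_mul, nsmul_add,
      sum_add_distrib]
    rw [add_comm]
    congr 1
    refine sum_congr rfl fun ij hij => ?_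
    rw [Nat.choose_symm_of_eq_add (mem_antidiagonal.1 hij).symm]

theorem pow_succ_apply_mul_of_map_map_eq_zero {e : R} (he : D (D e) = 0) (n : ℕ) (x : R) :
    (D ^ (n + 1)) (x * e) = (D ^ (n + 1)) x * e + (n + 1) • ((D ^ n) x * D e) := by
  induction n with
  | zero => simp [hD.map_mul]
  | succ n ih =>
    rw [pow_succ', Module.End.mul_apply, ih, map_add, map_nsmul, hD.map_mul, hD.map_mul, he,
      mul_zero, add_zero, ← Module.End.mul_apply, ← pow_succ', ← Module.End.mul_apply D (D ^ n),
      ← pow_succ', add_assoc, succ_nsmul' _ (n + 1)]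

theorem map_pow_succ_of_map_eq_one {s : R} (hs : D s = 1) (n : ℕ) :
    D (s ^ (n + 1)) = (n + 1) • s ^ n := by
  induction n with
  | zero => simpa using hs
  | succ n ih =>
    rw [pow_succ, hD.map_mul, ih, hs, mul_one, smul_mul_assoc, ← pow_succ, succ_nsmul _ (n + 1)]

theorem map_mem_span {S : Set R} (hS : ∀ x ∈ S, D x ∈ TwoSidedIdeal.span S) :
    ∀ x ∈ TwoSidedIdeal.span S, D x ∈ TwoSidedIdeal.span S := by
  intro x hx
  induction hx using TwoSidedIdeal.span_induction with
  | mem x hx => exact hS x hx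
  | zero => simp
  | add x y _ _ hx hy => rw [map_add]; exact add_mem hx hy
  | neg x _ hx => rw [map_neg]; exact neg_mem hx
  | left_absorb a x hx' hx =>
    rw [hD.map_mul]
    exact add_mem (TwoSidedIdeal.mul_mem_left _ _ _ hx') (TwoSidedIdeal.mul_mem_left _ _ _ hx)
  | right_absorb b x hx' hx =>
    rw [hD.map_mul]
    exact add_mem (TwoSidedIdeal.mul_mem_right _ _ _ hx) (TwoSidedIdeal.mul_mem_right _ _ _ hx')

end IsDerivation

end

section Vandermonde

variable {K : Type*} [Field K]

theorem Submodule.mem_of_forall_sum_pow_smul_mem_s17 {M : Type*} [AddCommGroup M] [Module K M]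
    (L : Submodule K M) {n : ℕ} {f : Fin n → K} (hf : Function.Injective f) {v : Fin n → M}
    (h : ∀ j, ∑ i : Fin n, f j ^ (i : ℕ) • v i ∈ L) (i : Fin n) : v i ∈ L := by
  rw [← Submodule.Quotient.mk_eq_zero, ← L.mkQ_apply]
  refine (Module.forall_dual_apply_eq_zero_iff K _).mp fun g => ?_
  have hg := Matrix.eq_zero_of_forall_index_sum_pow_mul_eq_zero hf
    (v := fun i => g (L.mkQ (v i))) fun j => by
      have hj : L.mkQ (∑ i : Fin n, f j ^ (i : ℕ) • v i) = 0 := by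
        rw [← LinearMap.mem_ker, Submodule.ker_mkQ]
        exact h j
      simpa only [map_sum, map_smul, smul_eq_mul, map_zero] using congrArg g hj
  exact congrFun hg i

variable {R : Type*} [Ring R] [Algebra K R]

theorem Polynomial.eval_algebraMap_eq_sum {p : R[X]} {n : ℕ} (hn : p.natDegree < n) (t : K) :
    p.eval (algebraMap K R t) = ∑ k ∈ range n, t ^ k • p.coeff k := by
  simp only [eval_eq_sum_range' hn, ← map_pow, ← Algebra.commutes, Algebra.smul_def]

theorem Polynomial.coeff_mem_of_forall_eval_algebraMap_mem [Infinite K] (L : Submodule K R)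
    {p : R[X]} (h : ∀ t : K, p.eval (algebraMap K R t) ∈ L) (k : ℕ) : p.coeff k ∈ L := by
  rcases lt_or_ge p.natDegree k with hk | hk
  · rw [coeff_eq_zero_of_natDegree_lt hk]
    exact L.zero_mem
  · let f : Fin (p.natDegree + 1) → K := fun j => Infinite.natEmbedding K j
    have hf : Function.Injective f := (Infinite.natEmbedding K).injective.comp Fin.val_injective
    refine L.mem_of_forall_sum_pow_smul_mem_s17 hf (v := fun i => p.coeff i) (fun j => ?_)
      ⟨k, Nat.lt_succ_of_le hk⟩
    simpa [eval_algebraMap_eq_sum (Nat.lt_succ_self _), Fin.sum_univ_eq_sum_range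
      (fun i => f j ^ i • p.coeff i)] using h (f j)

end Vandermonde

theorem inv_factorial_add_mul_choose {K : Type*} [Field K] [CharZero K] (i j : ℕ) :
    ((i + j)! : K)⁻¹ * ((i + j).choose i : K) = (i ! : K)⁻¹ * (j ! : K)⁻¹ := by
  have h : ((i + j).choose j : K) ≠ 0 :=
    Nat.cast_ne_zero.2 (Nat.choose_pos (Nat.le_add_left j i)).ne'
  rw [← Nat.add_choose_mul_factorial_mul_factorial i j, Nat.choose_symm_add]
  push_cast
  field_simp

namespace IsLocallyNilpotentDerivation

variable {K R : Type*} [Field K] [Ring R] [Algebra K R] {D : R →ₗ[K] R}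
  (hD : IsLocallyNilpotentDerivation D)

/-- `exp (X D) x`, as a polynomial in `X`. -/
noncomputable def expPoly (x : R) : R[X] :=
  ∑ k ∈ range (hD.exists_pow_apply_eq_zero x).choose, monomial k ((k ! : K)⁻¹ • (D ^ k) x)

include hD

theorem coeff_expPoly (x : R) (k : ℕ) : (hD.expPoly x).coeff k = (k ! : K)⁻¹ • (D ^ k) x := by
  simp only [expPoly, finsetSum_coeff, coeff_monomial, sum_ite_eq', mem_range]
  split_ifs with hk
  · rfl
  · rw [Module.End.pow_map_zero_of_le (not_lt.1 hk) (hD.exists_pow_apply_eq_zero x).choose_spec,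
      smul_zero]

theorem natDegree_expPoly_le {x : R} {n : ℕ} (hn : (D ^ n) x = 0) : (hD.expPoly x).natDegree ≤ n :=
  natDegree_le_iff_coeff_eq_zero.2 fun m hm => by
    rw [coeff_expPoly, Module.End.pow_map_zero_of_le hm.le hn, smul_zero]

variable [CharZero K]

noncomputable def expPolyHom : R →+* R[X] where
  toFun := hD.expPoly
  map_one' := by
    ext k
    rw [coeff_expPoly, coeff_one]
    rcases k with _ | k
    · simp
    · rw [pow_succ, Module.End.mul_apply, hD.map_one_eq_zero, map_zero, smul_zero,
        if_neg k.succ_ne_zero]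
  map_mul' x y := by
    ext n
    rw [coeff_mul, coeff_expPoly, hD.pow_apply_mul, smul_sum]
    refine sum_congr rfl fun ij hij => ?_
    obtain rfl := mem_antidiagonal.1 hij
    rw [coeff_expPoly, coeff_expPoly, smul_mul_smul_comm, ← Nat.cast_smul_eq_nsmul K, smul_smul,
      inv_factorial_add_mul_choose]
  map_zero' := by
    ext k
    simp [coeff_expPoly]
  map_add' x y := by
    ext k
    simp [coeff_expPoly, smul_add]

noncomputable def exp (t : K) : R →+* R :=
  (eval₂RingHom' (RingHom.id R) (algebraMap K R t) fun a => (Algebra.commutes t a).symm).comp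
    hD.expPolyHom

theorem exp_apply (t : K) (x : R) : hD.exp t x = (hD.expPoly x).eval (algebraMap K R t) := rfl

theorem exp_apply_eq_sum (t : K) {x : R} {n : ℕ} (hn : (D ^ n) x = 0) :
    hD.exp t x = ∑ k ∈ range (n + 1), t ^ k • ((k ! : K)⁻¹ • (D ^ k) x) := by
  simp only [exp_apply, eval_algebraMap_eq_sum (Nat.lt_succ_of_le (hD.natDegree_expPoly_le hn)),
    coeff_expPoly]

theorem map_exp_apply (t : K) (x : R) : D (hD.exp t x) = hD.exp t (D x) := by
  obtain ⟨n, hn⟩ := hD.exists_pow_apply_eq_zero x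
  have hn' : (D ^ n) (D x) = 0 := by
    rw [← Module.End.mul_apply, ← pow_succ, pow_succ', Module.End.mul_apply, hn, map_zero]
  simp only [hD.exp_apply_eq_sum t hn, hD.exp_apply_eq_sum t hn', map_sum, map_smul,
    ← Module.End.mul_apply, ← pow_succ, ← pow_succ']

theorem pow_apply_exp_apply (t : K) (n : ℕ) (x : R) :
    (D ^ n) (hD.exp t x) = hD.exp t ((D ^ n) x) := by
  induction n with
  | zero => rfl
  | succ n ih => rw [pow_succ', Module.End.mul_apply, ih, map_exp_apply, Module.End.mul_apply]

theorem exp_apply_of_map_eq_zero (t : K) {y : R} (hy : D y = 0) : hD.exp t y = y := by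
  rw [hD.exp_apply_eq_sum t (n := 1) (by rwa [pow_one])]
  simp [sum_range_succ, hy]

theorem exp_surjective (t : K) : Function.Surjective (hD.exp t) := by
  intro r
  obtain ⟨n, hn⟩ := hD.exists_pow_apply_eq_zero r
  induction n generalizing r with
  | zero => exact ⟨0, by simpa using hn.symm⟩
  | succ n ih =>
    have hconst : D ((D ^ n) r) = 0 := by rwa [← Module.End.mul_apply, ← pow_succ']
    obtain ⟨w, hw⟩ := ih (hD.exp t r - r) (by
      rw [map_sub, pow_apply_exp_apply, hD.exp_apply_of_map_eq_zero t hconst, sub_self])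
    exact ⟨r - w, by rw [map_sub, hw, sub_sub_cancel]⟩

theorem exp_mem_jacobson (t : K) {x : R} (hx : x ∈ Ring.jacobson R) :
    hD.exp t x ∈ Ring.jacobson R :=
  haveI : RingHomSurjective (hD.exp t) := ⟨hD.exp_surjective t⟩
  Ring.le_comap_jacobson (hD.exp t) hx

theorem pow_apply_mem_jacobson {x : R} (hx : x ∈ Ring.jacobson R) (k : ℕ) :
    (D ^ k) x ∈ Ring.jacobson R := by
  have hk := coeff_mem_of_forall_eval_algebraMap_mem ((Ring.jacobson R).restrictScalars K)
    (p := hD.expPoly x) (fun t => hD.exp_mem_jacobson t hx) k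
  rw [Submodule.restrictScalars_mem, coeff_expPoly] at hk
  simpa [smul_inv_smul₀ (Nat.cast_ne_zero.2 k.factorial_ne_zero : (k ! : K) ≠ 0)] using
    Submodule.smul_of_tower_mem _ (k ! : K) hk

end IsLocallyNilpotentDerivation

section Antiderivative

variable {K R : Type*} [Field K] [CharZero K] [Ring R] [Algebra K R]

noncomputable def antideriv (D : R →ₗ[K] R) (s : R) (n : ℕ) (u : R) : R :=
  ∑ k ∈ range n, ((-1) ^ k * ((k + 1)! : K)⁻¹) • (s ^ (k + 1) * (D ^ k) u)

omit [CharZero K] in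
theorem antideriv_mem (D : R →ₗ[K] R) (s : R) (n : ℕ) {u : R} {L : Ideal R}
    (h : ∀ k, (D ^ k) u ∈ L) : antideriv D s n u ∈ L :=
  sum_mem fun k _ => Submodule.smul_of_tower_mem _ _ (L.mul_mem_left _ (h k))

theorem IsDerivation.map_antideriv {D : R →ₗ[K] R} (hD : IsDerivation D) {s u : R} {n : ℕ}
    (hs : D s = 1) (hu : (D ^ n) u = 0) : D (antideriv D s n u) = u := by
  let f : ℕ → R := fun k => ((-1) ^ k * (k ! : K)⁻¹) • (s ^ k * (D ^ k) u)
  have hterm (k : ℕ) :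
      D (((-1) ^ k * ((k + 1)! : K)⁻¹) • (s ^ (k + 1) * (D ^ k) u)) = f k - f (k + 1) := by
    have h₁ : (-1) ^ k * ((k + 1)! : K)⁻¹ * ((k + 1 : ℕ) : K) = (-1) ^ k * (k ! : K)⁻¹ := by
      rw [Nat.factorial_succ]
      push_cast
      field_simp
    have h₂ : (-1) ^ k * ((k + 1)! : K)⁻¹ = -((-1) ^ (k + 1) * ((k + 1)! : K)⁻¹) := by ring
    rw [map_smul, hD.map_mul, hD.map_pow_succ_of_map_eq_one hs, smul_mul_assoc,
      ← Nat.cast_smul_eq_nsmul K, smul_add, smul_smul, h₁, ← Module.End.mul_apply, ← pow_succ',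
      h₂, neg_smul, ← sub_eq_add_neg]
  rw [antideriv, map_sum, sum_congr rfl fun k _ => hterm k, sum_range_sub']
  simp [f, hu]

end Antiderivative

theorem mul_pow_succ_eq_of_commute {R : Type*} [Ring R] {s c : R}
    (h : Commute (s * c - c * s) c) (n : ℕ) :
    s * c ^ (n + 1) = c ^ (n + 1) * s + (n + 1) • (c ^ n * (s * c - c * s)) := by
  set γ := s * c - c * s with hγ
  have hsc : s * c = c * s + γ := by rw [hγ]; abel
  induction n with
  | zero => simp [hsc]
  | succ n ih =>
    calc s * c ^ (n + 2) = s * c ^ (n + 1) * c := by rw [mul_assoc, ← pow_succ]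
      _ = c ^ (n + 1) * (s * c) + (n + 1) • (c ^ (n + 1) * γ) := by
        rw [ih, add_mul, smul_mul_assoc, mul_assoc (c ^ n), h.eq, ← mul_assoc, ← pow_succ,
          mul_assoc]
      _ = c ^ (n + 2) * s + (n + 2) • (c ^ (n + 1) * γ) := by
        rw [hsc, mul_add, ← mul_assoc, ← pow_succ, succ_nsmul' _ (n + 1), add_assoc]

theorem mul_one_sub_mul_mul_pow_eq_zero {R : Type*} [Ring R] {s c x : R}
    (h : Commute (s * c - c * s) c) {j : ℕ} (hx : x * c ^ j = 0) :
    x * (1 - s * c) * c ^ j = 0 := by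
  calc x * (1 - s * c) * c ^ j = x * c ^ j - x * (s * c ^ (j + 1)) := by
        rw [pow_succ' c j]; noncomm_ring
    _ = x * c ^ j - (x * c ^ j * (c * s) + (j + 1) • (x * c ^ j * (s * c - c * s))) := by
        rw [mul_pow_succ_eq_of_commute h, mul_add, mul_smul_comm, pow_succ, ← mul_assoc,
          ← mul_assoc, mul_assoc (x * c ^ j), ← mul_assoc x]
    _ = 0 := by rw [hx]; simp

namespace IsLocallyNilpotentDerivation

variable {K R : Type*} [Field K] [CharZero K] [Ring R] [Algebra K R] {D : R →ₗ[K] R}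
  (hD : IsLocallyNilpotentDerivation D) {s : R} (hs : D s = 1)
include hD hs

theorem mem_of_map_mem {I : TwoSidedIdeal R} (hI : ∀ u ∈ I, D u ∈ I)
    (hJI : ∀ c ∈ Ring.jacobson R, D c = 0 → c ∈ I) {x : R} (hx : x ∈ Ring.jacobson R)
    (hDx : D x ∈ I) : x ∈ I := by
  obtain ⟨n, hn⟩ := hD.exists_pow_apply_eq_zero (D x)
  have hvI : antideriv D s n (D x) ∈ I := by
    refine TwoSidedIdeal.mem_asIdeal.1 (antideriv_mem D s n fun k => ?_)
    rw [TwoSidedIdeal.mem_asIdeal, Module.End.pow_apply]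
    exact Set.MapsTo.iterate (fun u hu => hI u hu) k hDx
  have hvJ : antideriv D s n (D x) ∈ Ring.jacobson R := antideriv_mem D s n fun k => by
    rw [← Module.End.mul_apply, ← pow_succ]
    exact hD.pow_apply_mem_jacobson hx _
  have hxv : x - antideriv D s n (D x) ∈ I :=
    hJI _ (sub_mem hx hvJ) (by rw [map_sub, hD.map_antideriv hs hn, sub_self])
  simpa using add_mem hxv hvI

theorem mul_mem_of_mem_jacobson {I : TwoSidedIdeal R} (hI : ∀ u ∈ I, D u ∈ I)
    (hJI : ∀ c ∈ Ring.jacobson R, D c = 0 → c ∈ I) {a b : R} (ha : a ∈ Ring.jacobson R)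
    (hb : b ∈ Ring.jacobson R) : a * b ∈ I := by
  obtain ⟨i, hi⟩ := hD.exists_pow_apply_eq_zero a
  obtain ⟨j, hj⟩ := hD.exists_pow_apply_eq_zero b
  induction i generalizing a b j with
  | zero => simp [show a = 0 by simpa using hi]
  | succ i ihi =>
    induction j generalizing b with
    | zero => simp [show b = 0 by simpa using hj]
    | succ j ihj =>
      refine hD.mem_of_map_mem hs hI hJI (Ideal.mul_mem_left _ a hb) ?_
      rw [hD.map_mul]
      exact add_mem (ihi (by simpa using hD.pow_apply_mem_jacobson ha 1) hb
          (by rwa [← Module.End.mul_apply, ← pow_succ]) (j := j + 1) hj)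
        (ihj (by simpa using hD.pow_apply_mem_jacobson hb 1)
          (by rwa [← Module.End.mul_apply, ← pow_succ]))

theorem isNilpotent_of_mem_jacobson (hcomm : ∀ x y, D x = 0 → D y = 0 → Commute x y) {c : R}
    (hc : c ∈ Ring.jacobson R) (hDc : D c = 0) : IsNilpotent c := by
  obtain ⟨u, hu⟩ : ∃ u, u * (1 - s * c) = 1 := by
    obtain ⟨u, hu⟩ := Ideal.exists_mul_add_sub_mem_of_mem_jacobson (-(s * c))
      (by rw [Ideal.jacobson_bot]; exact neg_mem (Ideal.mul_mem_left _ s hc))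
    exact ⟨u, by simpa [sub_eq_zero, neg_add_eq_sub] using hu⟩
  have hγ : Commute (s * c - c * s) c := hcomm _ _ (by simp [hD.map_mul, hs, hDc]) hDc
  have hDe : D (1 - s * c) = -c := by simp [hD.map_mul, hs, hDc, hD.map_one_eq_zero]
  have hrel (k : ℕ) : (D ^ (k + 1)) u * (1 - s * c) = (k + 1) • ((D ^ k) u * c) := by
    have h := hD.pow_succ_apply_mul_of_map_map_eq_zero (by rw [hDe, map_neg, hDc, neg_zero]) k u
    rwa [hu, pow_succ, Module.End.mul_apply, hD.map_one_eq_zero, map_zero, hDe, mul_neg,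
      smul_neg, ← sub_eq_add_neg, eq_comm, sub_eq_zero] at h
  have hstep (k j : ℕ) (h : (D ^ (k + 1)) u * c ^ j = 0) : (D ^ k) u * c ^ (j + 1) = 0 := by
    have h₀ := mul_one_sub_mul_mul_pow_eq_zero hγ h
    rw [hrel, smul_mul_assoc, mul_assoc, ← pow_succ', ← Nat.cast_smul_eq_nsmul K] at h₀
    exact (smul_eq_zero.1 h₀).resolve_left (Nat.cast_ne_zero.2 k.succ_ne_zero)
  have hdescend (n : ℕ) : ∀ m, (D ^ n) u * c ^ m = 0 → u * c ^ (n + m) = 0 := by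
    induction n with
    | zero => simp
    | succ n ih => intro m h; rw [add_assoc, add_comm 1 m]; exact ih _ (hstep n m h)
  obtain ⟨N, hN⟩ := hD.exists_pow_apply_eq_zero u
  refine ⟨N, ?_⟩
  have h := mul_one_sub_mul_mul_pow_eq_zero hγ (hdescend N 0 (by rw [hN, zero_mul]))
  rwa [hu, one_mul, add_zero] at h

end IsLocallyNilpotentDerivation

theorem stmt17_general {K R : Type*} [Field K] [CharZero K] [Ring R] [Algebra K R]
    (d : R → R)
    (hadd : ∀ x y, d (x + y) = d x + d y)
    (hsmul : ∀ (c : K) (x : R), d (c • x) = c • d x)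
    (hleib : ∀ x y, d (x * y) = d x * y + x * d y)
    (hln : ∀ r : R, ∃ n, d^[n] r = 0)
    (hsurj : Function.Surjective d)
    (hcomm : ∀ x y : R, d x = 0 → d y = 0 → x * y = y * x) :
    (∀ (I : TwoSidedIdeal R) (a b : R),
        a ∈ (⊥ : Ideal R).jacobson → b ∈ (⊥ : Ideal R).jacobson →
        d a * b ∈ I → a * d b ∈ I →
        (∀ u ∈ I, d u ∈ I) →
        (∀ c : R, c ∈ (⊥ : Ideal R).jacobson → d c = 0 → c ∈ I) →
        a * b ∈ AddSubgroup.closure ((I : Set R) ∪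
          {z : R | ∃ c r : R, c ∈ (⊥ : Ideal R).jacobson ∧ d c = 0 ∧ z = c * r})) ∧
    (∀ a b : R, a ∈ (⊥ : Ideal R).jacobson → b ∈ (⊥ : Ideal R).jacobson →
      a * b ∈ TwoSidedIdeal.span
        {p : R | d p = 0 ∧ ∃ n : ℕ, 0 < n ∧ p ^ n = 0}) := by
  let D : R →ₗ[K] R := ⟨⟨d, hadd⟩, hsmul⟩
  have hD : IsLocallyNilpotentDerivation D :=
    ⟨⟨hleib⟩, fun r => (hln r).imp fun n hn => by rwa [Module.End.pow_apply]⟩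
  obtain ⟨s, hs⟩ := hsurj 1
  simp only [Ideal.jacobson_bot]
  refine ⟨fun I a b ha hb hDa hDb hI hJI => ?_, fun a b ha hb => ?_⟩
  · refine AddSubgroup.subset_closure (Or.inl (hD.mem_of_map_mem hs hI hJI
      (Ideal.mul_mem_left _ a hb) ?_))
    rw [hD.map_mul]
    exact add_mem hDa hDb
  · refine hD.mul_mem_of_mem_jacobson hs
      (hD.map_mem_span fun p hp => by rw [show D p = 0 from hp.1]; exact zero_mem _)
      (fun c hc hDc => ?_) ha hb
    obtain ⟨n, hn⟩ := hD.isNilpotent_of_mem_jacobson hs hcomm hc hDc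
    exact TwoSidedIdeal.subset_span ⟨hDc, n + 1, n.succ_pos, by rw [pow_succ, hn, zero_mul]⟩

/-- Let `R` be an algebra over a field of characteristic zero with a surjective locally
nilpotent derivation `d` such that `R` is generated as an algebra by `ker d²` and `R^d = ker d`
is commutative.  Then: (1) if `a, b ∈ J(R)` satisfy `d a * b ∈ I` and `a * d b ∈ I` for an
ideal `I` with `d I ⊆ I` and `J(R) ∩ R^d ⊆ I`, then `a * b ∈ I + (J(R) ∩ R^d) · R`;
(2) consequently `J(R)²` is contained in the two-sided ideal of `R` generated by the prime
radical of `R^d` (the nilpotent constants of `d`). -/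
theorem stmt17 {K R : Type*} [Field K] [CharZero K] [Ring R] [Algebra K R]
    (d : R → R)
    (hadd : ∀ x y, d (x + y) = d x + d y)
    (hsmul : ∀ (c : K) (x : R), d (c • x) = c • d x)
    (hleib : ∀ x y, d (x * y) = d x * y + x * d y)
    (hln : ∀ r : R, ∃ n, d^[n] r = 0)
    (hsurj : Function.Surjective d)
    (hgen : Algebra.adjoin K {r : R | d (d r) = 0} = ⊤)
    (hcomm : ∀ x y : R, d x = 0 → d y = 0 → x * y = y * x) :
    (∀ (I : TwoSidedIdeal R) (a b : R),
        a ∈ (⊥ : Ideal R).jacobson → b ∈ (⊥ : Ideal R).jacobson →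
        d a * b ∈ I → a * d b ∈ I →
        (∀ u ∈ I, d u ∈ I) →
        (∀ c : R, c ∈ (⊥ : Ideal R).jacobson → d c = 0 → c ∈ I) →
        a * b ∈ AddSubgroup.closure ((I : Set R) ∪
          {z : R | ∃ c r : R, c ∈ (⊥ : Ideal R).jacobson ∧ d c = 0 ∧ z = c * r})) ∧
    (∀ a b : R, a ∈ (⊥ : Ideal R).jacobson → b ∈ (⊥ : Ideal R).jacobson →
      a * b ∈ TwoSidedIdeal.span
        {p : R | d p = 0 ∧ ∃ n : ℕ, 0 < n ∧ p ^ n = 0}) :=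
  stmt17_general d hadd hsmul hleib hln hsurj hcomm
end

section
/- Let R = R^d⟨T⟩ be generated over the commutative ring C = R^d by a set T of elements t with [t, C] ⊆ C (so each ad(t) restricts to a derivation of C). If P is the prime radical (nilradical) of C and P is stable under all the derivations ad(t)|_C for t ∈ T, and moreover the transfinite Wedderburn filtration of P is stable under these derivations, then the ideal of R generated by P is locally nilpotent. -/
namespace Stmt19Aux


open Ordinal in
theorem Pmono {C : Type*} [CommRing C] (P : Ordinal → Ideal C)
    (hsucc : ∀ α, P (α + 1) =
      sSup {J : Ideal C | P α ≤ J ∧ ∃ n : ℕ, 0 < n ∧ J ^ n ≤ P α})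
    (hlim : ∀ α : Ordinal, Order.IsSuccLimit α → P α = ⨆ β : {β : Ordinal // β < α}, P β) :
    ∀ α β, β ≤ α → P β ≤ P α := by
  intro α
  induction α using Ordinal.induction with
  | h α IH =>
    intro β hβ
    rcases eq_or_lt_of_le hβ with rfl | hlt
    · exact le_rfl
    rcases Ordinal.zero_or_succ_or_isSuccLimit α with rfl | ⟨a, rfl⟩ | hl
    · exact absurd hlt (not_lt_zero (a := β))
    · have hβa : β ≤ a := Order.lt_succ_iff.mp hlt
      have h1 : P a ≤ P (Order.succ a) := by
        rw [← Ordinal.add_one_eq_succ, hsucc]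
        exact le_sSup ⟨le_rfl, 1, one_pos, by simp⟩
      exact le_trans (IH a (Order.lt_succ a) β hβa) h1
    · rw [hlim α hl]
      exact le_trans (le_of_eq rfl) (le_iSup (fun γ : {γ : Ordinal // γ < α} => P γ.1) ⟨β, hlt⟩)

theorem fgNilpotent {C : Type*} [CommRing C] (P : Ordinal → Ideal C)
    (h0 : P 0 = ⊥)
    (hsucc : ∀ α, P (α + 1) =
      sSup {J : Ideal C | P α ≤ J ∧ ∃ n : ℕ, 0 < n ∧ J ^ n ≤ P α})
    (hlim : ∀ α : Ordinal, Order.IsSuccLimit α → P α = ⨆ β : {β : Ordinal // β < α}, P β) :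
    ∀ α (B : Ideal C), B.FG → B ≤ P α → ∃ M : ℕ, 0 < M ∧ B ^ M = ⊥ := by
  intro α
  induction α using Ordinal.induction with
  | h α IH =>
    intro B hfg hle
    rcases Ordinal.zero_or_succ_or_isSuccLimit α with rfl | ⟨a, rfl⟩ | hl
    · exact ⟨1, one_pos, by rw [pow_one]; exact le_bot_iff.mp (h0 ▸ hle)⟩
    · rw [← Ordinal.add_one_eq_succ, hsucc] at hle
      have hcomp := (Submodule.fg_iff_compact B).mp hfg
      have hdir : DirectedOn (· ≤ ·)
          {J : Ideal C | P a ≤ J ∧ ∃ n : ℕ, 0 < n ∧ J ^ n ≤ P a} := by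
        rintro J₁ ⟨hJ₁, n₁, hn₁, hJn₁⟩ J₂ ⟨hJ₂, n₂, hn₂, hJn₂⟩
        refine ⟨J₁ ⊔ J₂, ⟨le_trans hJ₁ le_sup_left, n₁ + n₂, by omega, ?_⟩,
          le_sup_left, le_sup_right⟩
        exact le_trans Ideal.sup_pow_add_le_pow_sup_pow
          (sup_le (le_trans (Ideal.pow_le_pow_right (le_refl n₁) |>.trans le_rfl) hJn₁)
            (le_trans le_rfl hJn₂))
      have hne : Set.Nonempty {J : Ideal C | P a ≤ J ∧ ∃ n : ℕ, 0 < n ∧ J ^ n ≤ P a} :=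
        ⟨P a, le_rfl, 1, one_pos, by simp⟩
      obtain ⟨J, ⟨hPJ, n, hn, hJn⟩, hBJ⟩ :=
        ((CompleteLattice.isCompactElement_iff_le_of_directed_sSup_le _ B).mp hcomp)
          _ hne hdir hle
      have hBn : B ^ n ≤ P a := le_trans (Ideal.pow_right_mono hBJ n) hJn
      obtain ⟨M, hM, hBM⟩ := IH a (Order.lt_succ a) (B ^ n) (Submodule.FG.pow hfg n) hBn
      exact ⟨n * M, Nat.mul_pos hn hM, by rw [pow_mul]; exact hBM⟩
    · have hcomp := (Submodule.fg_iff_compact B).mp hfg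
      rw [hlim α hl] at hle
      have hdir : DirectedOn (· ≤ ·) (Set.range fun β : {β : Ordinal // β < α} => P β.1) := by
        rintro _ ⟨β₁, rfl⟩ _ ⟨β₂, rfl⟩
        rcases le_total β₁.1 β₂.1 with h | h
        · exact ⟨P β₂.1, ⟨β₂, rfl⟩, Pmono P hsucc hlim _ _ h, le_rfl⟩
        · exact ⟨P β₁.1, ⟨β₁, rfl⟩, le_rfl, Pmono P hsucc hlim _ _ h⟩
      have hne : Set.Nonempty (Set.range fun β : {β : Ordinal // β < α} => P β.1) :=
        ⟨P 0, ⟨⟨0, hl.pos⟩, rfl⟩⟩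
      obtain ⟨_, ⟨β, rfl⟩, hBβ⟩ :=
        ((CompleteLattice.isCompactElement_iff_le_of_directed_sSup_le _ B).mp hcomp)
          _ hne hdir hle
      exact IH β.1 β.2 B hfg hBβ



section Deriv

variable {R C : Type*} [Ring R] [CommRing C] (f : C →+* R) (hf : Function.Injective f)
    (T : Set R) (δ : R → C → C)
    (hδ : ∀ t ∈ T, ∀ c : C, t * f c - f c * t = f (δ t c))

include hf hδ in
theorem hδadd : ∀ t ∈ T, ∀ a b : C, δ t (a + b) = δ t a + δ t b := by
  intro t ht a b
  apply hf
  rw [map_add, ← hδ t ht, ← hδ t ht, ← hδ t ht, map_add]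
  noncomm_ring

include hf hδ in
theorem hδmul : ∀ t ∈ T, ∀ a b : C, δ t (a * b) = δ t a * b + a * δ t b := by
  intro t ht a b
  apply hf
  rw [← hδ t ht, map_add, map_mul, map_mul, map_mul, ← hδ t ht, ← hδ t ht]
  noncomm_ring

include hf hδ in
theorem hδzero : ∀ t ∈ T, δ t 0 = 0 := by
  intro t ht
  apply hf
  rw [← hδ t ht, map_zero]
  noncomm_ring

end Deriv

/-- iterated application of the derivations along a list -/
def dact {R C : Type*} (δ : R → C → C) (wl : List R) (c : C) : C :=
  wl.foldr (fun t c => δ t c) c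

@[simp] theorem dact_nil {R C : Type*} (δ : R → C → C) (c : C) : dact δ [] c = c := rfl

@[simp] theorem dact_cons {R C : Type*} (δ : R → C → C) (t : R) (wl : List R) (c : C) :
    dact δ (t :: wl) c = δ t (dact δ wl c) := rfl

/-- the ideal generated by `≤ e`-fold derivatives of elements of `F₀` -/
def IE {R C : Type*} [CommRing C] (δ : R → C → C) (T₀ : Set R) (F₀ : Set C) (e : ℕ) : Ideal C :=
  Ideal.span {c | ∃ wl p, (∀ t ∈ wl, t ∈ T₀) ∧ wl.length ≤ e ∧ p ∈ F₀ ∧ c = dact δ wl p}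

theorem IEmono {R C : Type*} [CommRing C] (δ : R → C → C) (T₀ : Set R) (F₀ : Set C)
    {e e' : ℕ} (h : e ≤ e') : IE δ T₀ F₀ e ≤ IE δ T₀ F₀ e' :=
  Ideal.span_mono (by rintro c ⟨wl, p, h1, h2, h3, rfl⟩; exact ⟨wl, p, h1, h2.trans h, h3, rfl⟩)

theorem IEle {R C : Type*} [CommRing C] (δ : R → C → C) (T : Set R) (P : Ordinal → Ideal C)
    (hinv : ∀ t ∈ T, ∀ α, ∀ c ∈ P α, δ t c ∈ P α)
    (T₀ : Set R) (hT₀ : T₀ ⊆ T) (F₀ : Set C) (αs : Ordinal) (hF₀ : F₀ ⊆ P αs) (e : ℕ) :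
    IE δ T₀ F₀ e ≤ P αs := by
  rw [IE, Ideal.span_le]
  rintro c ⟨wl, p, h1, h2, h3, rfl⟩
  clear h2
  induction wl with
  | nil => exact hF₀ h3
  | cons t wl ih =>
    exact hinv t (hT₀ (h1 t (List.mem_cons_self))) αs _
      (ih (fun a ha => h1 a (List.mem_cons_of_mem _ ha)))

theorem IEdelta {R C : Type*} [Ring R] [CommRing C] (f : C →+* R) (hf : Function.Injective f)
    (T : Set R) (δ : R → C → C)
    (hδ : ∀ t ∈ T, ∀ c : C, t * f c - f c * t = f (δ t c))
    (T₀ : Set R) (hT₀ : T₀ ⊆ T) (F₀ : Set C) (e : ℕ) :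
    ∀ t ∈ T₀, ∀ c ∈ IE δ T₀ F₀ e, δ t c ∈ IE δ T₀ F₀ (e + 1) := by
  intro t ht c hc
  induction hc using Submodule.span_induction with
  | mem x hx =>
    obtain ⟨wl, p, h1, h2, h3, rfl⟩ := hx
    exact Ideal.subset_span ⟨t :: wl, p,
      fun a ha => (List.mem_cons.mp ha).elim (fun h => h ▸ ht) (h1 a),
      by simpa using Nat.succ_le_succ h2, h3, rfl⟩
  | zero => rw [hδzero f hf T δ hδ t (hT₀ ht)]; exact zero_mem _
  | add x y hx hy ihx ihy =>
    rw [hδadd f hf T δ hδ t (hT₀ ht)]; exact add_mem ihx ihy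
  | smul a x hx ihx =>
    rw [smul_eq_mul, hδmul f hf T δ hδ t (hT₀ ht)]
    exact add_mem (Ideal.mul_mem_left _ _ (IEmono δ T₀ F₀ (Nat.le_succ e) hx))
      (Ideal.mul_mem_left _ _ ihx)



variable {R C : Type*} [Ring R] [CommRing C]

/-- good letters : either in the image of `C` or a designated generator in `T₀` -/
def GoodL (f : C →+* R) (T T₀ : Set R) (wl : List R) : Prop :=
  ∀ a ∈ wl, a ∈ Set.range f ∨ (a ∈ T ∧ a ∈ T₀)

theorem GoodL_append {f : C →+* R} {T T₀ : Set R} {w₁ w₂ : List R}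
    (h1 : GoodL f T T₀ w₁) (h2 : GoodL f T T₀ w₂) : GoodL f T T₀ (w₁ ++ w₂) := by
  intro a ha
  rcases List.mem_append.mp ha with h | h
  · exact h1 a h
  · exact h2 a h

theorem GoodL_nil (f : C →+* R) (T T₀ : Set R) : GoodL f T T₀ [] := by
  intro a ha; simp at ha


section Transit

variable {R C : Type*} [Ring R] [CommRing C] (f : C →+* R) (hf : Function.Injective f)
    (T : Set R) (δ : R → C → C)
    (hδ : ∀ t ∈ T, ∀ c : C, t * f c - f c * t = f (δ t c))
    (T₀ : Set R) (hT₀ : T₀ ⊆ T) (F₀ : Set C)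

/-- terms obtained after moving a coefficient of `IE` to the left through a word,
with total budget `b` -/
def Tset (b : ℕ) : Set R :=
  {x | ∃ (e' : ℕ) (q' : C) (w' : List R), q' ∈ IE δ T₀ F₀ e' ∧ GoodL f T T₀ w' ∧
    e' + w'.length ≤ b ∧ x = f q' * w'.prod}

theorem Tset_mono {b b' : ℕ} (h : b ≤ b') :
    Tset f T δ T₀ F₀ b ⊆ Tset f T δ T₀ F₀ b' := by
  rintro x ⟨e', q', w', h1, h2, h3, rfl⟩
  exact ⟨e', q', w', h1, h2, h3.trans h, rfl⟩

theorem Tset_mul_letter {b : ℕ} {t : R} (htT : t ∈ T) (ht₀ : t ∈ T₀) {x : R}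
    (hx : x ∈ AddSubgroup.closure (Tset f T δ T₀ F₀ b)) :
    x * t ∈ AddSubgroup.closure (Tset f T δ T₀ F₀ (b + 1)) := by
  refine AddSubgroup.closure_induction ?_ ?_ ?_ ?_ hx
  · rintro y ⟨e', q', w', h1, h2, h3, rfl⟩
    refine AddSubgroup.subset_closure ⟨e', q', w' ++ [t], h1,
      GoodL_append h2 ?_, by simp; omega, by rw [List.prod_append, List.prod_singleton,
        mul_assoc]⟩
    intro a ha
    simp only [List.mem_singleton] at ha
    exact ha ▸ Or.inr ⟨htT, ht₀⟩
  · rw [zero_mul]; exact zero_mem _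
  · intro x y _ _ ihx ihy; rw [add_mul]; exact add_mem ihx ihy
  · intro x _ ihx; rw [neg_mul]; exact neg_mem ihx

include hf hδ hT₀ in
theorem transit : ∀ wl : List R, GoodL f T T₀ wl → ∀ (e : ℕ) (q : C), q ∈ IE δ T₀ F₀ e →
    wl.prod * f q ∈ AddSubgroup.closure (Tset f T δ T₀ F₀ (e + wl.length)) := by
  intro wl
  induction wl using List.reverseRecOn with
  | nil =>
    intro _ e q hq
    have hm : (f q : R) ∈ Tset f T δ T₀ F₀ (e + ([] : List R).length) :=
      ⟨e, q, [], hq, GoodL_nil f T T₀, by simp, by simp⟩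
    simpa using AddSubgroup.subset_closure hm
  | append_singleton ys a ih =>
    intro hgood e q hq
    have hys : GoodL f T T₀ ys := fun x hx => hgood x (List.mem_append_left _ hx)
    have ha := hgood a (List.mem_append_right _ (List.mem_singleton_self a))
    rw [List.prod_append, List.prod_singleton]
    rcases ha with ⟨c', rfl⟩ | ⟨haT, haT₀⟩
    · rw [mul_assoc, ← map_mul]
      exact AddSubgroup.closure_mono
        (Tset_mono f T δ T₀ F₀ (show e + ys.length ≤ e + (ys ++ [f c']).length by simp))
        (ih hys e (c' * q) (Ideal.mul_mem_left _ _ hq))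
    · have key : a * f q = f q * a + f (δ a q) := by
        rw [← hδ a haT q]; noncomm_ring
      rw [mul_assoc, key, mul_add, ← mul_assoc]
      refine add_mem ?_ ?_
      · exact AddSubgroup.closure_mono
          (Tset_mono f T δ T₀ F₀
            (show e + ys.length + 1 ≤ e + (ys ++ [a]).length by simp))
          (Tset_mul_letter f T δ T₀ F₀ haT haT₀ (ih hys e q hq))
      · exact AddSubgroup.closure_mono
          (Tset_mono f T δ T₀ F₀
            (show e + 1 + ys.length ≤ e + (ys ++ [a]).length by simp; omega))
          (ih hys (e + 1) (δ a q)
            (IEdelta f hf T δ hδ T₀ hT₀ F₀ e a haT₀ q hq))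

end Transit

section BlockProd

variable {R C : Type*} [Ring R] [CommRing C] (f : C →+* R) (hf : Function.Injective f)
    (T : Set R) (δ : R → C → C)
    (hδ : ∀ t ∈ T, ∀ c : C, t * f c - f c * t = f (δ t c))
    (T₀ : Set R) (hT₀ : T₀ ⊆ T) (F₀ : Set C) (K : ℕ)

/-- normal forms for products of `n` blocks -/
def Bset2 (n : ℕ) : Set R :=
  {x | ∃ (pl : Multiset (ℕ × C)) (w : List R), GoodL f T T₀ w ∧ Multiset.card pl = n ∧
    (∀ q ∈ pl, q.2 ∈ IE δ T₀ F₀ q.1) ∧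
    ((pl.map Prod.fst).sum + w.length ≤ K * n) ∧
    x = f (pl.map Prod.snd).prod * w.prod}

include hf hδ hT₀ in
theorem blockProd : ∀ bl : List R,
    (∀ b ∈ bl, ∃ u p v, GoodL f T T₀ u ∧ GoodL f T T₀ v ∧ u.length + v.length ≤ K ∧
      p ∈ F₀ ∧ b = u.prod * f p * v.prod) →
    bl.prod ∈ AddSubgroup.closure (Bset2 f T δ T₀ F₀ K bl.length) := by
  intro bl
  induction bl using List.reverseRecOn with
  | nil =>
    intro _
    have hm : (1 : R) ∈ Bset2 f T δ T₀ F₀ K 0 :=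
      ⟨0, [], GoodL_nil f T T₀, by simp, by simp, by simp, by simp⟩
    simpa using AddSubgroup.subset_closure hm
  | append_singleton ys b ih =>
    intro hb
    obtain ⟨u, p, v, hu, hv, huv, hp, rfl⟩ := hb _ (List.mem_append_right _ (List.mem_singleton_self _))
    have hys := ih (fun x hx => hb x (List.mem_append_left _ hx))
    rw [List.prod_append, List.prod_singleton]
    have hlen : (ys ++ [u.prod * f p * v.prod]).length = ys.length + 1 := by simp
    rw [hlen]
    set n := ys.length with hn
    refine AddSubgroup.closure_induction ?_ ?_ ?_ ?_ hys
    · rintro x ⟨pl, w, hw, hcard, hmem, hbud, rfl⟩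
      have hpIE : p ∈ IE δ T₀ F₀ 0 :=
        Ideal.subset_span ⟨[], p, by simp, by simp, hp, rfl⟩
      have htr := transit f hf T δ hδ T₀ hT₀ F₀ (w ++ u) (GoodL_append hw hu) 0 p hpIE
      have hassoc : f (pl.map Prod.snd).prod * w.prod * (u.prod * f p * v.prod)
          = f (pl.map Prod.snd).prod * ((w ++ u).prod * f p) * v.prod := by
        rw [List.prod_append]; noncomm_ring
      rw [hassoc]
      refine AddSubgroup.closure_induction ?_ ?_ ?_ ?_ htr
      · rintro y ⟨e', q', w', hq', hw', hbud', rfl⟩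
        have heq : f (pl.map Prod.snd).prod * (f q' * w'.prod) * v.prod
            = f ((((e', q') ::ₘ pl).map Prod.snd).prod) * (w' ++ v).prod := by
          rw [Multiset.map_cons, Multiset.prod_cons, List.prod_append, map_mul]
          have hcomm : f (pl.map Prod.snd).prod * f q' = f q' * f (pl.map Prod.snd).prod := by
            rw [← map_mul, ← map_mul, mul_comm]
          rw [← mul_assoc, hcomm]
          noncomm_ring
        rw [heq]
        refine AddSubgroup.subset_closure ⟨(e', q') ::ₘ pl, w' ++ v,
          GoodL_append hw' hv, by simp [hcard], ?_, ?_, rfl⟩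
        · intro x hx
          rcases Multiset.mem_cons.mp hx with rfl | hx
          · exact hq'
          · exact hmem x hx
        · simp only [Multiset.map_cons, Multiset.sum_cons, List.length_append]
          have h1 : e' + w'.length ≤ 0 + (w ++ u).length := hbud'
          simp only [List.length_append] at h1
          have h2 : (pl.map Prod.fst).sum + w.length ≤ K * n := hbud
          have h3 : K * (n + 1) = K * n + K := by ring
          omega
      · rw [mul_zero, zero_mul]; exact zero_mem _
      · intro y z _ _ ihy ihz; rw [mul_add, add_mul]; exact add_mem ihy ihz
      · intro y _ ihy; rw [mul_neg, neg_mul]; exact neg_mem ihy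
    · rw [zero_mul]; exact zero_mem _
    · intro x y _ _ ihx ihy; rw [add_mul]; exact add_mem ihx ihy
    · intro x _ ihx; rw [neg_mul]; exact neg_mem ihx

end BlockProd

section Counting

variable {R C : Type*} [CommRing C] (δ : R → C → C) (T₀ : Set R) (F₀ : Set C)

theorem prodMemPow {C : Type*} [CommRing C] (B : Ideal C) :
    ∀ (m : Multiset C), (∀ x ∈ m, x ∈ B) → m.prod ∈ B ^ (Multiset.card m) := by
  intro m
  induction m using Multiset.induction_on with
  | empty => intro _; rw [Multiset.card_zero, pow_zero, Ideal.one_eq_top]; trivial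
  | cons a m ih =>
    intro h
    rw [Multiset.prod_cons, Multiset.card_cons, pow_succ, mul_comm a m.prod]
    exact Ideal.mul_mem_mul (ih (fun x hx => h x (Multiset.mem_cons_of_mem hx)))
      (h a (Multiset.mem_cons_self a m))

theorem countZero (K M : ℕ) (hBM : IE δ T₀ F₀ (2 * K) ^ M = ⊥) :
    ∀ (pl : Multiset (ℕ × C)), (∀ q ∈ pl, q.2 ∈ IE δ T₀ F₀ q.1) →
    ((pl.map Prod.fst).sum ≤ K * Multiset.card pl) →
    (M * (2 * K + 1) ≤ Multiset.card pl) →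
    (pl.map Prod.snd).prod = 0 := by
  classical
  intro pl hmem hsum hL
  set B := IE δ T₀ F₀ (2 * K) with hB
  set p : ℕ × C → Prop := fun q => q.1 ≤ 2 * K with hp
  have hsplit : pl.filter p + pl.filter (fun q => ¬ p q) = pl := Multiset.filter_add_not _ _
  set sm := pl.filter p with hsm
  set bg := pl.filter (fun q => ¬ p q) with hbg
  have hprod : (pl.map Prod.snd).prod = (sm.map Prod.snd).prod * (bg.map Prod.snd).prod := by
    conv_lhs => rw [← hsplit]
    rw [Multiset.map_add, Multiset.prod_add]
  have hcards : Multiset.card sm + Multiset.card bg = Multiset.card pl := by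
    conv_rhs => rw [← hsplit]
    rw [Multiset.card_add]
  -- big elements have large degree
  have hbig : ∀ x ∈ bg.map Prod.fst, 2 * K + 1 ≤ x := by
    intro x hx
    obtain ⟨q, hq, rfl⟩ := Multiset.mem_map.mp hx
    have := (Multiset.mem_filter.mp hq).2
    simp only [hp] at this
    omega
  have hbgsum : Multiset.card bg * (2 * K + 1) ≤ (pl.map Prod.fst).sum := by
    have h1 := Multiset.card_nsmul_le_sum hbig
    rw [Multiset.card_map, smul_eq_mul] at h1
    have h2 : (pl.map Prod.fst).sum
        = (sm.map Prod.fst).sum + (bg.map Prod.fst).sum := by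
      conv_lhs => rw [← hsplit]
      rw [Multiset.map_add, Multiset.sum_add]
    omega
  -- card sm ≥ M
  have hM : M ≤ Multiset.card sm := by
    set cs := Multiset.card sm
    set cb := Multiset.card bg
    set n := Multiset.card pl
    have h1 : cb * (2 * K + 1) ≤ K * n := le_trans hbgsum hsum
    have h2 : (K + 1) * cb ≤ K * cs := by nlinarith
    have h3 : (2 * K + 1) * ((K + 1) * M) ≤ (2 * K + 1) * cs := by nlinarith
    have h4 : (K + 1) * M ≤ cs := Nat.le_of_mul_le_mul_left h3 (by omega)
    nlinarith
  -- small product is in B ^ M = 0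
  have hsmB : (sm.map Prod.snd).prod ∈ B ^ Multiset.card sm := by
    have := prodMemPow B (sm.map Prod.snd) ?_
    · rwa [Multiset.card_map] at this
    · intro x hx
      obtain ⟨q, hq, rfl⟩ := Multiset.mem_map.mp hx
      have hq1 := Multiset.mem_filter.mp hq
      exact IEmono δ T₀ F₀ (by simpa [hp] using hq1.2) (hmem q hq1.1)
  have hzero : (sm.map Prod.snd).prod = 0 := by
    have h5 : B ^ Multiset.card sm ≤ B ^ M := Ideal.pow_le_pow_right hM
    have := h5 hsmB
    rwa [hBM, Ideal.mem_bot] at this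
  rw [hprod, hzero, zero_mul]

end Counting

section Repr

variable {R C : Type*} [Ring R] [CommRing C]

theorem sumMapNeg {A B : Type*} [AddCommGroup B] (l : List A) (g : A → B) :
    (l.map fun x => -g x).sum = -(l.map g).sum := by
  induction l with
  | nil => simp
  | cons a l ih => simp [ih]; abel

theorem listSumMul {A B S : Type*} [NonUnitalNonAssocSemiring S]
    (l₁ : List A) (l₂ : List B) (φ : A → S) (ψ : B → S) :
    (l₁.map φ).sum * (l₂.map ψ).sum
      = ((l₁.flatMap fun a => l₂.map fun b => φ a * ψ b).sum) := by
  induction l₁ with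
  | nil => simp
  | cons a l ih =>
    simp only [List.map_cons, List.sum_cons, List.flatMap_cons, List.sum_append, add_mul, ih]
    congr 1
    rw [← List.sum_map_mul_left]

/-- signed value -/
def sval [Ring R] (b : Bool) (x : R) : R := cond b x (-x)

theorem sval_mul_sval (b₁ b₂ : Bool) (x y : R) :
    sval b₁ x * sval b₂ y = sval (b₁ == b₂) (x * y) := by
  cases b₁ <;> cases b₂ <;> simp [sval, mul_neg, neg_mul, neg_neg]

/-- every element of `R` is a signed sum of words in the generators -/
theorem wordsRep (f : C →+* R) (T : Set R)
    (hgen : Subring.closure (Set.range f ∪ T) = ⊤) (r : R) :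
    ∃ rl : List (Bool × List R), (∀ w ∈ rl, ∀ a ∈ w.2, a ∈ Set.range f ∪ T) ∧
      r = (rl.map fun w => sval w.1 w.2.prod).sum := by
  have hr : r ∈ Subring.closure (Set.range f ∪ T) := by rw [hgen]; trivial
  induction hr using Subring.closure_induction with
  | mem a ha =>
    refine ⟨[(true, [a])], ?_, by simp [sval]⟩
    intro w hw b hb
    rw [List.mem_singleton] at hw
    subst hw
    rw [List.mem_singleton] at hb
    subst hb
    exact ha
  | zero => exact ⟨[], by simp, by simp⟩
  | one => exact ⟨[(true, [])], by simp, by simp [sval]⟩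
  | add x y _ _ ihx ihy =>
    obtain ⟨l₁, h₁, rfl⟩ := ihx
    obtain ⟨l₂, h₂, rfl⟩ := ihy
    exact ⟨l₁ ++ l₂, by
      intro w hw
      rcases List.mem_append.mp hw with h | h
      · exact h₁ w h
      · exact h₂ w h, by simp⟩
  | neg x _ ihx =>
    obtain ⟨l₁, h₁, rfl⟩ := ihx
    refine ⟨l₁.map fun w => (!w.1, w.2), by
      intro w hw
      obtain ⟨w', hw', rfl⟩ := List.mem_map.mp hw
      exact h₁ w' hw', ?_⟩
    rw [List.map_map]
    have : ((fun w : Bool × List R => sval w.1 w.2.prod) ∘ fun w : Bool × List R => (!w.1, w.2))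
        = fun w : Bool × List R => -sval w.1 w.2.prod := by
      funext w
      cases hw : w.1 <;> simp [sval, hw]
    rw [this, sumMapNeg]
  | mul x y _ _ ihx ihy =>
    obtain ⟨l₁, h₁, rfl⟩ := ihx
    obtain ⟨l₂, h₂, rfl⟩ := ihy
    refine ⟨l₁.flatMap fun w₁ => l₂.map fun w₂ => (w₁.1 == w₂.1, w₁.2 ++ w₂.2), ?_, ?_⟩
    · intro w hw
      obtain ⟨w₁, hw₁, hw⟩ := List.mem_flatMap.mp hw
      obtain ⟨w₂, hw₂, rfl⟩ := List.mem_map.mp hw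
      intro a ha
      rcases List.mem_append.mp ha with h | h
      · exact h₁ w₁ hw₁ a h
      · exact h₂ w₂ hw₂ a h
    · rw [listSumMul, List.map_flatMap]
      have hfun : (fun a : Bool × List R =>
            List.map (fun b : Bool × List R => sval a.1 a.2.prod * sval b.1 b.2.prod) l₂)
          = fun a => List.map (fun w : Bool × List R => sval w.1 w.2.prod)
              (List.map (fun w₂ => (a.1 == w₂.1, a.2 ++ w₂.2)) l₂) := by
        funext w₁
        rw [List.map_map]
        congr 1
        funext w₂
        simp only [Function.comp]
        rw [sval_mul_sval, List.prod_append]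
      rw [hfun]

end Repr

section BlockRep

variable {R C : Type*} [Ring R] [CommRing C]

/-- value of a block -/
def bval (f : C →+* R) (b : List R × C × List R) : R := b.1.prod * f b.2.1 * b.2.2.prod

/-- sums of block values -/
def Dset (f : C →+* R) (T : Set R) (P : Ordinal → Ideal C) : Set R :=
  {x | ∃ bl : List (List R × C × List R),
    (∀ b ∈ bl, (∃ α, b.2.1 ∈ P α) ∧ (∀ a ∈ b.1, a ∈ Set.range f ∪ T) ∧
      (∀ a ∈ b.2.2, a ∈ Set.range f ∪ T)) ∧ x = (bl.map (bval f)).sum}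

theorem bval_neg (f : C →+* R) (b : List R × C × List R) :
    bval f (b.1, -b.2.1, b.2.2) = -(bval f b) := by
  simp only [bval, map_neg, neg_mul, mul_neg]

theorem sval_mul_bval (f : C →+* R) (ε : Bool) (w : List R) (b : List R × C × List R) :
    sval ε w.prod * bval f b = bval f (w ++ b.1, (cond ε b.2.1 (-b.2.1) : C), b.2.2) := by
  obtain ⟨u, p, v⟩ := b
  cases ε <;>
    simp only [sval, bval, cond, List.prod_append, map_neg, neg_mul, mul_neg] <;>
    noncomm_ring

theorem bval_mul_sval (f : C →+* R) (ε : Bool) (w : List R) (b : List R × C × List R) :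
    bval f b * sval ε w.prod = bval f (b.1, (cond ε b.2.1 (-b.2.1) : C), b.2.2 ++ w) := by
  obtain ⟨u, p, v⟩ := b
  cases ε <;>
    simp only [sval, bval, cond, List.prod_append, map_neg, neg_mul, mul_neg] <;>
    noncomm_ring

theorem blockRep (f : C →+* R) (T : Set R)
    (hgen : Subring.closure (Set.range f ∪ T) = ⊤) (P : Ordinal → Ideal C) :
    ∀ x ∈ (TwoSidedIdeal.span (f '' {c : C | ∃ α, c ∈ P α}) : Set R), x ∈ Dset f T P := by
  intro x hx
  rw [SetLike.mem_coe, TwoSidedIdeal.mem_span_iff] at hx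
  have hzero : (0 : R) ∈ Dset f T P := ⟨[], by simp, by simp⟩
  have hadd : ∀ {x y : R}, x ∈ Dset f T P → y ∈ Dset f T P → x + y ∈ Dset f T P := by
      rintro x y ⟨bl₁, hb₁, rfl⟩ ⟨bl₂, hb₂, rfl⟩
      refine ⟨bl₁ ++ bl₂, ?_, by simp⟩
      intro b hb
      rcases List.mem_append.mp hb with h | h
      · exact hb₁ b h
      · exact hb₂ b h
  have hneg : ∀ {x : R}, x ∈ Dset f T P → -x ∈ Dset f T P := by
      rintro x ⟨bl, hb, rfl⟩
      refine ⟨bl.map fun b => (b.1, -b.2.1, b.2.2), ?_, ?_⟩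
      · intro b hbm
        obtain ⟨b', hb', rfl⟩ := List.mem_map.mp hbm
        obtain ⟨⟨α, hα⟩, h2, h3⟩ := hb b' hb'
        exact ⟨⟨α, neg_mem hα⟩, h2, h3⟩
      · rw [List.map_map]
        have : (bval f ∘ fun b : List R × C × List R => (b.1, -b.2.1, b.2.2))
            = fun b => -(bval f b) := by
          funext b
          exact bval_neg f b
        rw [this, sumMapNeg]
  have hmulL : ∀ {x y : R}, y ∈ Dset f T P → x * y ∈ Dset f T P := by
      rintro x y ⟨bl, hb, rfl⟩
      obtain ⟨rl, hrl, rfl⟩ := wordsRep f T hgen x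
      refine ⟨rl.flatMap fun w => bl.map fun b =>
          (w.2 ++ b.1, (cond w.1 b.2.1 (-b.2.1) : C), b.2.2), ?_, ?_⟩
      · intro b hbm
        obtain ⟨w, hw, hbm⟩ := List.mem_flatMap.mp hbm
        obtain ⟨b', hb', rfl⟩ := List.mem_map.mp hbm
        obtain ⟨⟨α, hα⟩, h2, h3⟩ := hb b' hb'
        refine ⟨⟨α, ?_⟩, ?_, h3⟩
        · cases w.1 <;> simp only [cond] <;> [exact neg_mem hα; exact hα]
        · intro a ha
          rcases List.mem_append.mp ha with h | h
          · exact hrl w hw a h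
          · exact h2 a h
      · rw [listSumMul, List.map_flatMap]
        have hfun : (fun a : Bool × List R =>
              List.map (fun b => sval a.1 a.2.prod * bval f b) bl)
            = fun a => List.map (bval f)
                (List.map (fun b : List R × C × List R =>
                  (a.2 ++ b.1, (cond a.1 b.2.1 (-b.2.1) : C), b.2.2)) bl) := by
          funext w
          rw [List.map_map]
          congr 1
          funext b
          simp only [Function.comp]
          rw [sval_mul_bval]
        rw [hfun]
  have hmulR : ∀ {x y : R}, x ∈ Dset f T P → x * y ∈ Dset f T P := by
      rintro x y ⟨bl, hb, rfl⟩
      obtain ⟨rl, hrl, rfl⟩ := wordsRep f T hgen y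
      refine ⟨bl.flatMap fun b => rl.map fun w =>
          (b.1, (cond w.1 b.2.1 (-b.2.1) : C), b.2.2 ++ w.2), ?_, ?_⟩
      · intro b hbm
        obtain ⟨b', hb', hbm⟩ := List.mem_flatMap.mp hbm
        obtain ⟨w, hw, rfl⟩ := List.mem_map.mp hbm
        obtain ⟨⟨α, hα⟩, h2, h3⟩ := hb b' hb'
        refine ⟨⟨α, ?_⟩, h2, ?_⟩
        · cases w.1 <;> simp only [cond] <;> [exact neg_mem hα; exact hα]
        · intro a ha
          rcases List.mem_append.mp ha with h | h
          · exact h3 a h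
          · exact hrl w hw a h
      · rw [listSumMul, List.map_flatMap]
        have hfun : (fun b : List R × C × List R =>
              List.map (fun w : Bool × List R => bval f b * sval w.1 w.2.prod) rl)
            = fun b => List.map (bval f)
                (List.map (fun w : Bool × List R =>
                  (b.1, (cond w.1 b.2.1 (-b.2.1) : C), b.2.2 ++ w.2)) rl) := by
          funext b
          rw [List.map_map]
          congr 1
          funext w
          simp only [Function.comp]
          rw [bval_mul_sval]
        rw [hfun]
  have hsub : ⇑f '' {c : C | ∃ α, c ∈ P α} ⊆ Dset f T P := by
    rintro _ ⟨p, ⟨α, hp⟩, rfl⟩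
    exact ⟨[([], p, [])], by simp; exact ⟨α, hp⟩, by simp [bval]⟩
  have hmain := hx (TwoSidedIdeal.mk' (Dset f T P) hzero hadd hneg hmulL hmulR)
    (by rw [TwoSidedIdeal.coe_mk']; exact hsub)
  rwa [TwoSidedIdeal.mem_mk'] at hmain

end BlockRep

section Assembly

variable {R C : Type*} [Ring R] [CommRing C]

theorem finiteWords {X : Type*} (S : Set X) (hS : S.Finite) :
    ∀ n : ℕ, {wl : List X | (∀ t ∈ wl, t ∈ S) ∧ wl.length ≤ n}.Finite := by
  intro n
  induction n with
  | zero =>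
    refine Set.Finite.subset (Set.finite_singleton ([] : List X)) ?_
    rintro wl ⟨_, h2⟩
    rw [Set.mem_singleton_iff]
    exact List.length_eq_zero_iff.mp (Nat.le_zero.mp h2)
  | succ n ih =>
    refine Set.Finite.subset (Set.Finite.union (Set.finite_singleton ([] : List X))
      (Set.Finite.image2 List.cons hS ih)) ?_
    rintro wl ⟨h1, h2⟩
    cases wl with
    | nil => exact Or.inl rfl
    | cons a l =>
      refine Or.inr (Set.mem_image2_of_mem (h1 a (List.mem_cons_self)) ?_)
      refine ⟨fun t ht => h1 t (List.mem_cons_of_mem a ht), ?_⟩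
      simpa using Nat.succ_le_succ_iff.mp (by simpa using h2)

theorem IEfg (δ : R → C → C) (T₀ : Set R) (F₀ : Set C)
    (hT₀fin : T₀.Finite) (hF₀fin : F₀.Finite) (e : ℕ) : (IE δ T₀ F₀ e).FG := by
  apply Submodule.fg_span
  refine Set.Finite.subset (Set.Finite.image2 (fun wl p => dact δ wl p)
    (finiteWords T₀ hT₀fin e) hF₀fin) ?_
  rintro c ⟨wl, p, h1, h2, h3, rfl⟩
  exact Set.mem_image2_of_mem ⟨h1, h2⟩ h3

theorem listBoundNat {A : Type*} (g : A → ℕ) : ∀ l : List A, ∃ K, ∀ b ∈ l, g b ≤ K := by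
  intro l
  induction l with
  | nil => exact ⟨0, by simp⟩
  | cons a l ih =>
    obtain ⟨K, hK⟩ := ih
    refine ⟨max (g a) K, ?_⟩
    intro b hb
    rcases List.mem_cons.mp hb with rfl | hb
    · exact le_max_left _ _
    · exact le_trans (hK b hb) (le_max_right _ _)

theorem listBoundOrd (P : Ordinal → Ideal C)
    (hsucc : ∀ α, P (α + 1) =
      sSup {J : Ideal C | P α ≤ J ∧ ∃ n : ℕ, 0 < n ∧ J ^ n ≤ P α})
    (hlim : ∀ α : Ordinal, Order.IsSuccLimit α → P α = ⨆ β : {β : Ordinal // β < α}, P β)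
    {A : Type*} (g : A → C) :
    ∀ l : List A, (∀ b ∈ l, ∃ α, g b ∈ P α) → ∃ αs, ∀ b ∈ l, g b ∈ P αs := by
  intro l
  induction l with
  | nil => exact fun _ => ⟨0, by simp⟩
  | cons a l ih =>
    intro h
    obtain ⟨αs, hαs⟩ := ih (fun b hb => h b (List.mem_cons_of_mem a hb))
    obtain ⟨α, hα⟩ := h a (List.mem_cons_self)
    refine ⟨max α αs, ?_⟩
    intro b hb
    rcases List.mem_cons.mp hb with rfl | hb
    · exact Pmono P hsucc hlim _ _ (le_max_left _ _) hα
    · exact Pmono P hsucc hlim _ _ (le_max_right _ _) (hαs b hb)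

/-- products of at least `n` block values -/
def PBset (Blk : Set R) (n : ℕ) : Set R :=
  {x | ∃ bl : List R, (∀ b ∈ bl, b ∈ Blk) ∧ n ≤ bl.length ∧ x = bl.prod}

theorem PBmono (Blk : Set R) {a b : ℕ} (h : a ≤ b) : PBset Blk b ⊆ PBset Blk a := by
  rintro x ⟨bl, h1, h2, rfl⟩
  exact ⟨bl, h1, le_trans h h2, rfl⟩

theorem PBmul (Blk : Set R) {a b : ℕ} {x y : R}
    (hx : x ∈ AddSubgroup.closure (PBset Blk a))
    (hy : y ∈ AddSubgroup.closure (PBset Blk b)) :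
    x * y ∈ AddSubgroup.closure (PBset Blk (a + b)) := by
  refine AddSubgroup.closure_induction ?_ ?_ ?_ ?_ hx
  · intro x' hx'
    refine AddSubgroup.closure_induction ?_ ?_ ?_ ?_ hy
    · rintro y' hy'
      obtain ⟨bl₁, h1, h2, rfl⟩ := hx'
      obtain ⟨bl₂, h3, h4, rfl⟩ := hy'
      refine AddSubgroup.subset_closure ⟨bl₁ ++ bl₂, ?_, by simp; omega,
        (List.prod_append).symm⟩
      intro c hc
      rcases List.mem_append.mp hc with h | h
      · exact h1 c h
      · exact h3 c h
    · rw [mul_zero]; exact zero_mem _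
    · intro y₁ y₂ _ _ ih1 ih2; rw [mul_add]; exact add_mem ih1 ih2
    · intro y₁ _ ih; rw [mul_neg]; exact neg_mem ih
  · rw [zero_mul]; exact zero_mem _
  · intro x₁ x₂ _ _ ih1 ih2; rw [add_mul]; exact add_mem ih1 ih2
  · intro x₁ _ ih; rw [neg_mul]; exact neg_mem ih

theorem PBprod (Blk : Set R) : ∀ gl : List R,
    (∀ x ∈ gl, x ∈ AddSubgroup.closure (PBset Blk 1)) →
    gl.prod ∈ AddSubgroup.closure (PBset Blk gl.length) := by
  intro gl
  induction gl with
  | nil =>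
    intro _
    exact AddSubgroup.subset_closure ⟨[], by simp, by simp, by simp⟩
  | cons a l ih =>
    intro h
    rw [List.prod_cons, List.length_cons, Nat.add_comm]
    exact PBmul Blk (h a (List.mem_cons_self))
      (ih (fun x hx => h x (List.mem_cons_of_mem a hx)))

end Assembly

end Stmt19Aux


open Stmt19Aux in
/-- Theorem A(2) with trivial automorphisms: let `R` be a ring generated by (an embedded copy
of) a commutative ring `C` together with a set `T` such that `t * c - c * t = δ t c ∈ C` for
all `t ∈ T`, `c ∈ C` (so each `ad t` restricts to a derivation `δ t` of `C`).  Let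
`P : Ordinal → Ideal C` be the transfinite Wedderburn filtration of the prime radical of `C`
(`P 0 = ⊥`, `P (α+1) / P α` is the sum of the nilpotent ideals of `C / P α`, unions at limits,
eventually stabilizing), and suppose each `P α` is stable under every `δ t` (strong invariance).
Then the two-sided ideal of `R` generated by the prime radical `⋃ α, P α` is locally
nilpotent: every finite subset of it generates a nilpotent subring. -/
theorem stmt19 {R C : Type*} [Ring R] [CommRing C]
    (f : C →+* R) (hf : Function.Injective f)
    (T : Set R)
    (hgen : Subring.closure (Set.range f ∪ T) = ⊤)
    (δ : R → C → C)
    (hδ : ∀ t ∈ T, ∀ c : C, t * f c - f c * t = f (δ t c))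
    (P : Ordinal → Ideal C)
    (h0 : P 0 = ⊥)
    (hsucc : ∀ α, P (α + 1) =
      sSup {J : Ideal C | P α ≤ J ∧ ∃ n : ℕ, 0 < n ∧ J ^ n ≤ P α})
    (hlim : ∀ α : Ordinal, Order.IsSuccLimit α → P α = ⨆ β : {β : Ordinal // β < α}, P β)
    (hstab : ∃ γ, P (γ + 1) = P γ)
    (hinv : ∀ t ∈ T, ∀ α, ∀ c ∈ P α, δ t c ∈ P α) :
    ∀ s : Finset R,
      (↑s : Set R) ⊆ (TwoSidedIdeal.span (f '' {c : C | ∃ α, c ∈ P α}) : Set R) →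
      ∃ m : ℕ, ∀ g : Fin (m + 1) → R,
        (∀ i, g i ∈ NonUnitalSubring.closure (s : Set R)) → (List.ofFn g).prod = 0 := by
  intro s hs
  -- block representations of the elements of s
  have hrep : ∀ x : {x // x ∈ s}, ∃ bl : List (List R × C × List R),
      (∀ b ∈ bl, (∃ α, b.2.1 ∈ P α) ∧ (∀ a ∈ b.1, a ∈ Set.range f ∪ T) ∧
        (∀ a ∈ b.2.2, a ∈ Set.range f ∪ T)) ∧ (x : R) = (bl.map (bval f)).sum :=
    fun x => blockRep f T hgen P x (hs x.2)
  choose bls hblcond hblsum using hrep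
  set BL : List (List R × C × List R) := (s.attach.toList.map bls).flatten with hBL
  have hBLprop : ∀ b ∈ BL, (∃ α, b.2.1 ∈ P α) ∧ (∀ a ∈ b.1, a ∈ Set.range f ∪ T) ∧
      (∀ a ∈ b.2.2, a ∈ Set.range f ∪ T) := by
    intro b hb
    rw [hBL, List.mem_flatten] at hb
    obtain ⟨L, hL, hbL⟩ := hb
    obtain ⟨x, _, rfl⟩ := List.mem_map.mp hL
    exact hblcond x b hbL
  -- constants
  obtain ⟨αs, hαs⟩ := listBoundOrd P hsucc hlim (fun b => b.2.1) BL
    (fun b hb => (hBLprop b hb).1)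
  obtain ⟨K, hK⟩ := listBoundNat (fun b : List R × C × List R =>
    b.1.length + b.2.2.length) BL
  set T₀ : Set R := {a | (∃ b ∈ BL, a ∈ b.1 ∨ a ∈ b.2.2) ∧ a ∈ T} with hT₀def
  set F₀ : Set C := (fun b : List R × C × List R => b.2.1) '' {b | b ∈ BL} with hF₀def
  have hT₀T : T₀ ⊆ T := fun a h => h.2
  have hT₀fin : T₀.Finite := by
    refine Set.Finite.subset (Set.Finite.biUnion BL.finite_toSet
      (fun b _ => Set.Finite.union b.1.finite_toSet b.2.2.finite_toSet)) ?_
    rintro a ⟨⟨b, hb, h⟩, _⟩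
    exact Set.mem_biUnion hb h
  have hF₀fin : F₀.Finite := Set.Finite.image _ BL.finite_toSet
  have hF₀sub : F₀ ⊆ P αs := by
    rintro _ ⟨b, hb, rfl⟩
    exact hαs b hb
  -- nilpotency of the finitely generated ideal of low-degree derivatives
  obtain ⟨M, hMpos, hBM⟩ := fgNilpotent P h0 hsucc hlim αs (IE δ T₀ F₀ (2 * K))
    (IEfg δ T₀ F₀ hT₀fin hF₀fin (2 * K))
    (IEle δ T P hinv T₀ hT₀T F₀ αs hF₀sub (2 * K))
  refine ⟨M * (2 * K + 1), ?_⟩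
  intro g hg
  -- the block set
  set Blk : Set R := {x | ∃ b ∈ BL, x = bval f b} with hBlkdef
  -- vanishing of long products of blocks
  have hvanish : ∀ n, M * (2 * K + 1) ≤ n → PBset Blk n ⊆ {(0 : R)} := by
    rintro n hn x ⟨bl, hbl, hlen, rfl⟩
    have hblp := blockProd f hf T δ hδ T₀ hT₀T F₀ K bl ?_
    · have hz : Bset2 f T δ T₀ F₀ K bl.length ⊆ {(0 : R)} := by
        rintro y ⟨pl, w, hw, hcard, hmem, hbud, rfl⟩
        have h0' : (pl.map Prod.snd).prod = 0 := by
          refine countZero δ T₀ F₀ K M hBM pl hmem ?_ ?_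
          · rw [hcard]; omega
          · rw [hcard]; omega
        rw [h0', map_zero, zero_mul]
        rfl
      have := (AddSubgroup.closure_le (⊥ : AddSubgroup R)).mpr
        (by rw [AddSubgroup.coe_bot]; exact hz) hblp
      simpa using this
    · intro b hb
      obtain ⟨b', hb', rfl⟩ := hbl b hb
      obtain ⟨⟨α, hα⟩, hu, hv⟩ := hBLprop b' hb'
      refine ⟨b'.1, b'.2.1, b'.2.2, ?_, ?_, hK b' hb', ⟨b', hb', rfl⟩, rfl⟩
      · intro a ha
        rcases hu a ha with h | h
        · exact Or.inl h
        · exact Or.inr ⟨h, ⟨⟨b', hb', Or.inl ha⟩, h⟩⟩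
      · intro a ha
        rcases hv a ha with h | h
        · exact Or.inl h
        · exact Or.inr ⟨h, ⟨⟨b', hb', Or.inr ha⟩, h⟩⟩
  -- every element of s is an additive combination of blocks
  have hsblk : ∀ x ∈ s, x ∈ AddSubgroup.closure (PBset Blk 1) := by
    intro x hx
    rw [show x = (List.map (bval f) (bls ⟨x, hx⟩)).sum from hblsum ⟨x, hx⟩]
    refine AddSubgroup.list_sum_mem _ ?_
    intro y hy
    obtain ⟨b, hb, rfl⟩ := List.mem_map.mp hy
    have hbBL : b ∈ BL := by
      rw [hBL, List.mem_flatten]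
      exact ⟨bls ⟨x, hx⟩, List.mem_map.mpr ⟨⟨x, hx⟩, by simp, rfl⟩, hb⟩
    exact AddSubgroup.subset_closure ⟨[bval f b], by
      intro c hc
      rw [List.mem_singleton] at hc
      exact hc ▸ ⟨b, hbBL, rfl⟩, by simp, by simp⟩
  -- closure of s maps into closure of products of blocks
  have hclos : ∀ x ∈ NonUnitalSubring.closure (↑s : Set R),
      x ∈ AddSubgroup.closure (PBset Blk 1) := by
    intro x hx
    induction hx using NonUnitalSubring.closure_induction with
    | mem y hy => exact hsblk y hy
    | zero => exact zero_mem _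
    | add y z _ _ ihy ihz => exact add_mem ihy ihz
    | neg y _ ihy => exact neg_mem ihy
    | mul y z _ _ ihy ihz =>
      exact AddSubgroup.closure_mono (PBmono Blk (by omega)) (PBmul Blk ihy ihz)
  -- conclude
  have hprod := PBprod Blk (List.ofFn g) (by
    intro x hx
    obtain ⟨i, rfl⟩ := List.mem_ofFn.mp hx
    exact hclos _ (hg i))
  have hlen : (List.ofFn g).length = M * (2 * K + 1) + 1 := by simp
  have hfin := (AddSubgroup.closure_le (⊥ : AddSubgroup R)).mpr
    (by rw [AddSubgroup.coe_bot]; exact hvanish _ (by rw [hlen]; omega)) hprod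
  simpa using hfin
end
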